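/- arXiv:1805.05204 — 4 statements merged into one kernel-verified Lean document; each statement's English description precedes it below -/
import Mathlib

section
/- Let G be a graph of order n with no component of order less than 3, and let 𝒢 be an arbitrary Abelian group of order at least 2n. Then there exists an edge labeling f: E(G) → 𝒢 \ {0} such that the induced vertex weights (the sum in 𝒢 of the labels of edges incident to each vertex) are pairwise distinct and no vertex has weight equal to 0. -/
/-!
Strengthen the statement: weights are shifted by an arbitrary offset `c : V → 𝒢`, must avoid a
forbidden set `B` (initially `{0}`), and the ends of an isolated edge must have different offsets.
Induct on the vertices that still carry edges. If the component of some vertex has at least three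
vertices, take `v` in it whose deletion keeps the rest of the component connected. Label the edges
at `v` by a fixed `g ≠ 0`, except one edge `v u₀` whose label `y` is chosen so that the weight of
`v`, now final, avoids `B`; it joins `B`, and the labels at `v` move into the offsets of the
remaining graph. One more value of `y` is excluded so that, if the rest of the component is a single
edge, its ends get different offsets. An isolated edge `a b` is finished by one label avoiding two
translates of `B`, which is where `|𝒢| ≥ 2n` is needed.
-/

open Finset

lemma Set.InjOn.insert_of_notMem_insert {α β : Type*} [DecidableEq β] {w : α → β}
    {S : Set α} {B : Finset β} {v : α} (hS : Set.InjOn w S) (hSB : ∀ x ∈ S, w x ∉ insert (w v) B)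
    (hv : w v ∉ B) : Set.InjOn w (insert v S) ∧ ∀ x ∈ insert v S, w x ∉ B := by
  have hvS : v ∉ S := fun h => hSB v h (Finset.mem_insert_self _ _)
  refine ⟨(Set.injOn_insert hvS).2 ⟨hS, ?_⟩, ?_⟩
  · rintro ⟨x, hx, hxv⟩
    exact hSB x hx (hxv ▸ Finset.mem_insert_self _ _)
  · rintro x (rfl | hx)
    · exact hv
    · exact fun h => hSB x hx (Finset.mem_insert_of_mem h)

namespace SimpleGraph

variable {V : Type*} {H : SimpleGraph V}

lemma Walk.reachable_deleteIncidenceSet {x y v : V} (p : H.Walk x y) (hv : v ∉ p.support) :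
    (H.deleteIncidenceSet v).Reachable x y :=
  ⟨p.toDeleteEdges _ fun _ he hev => hv (p.mem_support_of_mem_edges he hev.2)⟩

lemma Reachable.deleteIncidenceSet [DecidableEq V] {x y v : V} (hxy : H.Reachable x y)
    (hxv : ¬H.Reachable x v) : (H.deleteIncidenceSet v).Reachable x y :=
  let ⟨p⟩ := hxy
  p.reachable_deleteIncidenceSet fun hv => hxv ⟨p.takeUntil v hv⟩

/-- Take `v` at maximal distance from `r`: shortest paths from `r` to other vertices avoid it. -/
lemma exists_reachable_deleteIncidenceSet [Finite V] {r w : V} (hrw : H.Reachable r w)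
    (hwr : w ≠ r) :
    ∃ v, v ≠ r ∧ H.Reachable r v ∧
      ∀ u, H.Reachable r u → u ≠ v → (H.deleteIncidenceSet v).Reachable r u := by
  have := Fintype.ofFinite V
  classical
  obtain ⟨v, hv, hmax⟩ := (univ.filter (H.Reachable r)).exists_max_image (H.dist r)
    ⟨w, mem_filter.2 ⟨mem_univ w, hrw⟩⟩
  simp only [mem_filter, mem_univ, true_and] at hv hmax
  have hdist_w : 0 < H.dist r w := hrw.pos_dist_of_ne hwr.symm
  refine ⟨v, fun hvr => ?_, hv, fun u hru huv => ?_⟩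
  · have := hmax w hrw
    simp only [hvr, dist_self] at this
    omega
  obtain ⟨p, hp⟩ := hru.exists_walk_length_eq_dist
  refine p.reachable_deleteIncidenceSet fun hvp => ?_
  have hlt := Walk.length_takeUntil_lt_length hvp huv.symm
  have := dist_le (p.takeUntil v hvp)
  have := hmax u hru
  omega

lemma ne_of_mem_support_deleteIncidenceSet {x v : V}
    (hx : x ∈ (H.deleteIncidenceSet v).support) : x ≠ v :=
  (Set.mem_sdiff_singleton.1 (support_deleteIncidenceSet_subset H v hx)).2

lemma support_subset_insert_support_deleteIncidenceSet [DecidableEq V] {v : V}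
    (h : ∀ x, H.Reachable x v → x ≠ v → ∃ z ≠ x, (H.deleteIncidenceSet v).Reachable x z) :
    H.support ⊆ insert v (H.deleteIncidenceSet v).support := by
  rintro x ⟨y, hxy⟩
  by_cases hxv : x = v
  · exact hxv ▸ Set.mem_insert _ _
  refine Set.mem_insert_of_mem _ ((mem_support _).2 ?_)
  by_cases hx : H.Reachable x v
  · obtain ⟨z, hzx, hxz⟩ := h x hx hxv
    exact (mem_support _).1 (mem_support_of_reachable hzx.symm hxz)
  · have hyv : y ≠ v := by
      rintro rfl
      exact hx hxy.reachable
    exact ⟨y, deleteIncidenceSet_adj.2 ⟨hxy, hxv, hyv⟩⟩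

lemma exists_adj_forall_reachable_deleteIncidenceSet [Finite V] [DecidableEq V] {r s w : V}
    (hrs : H.Adj r s) (hw : H.Reachable r w) (hwr : w ≠ r) (hws : w ≠ s) :
    ∃ v u₀, H.Adj v u₀ ∧ H.support ⊆ insert v (H.deleteIncidenceSet v).support ∧
      ∀ x, H.Reachable x v → x ≠ v → (H.deleteIncidenceSet v).Reachable x u₀ := by
  obtain ⟨v, hvr, hv, hconn⟩ := exists_reachable_deleteIncidenceSet hw hwr
  obtain ⟨t, ht, htv, htr⟩ : ∃ t, H.Reachable r t ∧ t ≠ v ∧ t ≠ r := by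
    by_cases hsv : s = v
    · exact ⟨w, hw, hsv ▸ hws, hwr⟩
    · exact ⟨s, hrs.reachable, hsv, hrs.ne.symm⟩
  have hconn' : ∀ x, H.Reachable x v → x ≠ v → (H.deleteIncidenceSet v).Reachable x r :=
    fun x hx hxv => (hconn x (hv.trans hx.symm) hxv).symm
  obtain ⟨u₀, hvu₀⟩ := (mem_support _).1 (mem_support_of_reachable hvr hv.symm)
  refine ⟨v, u₀, hvu₀, support_subset_insert_support_deleteIncidenceSet fun x hx hxv => ?_,
    fun x hx hxv => (hconn' x hx hxv).trans (hconn' u₀ hvu₀.symm.reachable hvu₀.ne.symm).symm⟩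
  by_cases hxr : x = r
  · exact ⟨t, hxr ▸ htr, hxr ▸ hconn t ht htv⟩
  · exact ⟨r, Ne.symm hxr, hconn' x hx hxv⟩

lemma neighborFinset_deleteIncidenceSet_of_ne [Fintype V] [DecidableEq V] [DecidableRel H.Adj]
    {x v : V} (hxv : x ≠ v) :
    (H.deleteIncidenceSet v).neighborFinset x = (H.neighborFinset x).erase v := by
  ext u
  simp [deleteIncidenceSet_adj, hxv, and_comm]

lemma ncard_supp_connectedComponentMk_le_two [Finite V] {a b : V}
    (h : ∀ w, H.Reachable a w → w = a ∨ w = b) : (H.connectedComponentMk a).supp.ncard ≤ 2 := by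
  calc _ ≤ ({a, b} : Set V).ncard := Set.ncard_le_ncard fun x hx =>
        h x (ConnectedComponent.exact ((ConnectedComponent.mem_supp_iff _ _).1 hx)).symm
    _ ≤ 2 := (Set.ncard_insert_le _ _).trans (by rw [Set.ncard_singleton])

def IsIsolatedEdge (H : SimpleGraph V) (a b : V) : Prop :=
  H.Adj a b ∧ ∀ w, H.Reachable a w → w = a ∨ w = b

lemma IsIsolatedEdge.of_deleteIncidenceSet [DecidableEq V] {v x y : V}
    (h : (H.deleteIncidenceSet v).IsIsolatedEdge x y) (hxv : ¬H.Reachable x v) :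
    H.IsIsolatedEdge x y :=
  ⟨(deleteIncidenceSet_le H v) h.1, fun _ hxw => h.2 _ (hxw.deleteIncidenceSet hxv)⟩

namespace IsIsolatedEdge

variable {a b : V}

lemma not_reachable_of_adj_deleteIncidenceSet [DecidableEq V] (hab : H.IsIsolatedEdge a b)
    {x z : V} (hxz : (H.deleteIncidenceSet a).Adj x z) : ¬H.Reachable a x := by
  obtain ⟨hxz, hxa, hza⟩ := deleteIncidenceSet_adj.1 hxz
  intro hax
  obtain rfl | rfl := hab.2 x hax
  · exact hxa rfl
  · obtain rfl | rfl := hab.2 z (hax.trans hxz.reachable)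
    exacts [hza rfl, hxz.ne rfl]

lemma support_subset [DecidableEq V] (hab : H.IsIsolatedEdge a b) :
    H.support ⊆ insert a (insert b (H.deleteIncidenceSet a).support) := by
  rintro x ⟨z, hxz⟩
  by_cases hx : x = a ∨ x = b
  · rcases hx with rfl | rfl <;> simp
  simp only [not_or] at hx
  have hza : z ≠ a := by
    rintro rfl
    rcases hab.2 x hxz.symm.reachable with h | h
    exacts [hx.1 h, hx.2 h]
  exact Set.mem_insert_of_mem _
    (Set.mem_insert_of_mem _ ⟨z, deleteIncidenceSet_adj.2 ⟨hxz, hx.1, hza⟩⟩)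

variable [Fintype V] [DecidableRel H.Adj]

lemma neighborFinset_eq (hab : H.IsIsolatedEdge a b) : H.neighborFinset a = {b} := by
  ext x
  simp only [mem_neighborFinset, mem_singleton]
  refine ⟨fun hax => ?_, fun hx => hx ▸ hab.1⟩
  rcases hab.2 x hax.reachable with rfl | rfl
  exacts [(hax.ne rfl).elim, rfl]

lemma neighborFinset_deleteIncidenceSet [DecidableEq V] (hab : H.IsIsolatedEdge a b) :
    (H.deleteIncidenceSet a).neighborFinset b = ∅ := by
  ext z
  simp only [mem_neighborFinset, Finset.notMem_empty, iff_false]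
  exact fun hbz => hab.not_reachable_of_adj_deleteIncidenceSet hbz hab.1.reachable

end IsIsolatedEdge

end SimpleGraph

open SimpleGraph

namespace IrregularLabeling

variable {V 𝒢 : Type*}

section LabelStar

variable [DecidableEq V] {H : SimpleGraph V} {e : 𝒢} {f : V → V → 𝒢} {v : V} {ℓ : V → 𝒢}

def labelStar (v : V) (ℓ : V → 𝒢) (f : V → V → 𝒢) (a b : V) : 𝒢 :=
  if a = v then ℓ b else if b = v then ℓ a else f a b

lemma labelStar_symm (hf : ∀ a b, f a b = f b a) (a b : V) :
    labelStar v ℓ f a b = labelStar v ℓ f b a := by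
  unfold labelStar
  split_ifs <;> simp_all

lemma labelStar_ne (hℓ : ∀ u, ℓ u ≠ e) (hf : ∀ a b, (H.deleteIncidenceSet v).Adj a b → f a b ≠ e)
    {a b : V} (hab : H.Adj a b) : labelStar v ℓ f a b ≠ e := by
  unfold labelStar
  split_ifs with hav hbv
  · exact hℓ b
  · exact hℓ a
  · exact hf a b (deleteIncidenceSet_adj.2 ⟨hab, hav, hbv⟩)

end LabelStar

variable [AddCommGroup 𝒢] {H : SimpleGraph V} [DecidableRel H.Adj] {c : V → 𝒢} {v : V}
  {ℓ : V → 𝒢}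

/-- The offset seen by the rest of the graph once the star at `v` is labelled by `ℓ`. -/
def starOffset (H : SimpleGraph V) [DecidableRel H.Adj] (v : V) (ℓ : V → 𝒢) (c : V → 𝒢)
    (x : V) : 𝒢 :=
  c x + if H.Adj x v then ℓ x else 0

lemma starOffset_of_not_adj {x : V} (h : ¬H.Adj x v) : starOffset H v ℓ c x = c x := by
  simp [starOffset, h]

lemma starOffset_update_ne [DecidableEq V] {u₀ o : V} {g y : 𝒢} (hvu₀ : H.Adj v u₀)
    (hou₀ : o ≠ u₀) (hy : c u₀ + y ≠ starOffset H v (fun _ => g) c o) :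
    starOffset H v (Function.update (fun _ => g) u₀ y) c u₀ ≠
      starOffset H v (Function.update (fun _ => g) u₀ y) c o := by
  simpa [starOffset, hvu₀.symm, Function.update_of_ne hou₀] using hy

lemma starOffset_ne_of_isIsolatedEdge [DecidableEq V]
    (hc : ∀ a b, H.IsIsolatedEdge a b → c a ≠ c b) {x y : V}
    (h : (H.deleteIncidenceSet v).IsIsolatedEdge x y) (hxv : ¬H.Reachable x v) :
    starOffset H v ℓ c x ≠ starOffset H v ℓ c y := by
  have hH := h.of_deleteIncidenceSet hxv
  have hyv : ¬H.Adj y v := fun hyv => hxv (hH.1.reachable.trans hyv.reachable)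
  rw [starOffset_of_not_adj (fun hx => hxv hx.reachable), starOffset_of_not_adj hyv]
  exact hc x y hH

variable [Fintype V] [DecidableEq V]

def weight (H : SimpleGraph V) [DecidableRel H.Adj] (c : V → 𝒢) (f : V → V → 𝒢) (v : V) : 𝒢 :=
  c v + ∑ u ∈ H.neighborFinset v, f v u

structure IsIrregularLabeling (H : SimpleGraph V) [DecidableRel H.Adj] (c : V → 𝒢) (e : 𝒢)
    (B : Finset 𝒢) (f : V → V → 𝒢) : Prop where
  symm : ∀ a b, f a b = f b a
  ne : ∀ a b, H.Adj a b → f a b ≠ e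
  injOn : Set.InjOn (weight H c f) H.support
  notMem : ∀ v ∈ H.support, weight H c f v ∉ B

lemma weight_labelStar_self (c : V → 𝒢) (f : V → V → 𝒢) :
    weight H c (labelStar v ℓ f) v = c v + ∑ u ∈ H.neighborFinset v, ℓ u := by
  simp [weight, labelStar]

lemma weight_labelStar_of_ne {x : V} (hxv : x ≠ v) (c : V → 𝒢) (f : V → V → 𝒢) :
    weight H c (labelStar v ℓ f) x = weight (H.deleteIncidenceSet v) (starOffset H v ℓ c) f x := by
  have hf : ∀ u ∈ (H.neighborFinset x).erase v, labelStar v ℓ f x u = f x u := fun u hu => by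
    simp [labelStar, hxv, (mem_erase.1 hu).1]
  have hv : labelStar v ℓ f x v = ℓ x := by simp [labelStar, hxv]
  rw [weight, weight, starOffset, neighborFinset_deleteIncidenceSet_of_ne hxv, ← sum_congr rfl hf]
  split_ifs with hadj
  · rw [← add_sum_erase _ _ (by simpa using hadj), hv, add_assoc]
  · rw [erase_eq_of_notMem (by simpa using hadj), add_zero]

variable [DecidableEq 𝒢] {e : 𝒢} {B : Finset 𝒢} {f : V → V → 𝒢}

theorem IsIrregularLabeling.extend (hsupp : H.support ⊆ insert v (H.deleteIncidenceSet v).support)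
    (hℓ : ∀ u, ℓ u ≠ e) (hv : c v + ∑ u ∈ H.neighborFinset v, ℓ u ∉ B)
    (hf : IsIrregularLabeling (H.deleteIncidenceSet v) (starOffset H v ℓ c) e
      (insert (c v + ∑ u ∈ H.neighborFinset v, ℓ u) B) f) :
    IsIrregularLabeling H c e B (labelStar v ℓ f) := by
  have heq : Set.EqOn (weight _ _ f) (weight H c (labelStar v ℓ f))
      (H.deleteIncidenceSet v).support := fun x hx =>
    (weight_labelStar_of_ne (ne_of_mem_support_deleteIncidenceSet hx) c f).symm
  have hwv := weight_labelStar_self (H := H) (v := v) (ℓ := ℓ) c f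
  obtain ⟨hinj, hB⟩ := (hf.injOn.congr heq).insert_of_notMem_insert
    (fun x hx => heq hx ▸ hwv ▸ hf.notMem x hx) (hwv ▸ hv)
  exact ⟨labelStar_symm hf.symm, fun _ _ => labelStar_ne hℓ hf.ne, hinj.mono hsupp,
    fun x hx => hB x (hsupp hx)⟩

theorem IsIrregularLabeling.extend_of_isIsolatedEdge {a b : V} {y : 𝒢}
    (hab : H.IsIsolatedEdge a b) (hc : c a ≠ c b) (hy : y ≠ e) (hya : c a + y ∉ B)
    (hyb : c b + y ∉ B)
    (hf : IsIrregularLabeling (H.deleteIncidenceSet a) (starOffset H a (fun _ => y) c) e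
      (insert (c a + y) (insert (c b + y) B)) f) :
    IsIrregularLabeling H c e B (labelStar a (fun _ => y) f) := by
  have heq : Set.EqOn (weight _ _ f) (weight H c (labelStar a (fun _ => y) f))
      (H.deleteIncidenceSet a).support := fun x hx =>
    (weight_labelStar_of_ne (ne_of_mem_support_deleteIncidenceSet hx) c f).symm
  have hwa : weight H c (labelStar a (fun _ => y) f) a = c a + y := by
    rw [weight_labelStar_self, hab.neighborFinset_eq, sum_singleton]
  have hwb : weight H c (labelStar a (fun _ => y) f) b = c b + y := by
    rw [weight_labelStar_of_ne hab.1.ne.symm, weight, hab.neighborFinset_deleteIncidenceSet,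
      sum_empty, add_zero, starOffset, if_pos hab.1.symm]
  obtain ⟨hinj, hB⟩ := (hf.injOn.congr heq).insert_of_notMem_insert (v := b)
    (B := insert (c a + y) B)
    (fun x hx => by rw [hwb, insert_comm, ← heq hx]; exact hf.notMem x hx)
    (by rw [hwb, mem_insert, not_or, add_left_inj]; exact ⟨hc.symm, hyb⟩)
  obtain ⟨hinj, hB⟩ := hinj.insert_of_notMem_insert (v := a) (fun x hx => hwa ▸ hB x hx)
    (hwa ▸ hya)
  exact ⟨labelStar_symm hf.symm, fun _ _ => labelStar_ne (fun _ => hy) hf.ne,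
    hinj.mono hab.support_subset, fun x hx => hB x (hab.support_subset hx)⟩

lemma exists_ne_and_add_notMem [Fintype 𝒢] (e t₁ t₂ : 𝒢) (B₁ B₂ : Finset 𝒢)
    (h : #B₁ + #B₂ + 1 < Fintype.card 𝒢) : ∃ y, y ≠ e ∧ t₁ + y ∉ B₁ ∧ t₂ + y ∉ B₂ := by
  have hF : #(insert e (B₁.image (· - t₁) ∪ B₂.image (· - t₂))) < #(univ : Finset 𝒢) := by
    calc _ ≤ #(B₁.image (· - t₁) ∪ B₂.image (· - t₂)) + 1 := card_insert_le _ _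
      _ ≤ #B₁ + #B₂ + 1 := by grw [card_union_le, card_image_le, card_image_le]
      _ < _ := by rwa [card_univ]
  obtain ⟨y, -, hy⟩ := exists_mem_notMem_of_card_lt_card hF
  simp only [mem_insert, mem_union, mem_image, not_or, not_exists, not_and] at hy
  exact ⟨y, hy.1, fun h₁ => hy.2.1 _ h₁ (add_sub_cancel_left t₁ y),
    fun h₂ => hy.2.2 _ h₂ (add_sub_cancel_left t₂ y)⟩

/-- `U` bounds the support of `H`. The bound on `#B + #U` is what an isolated edge consumes: its
label has to avoid `e` and two translates of the forbidden set. -/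
def Solvable (H : SimpleGraph V) [DecidableRel H.Adj] (U : Finset V) [Fintype 𝒢] (e : 𝒢) :
    Prop :=
  ∀ (c : V → 𝒢) (B : Finset 𝒢), (∀ a b, H.IsIsolatedEdge a b → c a ≠ c b) →
    2 * (#B + #U) ≤ Fintype.card 𝒢 + 2 → ∃ f, IsIrregularLabeling H c e B f

variable [Fintype 𝒢] {U : Finset V}

lemma exists_isIrregularLabeling_of_isIsolatedEdge {a b : V} (hab : H.IsIsolatedEdge a b)
    (hU : ∀ x y, H.Adj x y → x ∈ U)
    (ih : ∀ U' ⊂ U, (∀ x y, (H.deleteIncidenceSet a).Adj x y → x ∈ U') →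
      Solvable (H.deleteIncidenceSet a) U' e)
    (hc : ∀ a b, H.IsIsolatedEdge a b → c a ≠ c b) (hcard : 2 * (#B + #U) ≤ Fintype.card 𝒢 + 2) :
    ∃ f, IsIrregularLabeling H c e B f := by
  have ha : a ∈ U := hU a b hab.1
  have hb : b ∈ U.erase a := mem_erase.2 ⟨hab.1.ne.symm, hU b a hab.1.symm⟩
  have hUab := card_erase_add_one hb
  have hUa := card_erase_add_one ha
  obtain ⟨y, hye, hya, hyb⟩ := exists_ne_and_add_notMem e (c a) (c b) B B (by omega)
  have hU' : ∀ x z, (H.deleteIncidenceSet a).Adj x z → x ∈ (U.erase a).erase b :=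
    fun x z hxz => by
      have hx := hab.not_reachable_of_adj_deleteIncidenceSet hxz
      refine mem_erase.2 ⟨fun h => hx (h ▸ hab.1.reachable), mem_erase.2 ⟨?_, ?_⟩⟩
      exacts [fun h => hx (h ▸ .rfl), hU x z (deleteIncidenceSet_le H a hxz)]
  obtain ⟨f, hf⟩ := ih _ ((erase_subset _ _).trans_ssubset (erase_ssubset ha)) hU'
    (starOffset H a (fun _ => y) c) (insert (c a + y) (insert (c b + y) B))
    (fun x z hxz => starOffset_ne_of_isIsolatedEdge hc hxz
      fun hxa => hab.not_reachable_of_adj_deleteIncidenceSet hxz.1 hxa.symm)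
    (by grw [card_insert_le, card_insert_le]; omega)
  exact ⟨_, hf.extend_of_isIsolatedEdge hab (hc a b hab) hye hya hyb⟩

lemma exists_isIrregularLabeling_of_adj {v u₀ : V} (hvu₀ : H.Adj v u₀)
    (hsupp : H.support ⊆ insert v (H.deleteIncidenceSet v).support)
    (hv' : ∀ x, H.Reachable x v → x ≠ v → (H.deleteIncidenceSet v).Reachable x u₀)
    (hU : ∀ x y, H.Adj x y → x ∈ U)
    (ih : ∀ U' ⊂ U, (∀ x y, (H.deleteIncidenceSet v).Adj x y → x ∈ U') →
      Solvable (H.deleteIncidenceSet v) U' e)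
    (hc : ∀ a b, H.IsIsolatedEdge a b → c a ≠ c b) (hcard : 2 * (#B + #U) ≤ Fintype.card 𝒢 + 2) :
    ∃ f, IsIrregularLabeling H c e B f := by
  have hN : (H.deleteIncidenceSet v).neighborFinset u₀ ⊆ (U.erase v).erase u₀ := fun x hx => by
    obtain ⟨hu₀x, -, hxv⟩ := deleteIncidenceSet_adj.1 (mem_neighborFinset _ _ _ |>.1 hx)
    exact mem_erase.2 ⟨hu₀x.ne.symm, mem_erase.2 ⟨hxv, hU x u₀ hu₀x.symm⟩⟩
  have hu₀ := card_erase_add_one (mem_erase.2 ⟨hvu₀.ne.symm, hU u₀ v hvu₀.symm⟩)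
  have hvU := card_erase_add_one (hU v u₀ hvu₀)
  have hNU := card_le_card hN
  obtain ⟨g, hg⟩ := Fintype.exists_ne_of_one_lt_card (by omega) e
  obtain ⟨y, hye, hyv, hyu₀⟩ := exists_ne_and_add_notMem e
    (c v + ∑ _ ∈ H.neighborFinset v \ {u₀}, g) (c u₀) B
    (((H.deleteIncidenceSet v).neighborFinset u₀).image (starOffset H v (fun _ => g) c))
    (by grw [card_image_le]; omega)
  set ℓ := Function.update (fun _ => g) u₀ y
  have hwv : c v + ∑ u ∈ H.neighborFinset v, ℓ u =
      c v + ∑ _ ∈ H.neighborFinset v \ {u₀}, g + y := by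
    rw [sum_update_of_mem ((mem_neighborFinset _ _ _).2 hvu₀)]
    abel
  have hu₀ne : ∀ o, (H.deleteIncidenceSet v).Adj u₀ o →
      starOffset H v ℓ c u₀ ≠ starOffset H v ℓ c o := fun o ho =>
    starOffset_update_ne hvu₀ ho.ne.symm
      fun h => hyu₀ (mem_image.2 ⟨o, (mem_neighborFinset _ _ _).2 ho, h.symm⟩)
  obtain ⟨f, hf⟩ := ih _ (erase_ssubset (hU v u₀ hvu₀))
    (fun x z hxz => mem_erase.2 ⟨(deleteIncidenceSet_adj.1 hxz).2.1,
      hU x z (deleteIncidenceSet_adj.1 hxz).1⟩)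
    (starOffset H v ℓ c) (insert (c v + ∑ u ∈ H.neighborFinset v, ℓ u) B)
    (fun x z hxz => by
      -- an isolated edge of the new graph inside the component of `v` contains `u₀`
      by_cases hxv : H.Reachable x v
      · rcases hxz.2 u₀ (hv' x hxv (deleteIncidenceSet_adj.1 hxz.1).2.1) with rfl | rfl
        exacts [hu₀ne z hxz.1, (hu₀ne x hxz.1.symm).symm]
      · exact starOffset_ne_of_isIsolatedEdge hc hxz hxv)
    (by grw [card_insert_le]; omega)
  refine ⟨_, hf.extend hsupp (fun u => ?_) (hwv ▸ hyv)⟩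
  by_cases hu : u = u₀
  · simpa [ℓ, hu] using hye
  · simpa [ℓ, hu] using hg

theorem solvable (e : 𝒢) (U : Finset V) :
    ∀ (H : SimpleGraph V) [DecidableRel H.Adj], (∀ x y, H.Adj x y → x ∈ U) → Solvable H U e := by
  induction U using Finset.strongInduction with
  | H U ih =>
  intro H _ hU c B hc hcard
  by_cases hedge : ∃ r s, H.Adj r s
  swap
  · have hsupp : H.support = ∅ :=
      Set.eq_empty_of_forall_notMem fun x ⟨y, hxy⟩ => hedge ⟨x, y, hxy⟩
    exact ⟨0, fun _ _ => rfl, fun a b h => (hedge ⟨a, b, h⟩).elim, by simp [hsupp],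
      by simp [hsupp]⟩
  obtain ⟨r, s, hrs⟩ := hedge
  by_cases hiso : H.IsIsolatedEdge r s
  · exact exists_isIrregularLabeling_of_isIsolatedEdge hiso hU
      (fun U' hU' hadj => ih U' hU' _ hadj) hc hcard
  obtain ⟨w, hw, hwr, hws⟩ : ∃ w, H.Reachable r w ∧ w ≠ r ∧ w ≠ s := by
    simpa [IsIsolatedEdge, hrs, not_or] using hiso
  obtain ⟨v, u₀, hvu₀, hsupp, hv'⟩ := exists_adj_forall_reachable_deleteIncidenceSet hrs hw hwr hws
  exact exists_isIrregularLabeling_of_adj hvu₀ hsupp hv' hU (fun U' hU' hadj => ih U' hU' _ hadj)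
    hc hcard

end IrregularLabeling

open IrregularLabeling in
/-- If `G` has order `n`, no component of order less than 3, and `𝒢` is an
Abelian group of order at least `2n`, then `G` admits a nowhere-zero, non-zero
`𝒢`-irregular edge labeling: edge labels are nonzero, all vertex weights are pairwise
distinct, and no vertex weight is zero. -/
theorem stmt_2 {V : Type} [Fintype V] [DecidableEq V]
    (G : SimpleGraph V) [DecidableRel G.Adj]
    (hcomp : ∀ c : G.ConnectedComponent, 3 ≤ c.supp.ncard)
    (𝒢 : Type) [AddCommGroup 𝒢] [Fintype 𝒢]
    (hcard : 2 * Fintype.card V ≤ Fintype.card 𝒢) :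
    ∃ f : V → V → 𝒢,
      (∀ u v, f u v = f v u) ∧
      (∀ u v, G.Adj u v → f u v ≠ 0) ∧
      Function.Injective (fun v => ∑ u ∈ G.neighborFinset v, f v u) ∧
      (∀ v, (∑ u ∈ G.neighborFinset v, f v u) ≠ 0) := by
  classical
  have hbig : ∀ a b, ¬∀ w, G.Reachable a w → w = a ∨ w = b := fun a b h => by
    have := ncard_supp_connectedComponentMk_le_two h
    have := hcomp (G.connectedComponentMk a)
    omega
  have hsupp : ∀ v, v ∈ G.support := fun v => by
    by_contra hv
    exact hbig v v fun w hvw => Or.inl (by_contra fun hwv => hv (mem_support_of_reachable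
      (Ne.symm hwv) hvw))
  obtain ⟨f, hf⟩ := solvable (0 : 𝒢) univ G (fun x _ _ => mem_univ x) 0 {0}
    (fun a b hab => (hbig a b hab.2).elim) (by rw [card_singleton, card_univ]; omega)
  have hw : ∀ v, weight G 0 f v = ∑ u ∈ G.neighborFinset v, f v u := fun v => zero_add _
  refine ⟨f, hf.symm, hf.ne, fun a b hab => hf.injOn (hsupp a) (hsupp b) ?_, fun v => ?_⟩
  · simpa only [hw] using hab
  · simpa only [hw, mem_singleton] using hf.notMem v (hsupp v)
end

section
/- Let G be a graph of order n with no component of order less than 3. Then the nowhere-zero group irregularity strength s_g*(G) is at most 2n; that is, for every Abelian group 𝒢 of order at least 2n there exists a labeling f: E(G) → 𝒢 \ {0} with all induced vertex weights pairwise distinct. -/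
set_option linter.unusedSectionVars false

open Finset

section Abstract

variable {V : Type} [Fintype V] [DecidableEq V]
variable {𝒢 : Type} [AddCommGroup 𝒢] [Fintype 𝒢] [DecidableEq 𝒢]

variable (N : V → Finset V) (rt p : V → V) (c : 𝒢)

/-- Sum of labels at `v` of edges other than the parent edge. -/
def Ssum (ℓ : V → 𝒢) (v : V) : 𝒢 :=
  ∑ u ∈ (N v).erase (p v), (if u ≠ rt u ∧ p u = v then ℓ u else c)

/-- Final weight of a non-root vertex. -/
def tval (ℓ : V → 𝒢) (v : V) : 𝒢 := ℓ v + Ssum N rt p c ℓ v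

/-- Final weight of a root vertex. -/
def wR (ℓ : V → 𝒢) (r : V) : 𝒢 := ∑ u ∈ N r, ℓ u

lemma Ssum_congr {ℓ ℓ' : V → 𝒢} {v : V}
    (h : ∀ u, u ≠ rt u → p u = v → ℓ' u = ℓ u) :
    Ssum N rt p c ℓ' v = Ssum N rt p c ℓ v := by
  unfold Ssum
  refine Finset.sum_congr rfl fun u hu => ?_
  by_cases hg : u ≠ rt u ∧ p u = v
  · rw [if_pos hg, if_pos hg]; exact h u hg.1 hg.2
  · rw [if_neg hg, if_neg hg]

lemma wR_congr {ℓ ℓ' : V → 𝒢} {r : V}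
    (h : ∀ u ∈ N r, ℓ' u = ℓ u) :
    wR N ℓ' r = wR N ℓ r :=
  Finset.sum_congr rfl h

end Abstract

section Abstract2

variable {V : Type} [Fintype V] [DecidableEq V]
variable {𝒢 : Type} [AddCommGroup 𝒢] [Fintype 𝒢] [DecidableEq 𝒢]

/-- Hypotheses bundle on the combinatorial data. -/
structure Setup (N : V → Finset V) (rt p A B : V → V) (ρ : V → ℕ) : Prop where
  irr : ∀ v, v ∉ N v
  nrt : ∀ u v, u ∈ N v → rt u = rt v
  rti : ∀ v, rt (rt v) = rt v
  pmem : ∀ v, v ≠ rt v → p v ∈ N v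
  plt : ∀ v, v ≠ rt v → ρ v < ρ (p v)
  purt : ∀ r, rt r = r → ∀ u ∈ N r, p u = r
  rinj : Function.Injective ρ
  rlt : ∀ v, ρ v < Fintype.card V
  hA : ∀ r, rt r = r → A r ∈ N r
  hB : ∀ r, rt r = r → B r ∈ N r
  hAB : ∀ r, rt r = r → A r ≠ B r
  maxB : ∀ r, rt r = r → ∀ u, rt u = r → u ≠ r → ρ u ≤ ρ (B r)
  maxA : ∀ r, rt r = r → ∀ u, rt u = r → u ≠ r → u ≠ B r → ρ u ≤ ρ (A r)

variable {N : V → Finset V} {rt p A B : V → V} {ρ : V → ℕ}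

namespace Setup

variable (S : Setup N rt p A B ρ)
include S

lemma mem_N_root {r u : V} (hr : rt r = r) (hu : u ∈ N r) :
    rt u = r ∧ u ≠ rt u := by
  have h1 : rt u = r := (S.nrt u r hu).trans hr
  have h2 : u ≠ r := fun h => S.irr r (h ▸ hu)
  exact ⟨h1, fun h => h2 (h.symm ▸ h1 ▸ rfl)⟩

lemma ltA {r u : V} (hr : rt r = r) (hu : u ∈ (N r).erase (B r)) :
    ρ u ≤ ρ (A r) := by
  obtain ⟨hne, hmem⟩ := Finset.mem_erase.mp hu
  obtain ⟨h1, _⟩ := S.mem_N_root hr hmem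
  have h2 : u ≠ r := fun h => S.irr r (h ▸ hmem)
  exact S.maxA r hr u h1 h2 hne

lemma A_lt_B {r : V} (hr : rt r = r) : ρ (A r) < ρ (B r) := by
  have h1 := S.mem_N_root hr (S.hA r hr)
  have h2 : A r ≠ r := fun h => S.irr r (by have := S.hA r hr; rwa [h] at this)
  have := S.maxB r hr (A r) h1.1 h2
  exact lt_of_le_of_ne this (fun h => S.hAB r hr (S.rinj h))

lemma childB_ltA {r u : V} (hr : rt r = r) (hu : u ≠ rt u) (hp : p u = B r) :
    ρ u < ρ (A r) := by
  have hBN := S.hB r hr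
  have hBr : rt (B r) = r := (S.mem_N_root hr hBN).1
  have hpu : p u ∈ N u := S.pmem u hu
  have hru : rt u = rt (p u) := (S.nrt (p u) u hpu).symm
  have hrur : rt u = r := by rw [hru, hp, hBr]
  have hunr : u ≠ r := fun h => hu (by rw [hrur, h])
  have hultB : ρ u < ρ (B r) := hp ▸ S.plt u hu
  have huneB : u ≠ B r := fun h => (lt_irrefl _ (by rw [h] at hultB; exact hultB))
  have hle : ρ u ≤ ρ (A r) := S.maxA r hr u hrur hunr huneB
  refine lt_of_le_of_ne hle fun h => ?_
  have huA : u = A r := S.rinj h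
  have : p (A r) = r := S.purt r hr (A r) (S.hA r hr)
  rw [huA, this] at hp
  exact S.irr r (by rw [← hp] at hBN; exact hBN)

lemma B_ne_root {r : V} (hr : rt r = r) {v : V} (hv : v = rt v) : B r ≠ v := by
  intro h
  have := S.mem_N_root hr (S.hB r hr)
  rw [h] at this
  exact this.2 hv

lemma A_ne_root {r : V} (hr : rt r = r) {v : V} (hv : v = rt v) : A r ≠ v := by
  intro h
  have := S.mem_N_root hr (S.hA r hr)
  rw [h] at this
  exact this.2 hv

end Setup

/-- The invariant maintained through the greedy construction. -/
structure GInv (N : V → Finset V) (rt p A B : V → V) (c : 𝒢)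
    (D : Finset V) (ℓ : V → 𝒢) : Prop where
  nz : ∀ v ∈ D, v ≠ rt v → ℓ v ≠ 0
  ti : ∀ v ∈ D, ∀ u ∈ D, v ≠ rt v → u ≠ rt u →
        tval N rt p c ℓ v = tval N rt p c ℓ u → v = u
  wt : ∀ r, rt r = r → B r ∈ D → ∀ v ∈ D, v ≠ rt v →
        wR N ℓ r ≠ tval N rt p c ℓ v
  wi : ∀ r, rt r = r → B r ∈ D → ∀ r', rt r' = r' → B r' ∈ D →
        wR N ℓ r = wR N ℓ r' → r = r'
  bq : ∀ r, rt r = r → A r ∈ D → B r ∉ D →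
        (∑ u ∈ (N r).erase (B r), ℓ u) - Ssum N rt p c ℓ (B r) ≠ 0

end Abstract2

section Greedy

variable {V : Type} [Fintype V] [DecidableEq V]
variable {𝒢 : Type} [AddCommGroup 𝒢] [Fintype 𝒢] [DecidableEq 𝒢]
variable {N : V → Finset V} {rt p A B : V → V} {ρ : V → ℕ}

lemma greedy_step (S : Setup N rt p A B ρ) (c : 𝒢)
    (hn : 3 ≤ Fintype.card V) (hG : 2 * Fintype.card V ≤ Fintype.card 𝒢)
    {k : ℕ} (hk : k < Fintype.card V) {ℓ : V → 𝒢}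
    (inv : GInv N rt p A B c (Finset.univ.filter fun u => ρ u < k) ℓ) :
    ∃ ℓ', GInv N rt p A B c (Finset.univ.filter fun u => ρ u < k + 1) ℓ' := by
  classical
  set D : Finset V := Finset.univ.filter fun u => ρ u < k with hD
  have himg : Finset.image ρ Finset.univ = Finset.range (Fintype.card V) := by
    apply Finset.eq_of_subset_of_card_le
    · intro x hx
      obtain ⟨u, _, rfl⟩ := Finset.mem_image.mp hx
      exact Finset.mem_range.mpr (S.rlt u)
    · rw [Finset.card_range, Finset.card_image_of_injective _ S.rinj, Finset.card_univ]
  obtain ⟨v, _, hv⟩ := Finset.mem_image.mp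
    (himg ▸ Finset.mem_range.mpr hk : k ∈ Finset.image ρ Finset.univ)
  have memD : ∀ u, u ∈ D ↔ ρ u < k := by intro u; simp [hD]
  have hvD : v ∉ D := by rw [memD, hv]; omega
  have hins : (Finset.univ.filter fun u => ρ u < k + 1) = insert v D := by
    ext u
    simp only [Finset.mem_filter, Finset.mem_univ, true_and, Finset.mem_insert, memD]
    constructor
    · intro h
      rcases Nat.lt_succ_iff_lt_or_eq.mp h with h | h
      · exact Or.inr h
      · exact Or.inl (S.rinj (h.trans hv.symm))
    · rintro (rfl | h) <;> omega
  rw [hins]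
  have hDne : ∀ x ∈ D, x ≠ v := fun x hx h => hvD (h ▸ hx)
  by_cases hvrt : v = rt v
  · -- root step: nothing changes
    refine ⟨ℓ, ?_, ?_, ?_, ?_, ?_⟩
    · intro x hx hxr
      rcases Finset.mem_insert.mp hx with h | hx
      · exact absurd (h ▸ hvrt) hxr
      · exact inv.nz x hx hxr
    · intro x hx y hy hxr hyr heq
      rcases Finset.mem_insert.mp hx with h | hx
      · exact absurd (h ▸ hvrt) hxr
      rcases Finset.mem_insert.mp hy with h | hy
      · exact absurd (h ▸ hvrt) hyr
      exact inv.ti x hx y hy hxr hyr heq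
    · intro r' hr' hBr' y hy hyr
      have hBD : B r' ∈ D := by
        rcases Finset.mem_insert.mp hBr' with h | h
        · exact absurd h (S.B_ne_root hr' hvrt)
        · exact h
      rcases Finset.mem_insert.mp hy with h | hy
      · exact absurd (h ▸ hvrt) hyr
      exact inv.wt r' hr' hBD y hy hyr
    · intro r1 h1 hB1 r2 h2 hB2 heq
      have hBD1 : B r1 ∈ D := by
        rcases Finset.mem_insert.mp hB1 with h | h
        · exact absurd h (S.B_ne_root h1 hvrt)
        · exact h
      have hBD2 : B r2 ∈ D := by
        rcases Finset.mem_insert.mp hB2 with h | h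
        · exact absurd h (S.B_ne_root h2 hvrt)
        · exact h
      exact inv.wi r1 h1 hBD1 r2 h2 hBD2 heq
    · intro r' hr' hA' hB'
      have hAD : A r' ∈ D := by
        rcases Finset.mem_insert.mp hA' with h | h
        · exact absurd h (S.A_ne_root hr' hvrt)
        · exact h
      exact inv.bq r' hr' hAD (fun h => hB' (Finset.mem_insert_of_mem h))
  · -- non-root step
    set r : V := rt v with hrdef
    have hr : rt r = r := S.rti v
    set Sv : 𝒢 := Ssum N rt p c ℓ v with hSv
    set com : Finset 𝒢 :=
      ((D.filter fun u => ¬ u = rt u).image (tval N rt p c ℓ)) ∪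
      ((Finset.univ.filter fun r' => rt r' = r' ∧ B r' ∈ D).image (wR N ℓ)) with hcom
    set Bq : 𝒢 := (∑ u ∈ (N r).erase (B r), ℓ u) - Sv with hBq
    set badA : Finset 𝒢 :=
      if v = A r then
        {Sv - (∑ u ∈ ((N r).erase (B r)).erase (A r), ℓ u) + Ssum N rt p c ℓ (B r)}
      else ∅ with hbadA
    set badB : Finset 𝒢 := if v = B r then com.image (fun x => x - Bq) else ∅ with hbadB
    set bad : Finset 𝒢 := com ∪ {Sv} ∪ badA ∪ badB with hbad
    have hcomcard : com.card ≤ Fintype.card V - 1 := by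
      have h1 : (D.filter fun u => ¬ u = rt u) ∪
          (Finset.univ.filter fun r' => rt r' = r' ∧ B r' ∈ D) ⊆ Finset.univ.erase v := by
        intro x hx
        rcases Finset.mem_union.mp hx with hx | hx
        · exact Finset.mem_erase.mpr ⟨hDne x (Finset.mem_of_mem_filter x hx), Finset.mem_univ x⟩
        · obtain ⟨-, hx2⟩ := Finset.mem_filter.mp hx
          refine Finset.mem_erase.mpr ⟨fun h => hvrt ?_, Finset.mem_univ x⟩
          rw [hrdef, ← h]
          exact hx2.1.symm
      have hdisj : Disjoint (D.filter fun u => ¬ u = rt u)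
          (Finset.univ.filter fun r' => rt r' = r' ∧ B r' ∈ D) := by
        rw [Finset.disjoint_left]
        intro x hx1 hx2
        exact (Finset.mem_filter.mp hx1).2 (Finset.mem_filter.mp hx2).2.1.symm
      calc com.card ≤ ((D.filter fun u => ¬ u = rt u).image (tval N rt p c ℓ)).card
            + ((Finset.univ.filter fun r' => rt r' = r' ∧ B r' ∈ D).image (wR N ℓ)).card :=
              Finset.card_union_le _ _
        _ ≤ (D.filter fun u => ¬ u = rt u).card
            + (Finset.univ.filter fun r' => rt r' = r' ∧ B r' ∈ D).card := by
              gcongr <;> exact Finset.card_image_le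
        _ = ((D.filter fun u => ¬ u = rt u) ∪
            (Finset.univ.filter fun r' => rt r' = r' ∧ B r' ∈ D)).card :=
              (Finset.card_union_of_disjoint hdisj).symm
        _ ≤ (Finset.univ.erase v).card := Finset.card_le_card h1
        _ = Fintype.card V - 1 := by
              rw [Finset.card_erase_of_mem (Finset.mem_univ v), Finset.card_univ]
    have hbadcard : bad.card < Fintype.card 𝒢 := by
      have hAB' : badA.card + badB.card ≤ Fintype.card V - 1 := by
        by_cases hB' : v = B r
        · have : badA = ∅ := by
            rw [hbadA, if_neg]
            intro h
            exact S.hAB r hr (h.symm.trans hB')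
          rw [this, hbadB, if_pos hB']
          simpa using le_trans Finset.card_image_le hcomcard
        · rw [hbadB, if_neg hB']
          have h2 : badA.card ≤ 1 := by
            rw [hbadA]; split <;> simp
          have h3 : (1:ℕ) ≤ Fintype.card V - 1 := by omega
          simpa using le_trans h2 h3
      have h1 : bad.card ≤ com.card + 1 + (badA.card + badB.card) := by
        calc bad.card ≤ (com ∪ {Sv} ∪ badA).card + badB.card := Finset.card_union_le _ _
          _ ≤ ((com ∪ {Sv}).card + badA.card) + badB.card := by
              gcongr; exact Finset.card_union_le _ _
          _ ≤ ((com.card + 1) + badA.card) + badB.card := by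
              gcongr
              exact le_trans (Finset.card_union_le _ _) (by simp)
          _ = com.card + 1 + (badA.card + badB.card) := by ring
      omega
    have hτex : ∃ τ, τ ∉ bad := by
      by_contra h
      push_neg at h
      have h2 := Finset.card_le_card (fun x _ => h x : (Finset.univ : Finset 𝒢) ⊆ bad)
      rw [Finset.card_univ] at h2
      omega
    obtain ⟨τ, hτ⟩ := hτex
    have hτcom : τ ∉ com := fun h => hτ (by
      rw [hbad]
      exact Finset.mem_union_left _ (Finset.mem_union_left _ (Finset.mem_union_left _ h)))
    have hτSv : τ ≠ Sv := fun h => hτ (by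
      rw [hbad]
      refine Finset.mem_union_left _ (Finset.mem_union_left _ (Finset.mem_union_right _ ?_))
      simp [h])
    set ℓ' : V → 𝒢 := Function.update ℓ v (τ - Sv) with hℓ'
    have hupdv : ℓ' v = τ - Sv := Function.update_self v _ ℓ
    have hupd : ∀ u, u ≠ v → ℓ' u = ℓ u := fun u h => Function.update_of_ne h _ ℓ
    have hSsum : ∀ w, w ≠ p v → Ssum N rt p c ℓ' w = Ssum N rt p c ℓ w := by
      intro w hw
      apply Ssum_congr
      intro u hu hpu
      apply hupd
      intro h
      exact hw (by rw [← h, hpu])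
    have hρpv : ρ v < ρ (p v) := S.plt v hvrt
    have hSv' : Ssum N rt p c ℓ' v = Sv := by
      rw [hSv]
      apply hSsum
      intro h
      rw [← h] at hρpv
      omega
    have htv : tval N rt p c ℓ' v = τ := by
      rw [tval, hupdv, hSv']
      abel
    have htvalD : ∀ u ∈ D, tval N rt p c ℓ' u = tval N rt p c ℓ u := by
      intro u hu
      have h1 : u ≠ v := hDne u hu
      rw [memD] at hu
      have h2 : u ≠ p v := by
        intro h
        rw [h] at hu
        omega
      rw [tval, tval, hupd u h1, hSsum u h2]
    have hwRD : ∀ r', rt r' = r' → B r' ∈ D → wR N ℓ' r' = wR N ℓ r' := by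
      intro r' hr' hBD
      apply wR_congr
      intro u hu
      apply hupd
      intro h
      obtain ⟨hu1, hu2⟩ := S.mem_N_root hr' hu
      have h3 : u ≠ r' := fun hh => hu2 (by rw [hu1, hh])
      have hle : ρ u ≤ ρ (B r') := S.maxB r' hr' u hu1 h3
      rw [memD] at hBD
      rw [h, hv] at hle
      omega
    have hcomval : ∀ y ∈ D, y ≠ rt y → tval N rt p c ℓ y ∈ com := by
      intro y hy hyr
      rw [hcom]
      exact Finset.mem_union_left _
        (Finset.mem_image_of_mem _ (Finset.mem_filter.mpr ⟨hy, hyr⟩))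
    have hcomw : ∀ r', rt r' = r' → B r' ∈ D → wR N ℓ r' ∈ com := by
      intro r' hr' hBD
      rw [hcom]
      exact Finset.mem_union_right _
        (Finset.mem_image_of_mem _ (Finset.mem_filter.mpr ⟨Finset.mem_univ _, hr', hBD⟩))
    have hr'eq : ∀ r', rt r' = r' → B r' = v → r' = r := by
      intro r' hr' hBv
      have h0 := (S.mem_N_root hr' (S.hB r' hr')).1
      rw [hBv] at h0
      rw [← h0, hrdef]
    have hBqnz : v = B r → Bq ≠ 0 := by
      intro hvB
      have hAD : A r ∈ D := by
        rw [memD]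
        have h2 := S.A_lt_B (B := B) (A := A) hr
        rw [← hvB, hv] at h2
        omega
      have hBnD : B r ∉ D := by rw [← hvB]; exact hvD
      have h3 := inv.bq r hr hAD hBnD
      rw [hBq, hSv, hvB]
      exact h3
    have hwnew : ∀ r', rt r' = r' → B r' = v → wR N ℓ' r' = τ + Bq := by
      intro r' hr' hBv
      have hr'r := hr'eq r' hr' hBv
      rw [hr'r] at hBv
      rw [hr'r, wR, ← Finset.add_sum_erase _ ℓ' (S.hB r hr)]
      have h1 : ℓ' (B r) = τ - Sv := by rw [hBv, hupdv]
      have h2 : ∑ u ∈ (N r).erase (B r), ℓ' u = ∑ u ∈ (N r).erase (B r), ℓ u := by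
        refine Finset.sum_congr rfl fun u hu => hupd u fun h => ?_
        exact (Finset.mem_erase.mp hu).1 (h.trans hBv.symm)
      rw [h1, h2, hBq]
      abel
    refine ⟨ℓ', ?_, ?_, ?_, ?_, ?_⟩
    · -- nz
      intro x hx hxr
      rcases Finset.mem_insert.mp hx with h | hx
      · rw [h, hupdv]
        exact sub_ne_zero.mpr hτSv
      · rw [hupd x (hDne x hx)]
        exact inv.nz x hx hxr
    · -- ti
      intro x hx y hy hxr hyr heq
      rcases Finset.mem_insert.mp hx with hxv | hx
      · rcases Finset.mem_insert.mp hy with hyv | hy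
        · rw [hxv, hyv]
        · rw [hxv, htv, htvalD y hy] at heq
          exact absurd (by rw [heq]; exact hcomval y hy hyr) hτcom
      · rcases Finset.mem_insert.mp hy with hyv | hy
        · rw [hyv, htv, htvalD x hx] at heq
          exact absurd (by rw [← heq]; exact hcomval x hx hxr) hτcom
        · rw [htvalD x hx, htvalD y hy] at heq
          exact inv.ti x hx y hy hxr hyr heq
    · -- wt
      intro r' hr' hBr' y hy hyr
      rcases Finset.mem_insert.mp hBr' with hBv | hBD
      · have hvB : v = B r := by
          have := hr'eq r' hr' hBv
          rw [this] at hBv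
          exact hBv.symm
        rw [hwnew r' hr' hBv]
        rcases Finset.mem_insert.mp hy with hyv | hy
        · rw [hyv, htv]
          intro h
          exact hBqnz hvB (add_eq_left.mp h)
        · rw [htvalD y hy]
          intro h
          apply hτ
          rw [hbad]
          refine Finset.mem_union_right _ ?_
          rw [hbadB, if_pos hvB]
          refine Finset.mem_image.mpr ⟨tval N rt p c ℓ y, hcomval y hy hyr, ?_⟩
          rw [← h]
          abel
      · rw [hwRD r' hr' hBD]
        rcases Finset.mem_insert.mp hy with hyv | hy
        · rw [hyv, htv]
          intro h
          exact hτcom (by rw [← h]; exact hcomw r' hr' hBD)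
        · rw [htvalD y hy]
          exact inv.wt r' hr' hBD y hy hyr
    · -- wi
      intro r1 h1 hB1 r2 h2 hB2 heq
      rcases Finset.mem_insert.mp hB1 with hBv1 | hBD1
      · rcases Finset.mem_insert.mp hB2 with hBv2 | hBD2
        · rw [hr'eq r1 h1 hBv1, hr'eq r2 h2 hBv2]
        · rw [hwnew r1 h1 hBv1, hwRD r2 h2 hBD2] at heq
          exfalso
          apply hτ
          rw [hbad]
          refine Finset.mem_union_right _ ?_
          have hvB : v = B r := by
            have := hr'eq r1 h1 hBv1
            rw [this] at hBv1
            exact hBv1.symm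
          rw [hbadB, if_pos hvB]
          refine Finset.mem_image.mpr ⟨wR N ℓ r2, hcomw r2 h2 hBD2, ?_⟩
          rw [← heq]
          abel
      · rcases Finset.mem_insert.mp hB2 with hBv2 | hBD2
        · rw [hwnew r2 h2 hBv2, hwRD r1 h1 hBD1] at heq
          exfalso
          apply hτ
          rw [hbad]
          refine Finset.mem_union_right _ ?_
          have hvB : v = B r := by
            have := hr'eq r2 h2 hBv2
            rw [this] at hBv2
            exact hBv2.symm
          rw [hbadB, if_pos hvB]
          refine Finset.mem_image.mpr ⟨wR N ℓ r1, hcomw r1 h1 hBD1, ?_⟩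
          rw [heq]
          abel
        · rw [hwRD r1 h1 hBD1, hwRD r2 h2 hBD2] at heq
          exact inv.wi r1 h1 hBD1 r2 h2 hBD2 heq
    · -- bq
      intro r' hr' hA' hB'
      have hBnD : B r' ∉ D := fun h => hB' (Finset.mem_insert_of_mem h)
      have hBnv : B r' ≠ v := fun h => hB' (by rw [h]; exact Finset.mem_insert_self v D)
      rcases Finset.mem_insert.mp hA' with hAv | hAD
      · have hr'r : r' = r := by
          have h0 := (S.mem_N_root hr' (S.hA r' hr')).1
          rw [hAv] at h0
          rw [← h0, hrdef]
        rw [hr'r] at hAv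
        rw [hr'r]
        have hvA : v = A r := hAv.symm
        have hSB : Ssum N rt p c ℓ' (B r) = Ssum N rt p c ℓ (B r) := by
          apply Ssum_congr
          intro u hu hpu
          apply hupd
          intro h
          have h4 := S.childB_ltA hr hu hpu
          rw [h, ← hvA] at h4
          omega
        have hmemA : A r ∈ (N r).erase (B r) :=
          Finset.mem_erase.mpr ⟨S.hAB r hr, S.hA r hr⟩
        rw [← Finset.add_sum_erase _ ℓ' hmemA, hSB]
        have hAτ : ℓ' (A r) = τ - Sv := by rw [← hvA, hupdv]
        have hrest : ∑ u ∈ ((N r).erase (B r)).erase (A r), ℓ' u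
            = ∑ u ∈ ((N r).erase (B r)).erase (A r), ℓ u := by
          refine Finset.sum_congr rfl fun u hu => hupd u fun h => ?_
          exact (Finset.mem_erase.mp hu).1 (h.trans hvA)
        rw [hAτ, hrest]
        intro h
        apply hτ
        rw [hbad]
        refine Finset.mem_union_left _ (Finset.mem_union_right _ ?_)
        rw [hbadA, if_pos hvA, Finset.mem_singleton]
        have h5 : τ - (Sv - (∑ u ∈ ((N r).erase (B r)).erase (A r), ℓ u)
            + Ssum N rt p c ℓ (B r)) = 0 := by
          rw [← h]; abel
        exact sub_eq_zero.mp h5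
      · have hsum : ∑ u ∈ (N r').erase (B r'), ℓ' u = ∑ u ∈ (N r').erase (B r'), ℓ u := by
          refine Finset.sum_congr rfl fun u hu => hupd u fun h => ?_
          have h4 := S.ltA hr' hu
          rw [memD] at hAD
          rw [h, hv] at h4
          omega
        have hSB : Ssum N rt p c ℓ' (B r') = Ssum N rt p c ℓ (B r') := by
          apply Ssum_congr
          intro u hu hpu
          apply hupd
          intro h
          have h4 := S.childB_ltA hr' hu hpu
          rw [memD] at hAD
          rw [h, hv] at h4
          omega
        rw [hsum, hSB]
        exact inv.bq r' hr' hAD hBnD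

end Greedy

section Assemble

variable {V : Type} [Fintype V] [DecidableEq V]
variable {𝒢 : Type} [AddCommGroup 𝒢] [Fintype 𝒢] [DecidableEq 𝒢]
variable {N : V → Finset V} {rt p A B : V → V} {ρ : V → ℕ}

lemma greedy_all (S : Setup N rt p A B ρ) (c : 𝒢)
    (hn : 3 ≤ Fintype.card V) (hG : 2 * Fintype.card V ≤ Fintype.card 𝒢) :
    ∃ ℓ : V → 𝒢, GInv N rt p A B c Finset.univ ℓ := by
  classical
  have main : ∀ k, k ≤ Fintype.card V →
      ∃ ℓ, GInv N rt p A B c (Finset.univ.filter fun u => ρ u < k) ℓ := by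
    intro k
    induction k with
    | zero =>
      intro _
      refine ⟨fun _ => 0, ?_, ?_, ?_, ?_, ?_⟩
      · intro x hx; simp at hx
      · intro x hx; simp at hx
      · intro r hr hB; simp at hB
      · intro r hr hB; simp at hB
      · intro r hr hA; simp at hA
    | succ k ih =>
      intro hk
      obtain ⟨ℓ, inv⟩ := ih (by omega)
      exact greedy_step S c hn hG (by omega) inv
  obtain ⟨ℓ, inv⟩ := main (Fintype.card V) le_rfl
  have huniv : (Finset.univ.filter fun u => ρ u < Fintype.card V) = Finset.univ := by
    apply Finset.filter_true_of_mem
    intro v _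
    exact S.rlt v
  rw [huniv] at inv
  exact ⟨ℓ, inv⟩

lemma assembly (S : Setup N rt p A B ρ) (c : 𝒢) (hc : c ≠ 0)
    (hn : 3 ≤ Fintype.card V) (hG : 2 * Fintype.card V ≤ Fintype.card 𝒢)
    (hsymm : ∀ u v, u ∈ N v ↔ v ∈ N u) :
    ∃ f : V → V → 𝒢,
      (∀ u v, f u v = f v u) ∧
      (∀ u v, v ∈ N u → f u v ≠ 0) ∧
      Function.Injective (fun v => ∑ u ∈ N v, f v u) := by
  classical
  obtain ⟨ℓ, inv⟩ := greedy_all S c hn hG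
  set f : V → V → 𝒢 := fun x y =>
    if y ∈ N x then
      (if ¬ x = rt x ∧ p x = y then ℓ x
       else if ¬ y = rt y ∧ p y = x then ℓ y else c)
    else 0 with hf
  have hnotboth : ∀ x y, (¬ x = rt x ∧ p x = y) → (¬ y = rt y ∧ p y = x) → False := by
    rintro x y ⟨hx, hpx⟩ ⟨hy, hpy⟩
    have h1 := S.plt x hx
    have h2 := S.plt y hy
    rw [hpx] at h1
    rw [hpy] at h2
    omega
  have hfsymm : ∀ u v, f u v = f v u := by
    intro u v
    rw [hf]
    dsimp only
    by_cases h1 : v ∈ N u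
    · have h2 : u ∈ N v := (hsymm u v).mpr h1
      rw [if_pos h1, if_pos h2]
      by_cases g1 : ¬ u = rt u ∧ p u = v
      · rw [if_pos g1]
        rw [if_neg (fun g2 => hnotboth u v g1 g2), if_pos g1]
      · rw [if_neg g1]
        by_cases g2 : ¬ v = rt v ∧ p v = u
        · rw [if_pos g2, if_pos g2]
        · rw [if_neg g2, if_neg g2, if_neg g1]
    · have h2 : u ∉ N v := fun h => h1 ((hsymm u v).mp h)
      rw [if_neg h1, if_neg h2]
  have hwt : ∀ v, ¬ v = rt v → (∑ u ∈ N v, f v u) = tval N rt p c ℓ v := by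
    intro v hv
    rw [← Finset.add_sum_erase _ _ (S.pmem v hv)]
    have h1 : f v (p v) = ℓ v := by
      rw [hf]
      dsimp only
      rw [if_pos (S.pmem v hv), if_pos ⟨hv, rfl⟩]
    have h2 : ∑ u ∈ (N v).erase (p v), f v u
        = ∑ u ∈ (N v).erase (p v), (if u ≠ rt u ∧ p u = v then ℓ u else c) := by
      refine Finset.sum_congr rfl fun u hu => ?_
      obtain ⟨hune, humem⟩ := Finset.mem_erase.mp hu
      rw [hf]
      dsimp only
      rw [if_pos humem, if_neg (fun g => hune g.2.symm)]
    rw [h1, h2, tval, Ssum]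
  have hwr : ∀ r, rt r = r → (∑ u ∈ N r, f r u) = wR N ℓ r := by
    intro r hr
    refine Finset.sum_congr rfl fun u hu => ?_
    obtain ⟨hu1, hu2⟩ := S.mem_N_root hr hu
    rw [hf]
    dsimp only
    rw [if_pos hu, if_neg (fun g => g.1 hr.symm), if_pos ⟨hu2, S.purt r hr u hu⟩]
  refine ⟨f, hfsymm, ?_, ?_⟩
  · intro u v hvN
    rw [hf]
    dsimp only
    rw [if_pos hvN]
    by_cases g1 : ¬ u = rt u ∧ p u = v
    · rw [if_pos g1]
      exact inv.nz u (Finset.mem_univ u) g1.1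
    · rw [if_neg g1]
      by_cases g2 : ¬ v = rt v ∧ p v = u
      · rw [if_pos g2]
        exact inv.nz v (Finset.mem_univ v) g2.1
      · rw [if_neg g2]
        exact hc
  · intro x y h
    dsimp only at h
    by_cases hx : x = rt x
    · by_cases hy : y = rt y
      · rw [hwr x hx.symm, hwr y hy.symm] at h
        exact inv.wi x hx.symm (Finset.mem_univ _) y hy.symm (Finset.mem_univ _) h
      · rw [hwr x hx.symm, hwt y hy] at h
        exact absurd h (inv.wt x hx.symm (Finset.mem_univ _) y (Finset.mem_univ y) hy)
    · by_cases hy : y = rt y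
      · rw [hwt x hx, hwr y hy.symm] at h
        exact absurd h.symm (inv.wt y hy.symm (Finset.mem_univ _) x (Finset.mem_univ x) hx)
      · rw [hwt x hx, hwt y hy] at h
        exact inv.ti x (Finset.mem_univ x) y (Finset.mem_univ y) hx hy h

end Assemble

open SimpleGraph in
/-- If `G` has order `n` and no component of order less than 3, then
`s_g*(G) ≤ 2n`: for every Abelian group `𝒢` of order at least `2n` there is a labeling of
the edges with nonzero elements of `𝒢` whose induced vertex weights are pairwise distinct. -/
theorem stmt_3 {V : Type} [Fintype V] [DecidableEq V]
    (G : SimpleGraph V) [DecidableRel G.Adj]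
    (hcomp : ∀ c : G.ConnectedComponent, 3 ≤ c.supp.ncard) :
    ∀ (𝒢 : Type) [AddCommGroup 𝒢] [Fintype 𝒢],
      2 * Fintype.card V ≤ Fintype.card 𝒢 →
      ∃ f : V → V → 𝒢,
        (∀ u v, f u v = f v u) ∧
        (∀ u v, G.Adj u v → f u v ≠ 0) ∧
        Function.Injective (fun v => ∑ u ∈ G.neighborFinset v, f v u) := by
  intro 𝒢 _ _ hG
  classical
  cases isEmpty_or_nonempty V with
  | inl hE =>
    refine ⟨fun _ _ => 0, fun _ _ => rfl, ?_, ?_⟩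
    · intro u v _
      exact (hE.elim u)
    · intro a b _
      exact (hE.elim a)
  | inr hNE =>
  obtain ⟨v0⟩ := hNE
  have hn3 : 3 ≤ Fintype.card V := by
    have h3 := hcomp (G.connectedComponentMk v0)
    have hsub : (G.connectedComponentMk v0).supp ⊆ Set.univ := Set.subset_univ _
    have h4 := Set.ncard_le_ncard hsub Set.finite_univ
    rw [Set.ncard_univ, Nat.card_eq_fintype_card] at h4
    omega
  -- every component has a vertex with two distinct neighbors
  have hroot : ∀ c : G.ConnectedComponent, ∃ r, G.connectedComponentMk r = c ∧
      ∃ y z, y ≠ z ∧ G.Adj r y ∧ G.Adj r z := by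
    intro c
    obtain ⟨x, hxc0⟩ := c.exists_rep
    have hxc : G.connectedComponentMk x = c := hxc0
    have hsupp : ∀ u, u ∈ c.supp ↔ G.connectedComponentMk u = c :=
      fun u => ConnectedComponent.mem_supp_iff c u
    -- second element
    have h2 : ∃ w, G.connectedComponentMk w = c ∧ w ≠ x := by
      by_contra h
      push_neg at h
      have hsub : c.supp ⊆ {x} := by
        intro u hu
        exact h u ((hsupp u).mp hu)
      have := Set.ncard_le_ncard hsub (Set.finite_singleton x)
      rw [Set.ncard_singleton] at this
      have := hcomp c
      omega
    obtain ⟨w, hwc, hwx⟩ := h2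
    have hreach : G.Reachable x w := ConnectedComponent.exact (hxc.trans hwc.symm)
    obtain ⟨p0⟩ := hreach
    obtain ⟨u, hxu, q, -⟩ := Walk.exists_eq_cons_of_ne hwx.symm p0
    have huc : G.connectedComponentMk u = c := by
      rw [← (ConnectedComponent.connectedComponentMk_eq_of_adj hxu), hxc]
    -- third element
    have h3 : ∃ z, G.connectedComponentMk z = c ∧ z ≠ x ∧ z ≠ u := by
      by_contra h
      push_neg at h
      have hsub : c.supp ⊆ {x, u} := by
        intro t ht
        by_cases htx : t = x
        · exact Or.inl htx
        · exact Or.inr (h t ((hsupp t).mp ht) htx)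
      have hle := Set.ncard_le_ncard hsub (Set.Finite.insert x (Set.finite_singleton u))
      have : ({x, u} : Set V).ncard ≤ 2 := by
        have := Set.ncard_insert_le x ({u} : Set V)
        rw [Set.ncard_singleton] at this
        omega
      have := hcomp c
      omega
    obtain ⟨z, hzc, hzx, hzu⟩ := h3
    have hreach2 : G.Reachable x z := ConnectedComponent.exact (hxc.trans hzc.symm)
    obtain ⟨p1⟩ := hreach2
    have hP : p1.bypass.IsPath := Walk.bypass_isPath p1
    obtain ⟨a, hxa, Q, hPeq⟩ := Walk.exists_eq_cons_of_ne hzx.symm p1.bypass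
    by_cases hau : a = u
    · -- second vertex is u; look one step further
      subst hau
      obtain ⟨b, hub, R, hQeq⟩ := Walk.exists_eq_cons_of_ne (Ne.symm hzu) Q
      rw [hPeq] at hP
      rw [Walk.cons_isPath_iff] at hP
      have hbQ : b ∈ Q.support := by
        rw [hQeq, Walk.support_cons]
        exact List.mem_cons_of_mem _ (Walk.start_mem_support R)
      have hbx : b ≠ x := fun h => hP.2 (h ▸ hbQ)
      exact ⟨a, huc, x, b, Ne.symm hbx, hxu.symm, hub⟩
    · exact ⟨x, hxc, u, a, fun h => hau h.symm, hxu, hxa⟩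
  choose rootC hrootC hrootdeg using hroot
  set rt : V → V := fun v => rootC (G.connectedComponentMk v) with hrtdef
  have hmkrt : ∀ v, G.connectedComponentMk (rt v) = G.connectedComponentMk v :=
    fun v => hrootC _
  have hrti : ∀ v, rt (rt v) = rt v := by
    intro v
    show rootC (G.connectedComponentMk (rt v)) = rt v
    rw [hmkrt v]
  have hreach : ∀ v, G.Reachable (rt v) v := fun v => ConnectedComponent.exact (hmkrt v)
  have hadjrt : ∀ u v, G.Adj u v → rt u = rt v := by
    intro u v h
    show rootC _ = rootC _
    rw [ConnectedComponent.connectedComponentMk_eq_of_adj h]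
  set d : V → ℕ := fun v => G.dist (rt v) v with hddef
  have hdzero : ∀ v, d v = 0 → v = rt v := fun v h => ((hreach v).dist_eq_zero_iff.mp h).symm
  have hdlt : ∀ v, d v < Fintype.card V := by
    intro v
    obtain ⟨w, hw⟩ := (hreach v).exists_walk_length_eq_dist
    have h1 : G.dist (rt v) v ≤ w.bypass.length := dist_le _
    have h2 := Walk.length_bypass_le w
    have h3 := (Walk.bypass_isPath w).length_lt
    show G.dist (rt v) v < Fintype.card V
    omega
  -- parent function
  have hpar : ∀ v, v ≠ rt v → ∃ u, G.Adj v u ∧ d u + 1 = d v := by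
    intro v hv
    obtain ⟨w, hw⟩ := (hreach v).exists_walk_length_eq_dist
    obtain ⟨u, hadj, q, hq⟩ := Walk.exists_eq_cons_of_ne hv w.reverse
    have hql : q.length + 1 = G.dist (rt v) v := by
      have h5 := congrArg Walk.length hq
      rw [Walk.length_reverse, hw] at h5
      rw [Walk.length_cons] at h5
      omega
    have hrtu : rt u = rt v := (hadjrt v u hadj).symm
    have hd1 : G.dist (rt v) u ≤ q.length := by
      have h6 := dist_le q.reverse
      rw [Walk.length_reverse] at h6
      have h7 : G.dist (rt v) u = G.dist u (rt v) := SimpleGraph.dist_comm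
      omega
    have hd2 : G.dist (rt v) v ≤ G.dist (rt v) u + 1 := by
      have hru : G.Reachable (rt v) u := (hreach v).trans ⟨Walk.cons hadj Walk.nil⟩
      obtain ⟨w2, hw2⟩ := hru.exists_walk_length_eq_dist
      have h7 := dist_le (w2.concat hadj.symm)
      rwa [Walk.length_concat, hw2] at h7
    refine ⟨u, hadj, ?_⟩
    show G.dist (rt u) u + 1 = G.dist (rt v) v
    rw [hrtu]
    omega
  choose! par hpadj hpd using hpar
  -- rank functions
  set iV : V → ℕ := fun v => (Fintype.equivFin V v : ℕ) with hiVdef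
  set ρ : V → ℕ := fun v => iV v + (Fintype.card V - d v) * Fintype.card V with hρdef
  have hiVlt : ∀ v, iV v < Fintype.card V := fun v => (Fintype.equivFin V v).isLt
  have hρinj : Function.Injective ρ := by
    intro u v h
    have h0 : iV u + (Fintype.card V - d u) * Fintype.card V
        = iV v + (Fintype.card V - d v) * Fintype.card V := h
    have h1 : iV u = iV v := by
      have h2 := congrArg (· % Fintype.card V) h0
      simpa [Nat.add_mul_mod_self_right, Nat.mod_eq_of_lt (hiVlt u),
        Nat.mod_eq_of_lt (hiVlt v)] using h2
    exact (Fintype.equivFin V).injective (Fin.ext h1)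
  have hmono : ∀ x y, d y < d x → ρ x < ρ y := by
    intro x y hdd
    show iV x + (Fintype.card V - d x) * Fintype.card V
        < iV y + (Fintype.card V - d y) * Fintype.card V
    have h1 := hdlt x
    have h2 := hdlt y
    have h3 := hiVlt x
    have h4 := hiVlt y
    calc iV x + (Fintype.card V - d x) * Fintype.card V
        < Fintype.card V + (Fintype.card V - d x) * Fintype.card V := by omega
      _ = ((Fintype.card V - d x) + 1) * Fintype.card V := by ring
      _ ≤ (Fintype.card V - d y) * Fintype.card V :=
          Nat.mul_le_mul_right _ (by omega)
      _ ≤ iV y + (Fintype.card V - d y) * Fintype.card V := Nat.le_add_left _ _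
  set σ : V → ℕ := fun v => (Finset.univ.filter fun u => ρ u < ρ v).card with hσdef
  have hσlt : ∀ v, σ v < Fintype.card V := by
    intro v
    show (Finset.univ.filter fun u => ρ u < ρ v).card < Fintype.card V
    have hsub : (Finset.univ.filter fun u => ρ u < ρ v) ⊆ Finset.univ.erase v := by
      intro u hu
      refine Finset.mem_erase.mpr ⟨?_, Finset.mem_univ u⟩
      intro h
      have := (Finset.mem_filter.mp hu).2
      rw [h] at this
      omega
    have h1 := Finset.card_le_card hsub
    rw [Finset.card_erase_of_mem (Finset.mem_univ v), Finset.card_univ] at h1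
    omega
  have hσmono : ∀ x y, ρ x < ρ y → σ x < σ y := by
    intro x y h
    apply Finset.card_lt_card
    rw [Finset.ssubset_iff_of_subset]
    · exact ⟨x, Finset.mem_filter.mpr ⟨Finset.mem_univ x, h⟩,
        fun hx => by have := (Finset.mem_filter.mp hx).2; omega⟩
    · intro u hu
      have := (Finset.mem_filter.mp hu).2
      exact Finset.mem_filter.mpr ⟨Finset.mem_univ u, by omega⟩
  have hσle : ∀ x y, ρ x ≤ ρ y → σ x ≤ σ y := by
    intro x y h
    rcases Nat.lt_or_ge (ρ x) (ρ y) with h' | h'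
    · exact le_of_lt (hσmono x y h')
    · have : ρ x = ρ y := by omega
      rw [hρinj this]
  have hσinj : Function.Injective σ := by
    intro u v h
    by_contra hne
    have hρne : ρ u ≠ ρ v := fun hh => hne (hρinj hh)
    rcases Nat.lt_or_ge (ρ u) (ρ v) with hh | hh
    · exact absurd h (Nat.ne_of_lt (hσmono u v hh))
    · have : ρ v < ρ u := by omega
      exact absurd h.symm (Nat.ne_of_lt (hσmono v u this))
  -- distance-one facts
  have hd1adj : ∀ r u, rt r = r → G.Adj r u → d u = 1 := by
    intro r u hr hadj
    have hrtu : rt u = r := (hadjrt r u hadj).symm.trans hr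
    show G.dist (rt u) u = 1
    rw [hrtu]
    have hle : G.dist r u ≤ 1 := by
      have := dist_le (Walk.cons hadj Walk.nil)
      simpa using this
    have hpos : 0 < G.dist r u := Reachable.pos_dist_of_ne ⟨Walk.cons hadj Walk.nil⟩ hadj.ne
    omega
  have adj_of_len1 : ∀ (x y : V) (w : G.Walk x y), w.length = 1 → G.Adj x y := by
    intro x y w
    cases w with
    | nil => simp
    | cons hadj q =>
      intro hw1
      rw [Walk.length_cons] at hw1
      have hq0 : q.length = 0 := by omega
      have heq := Walk.eq_of_length_eq_zero hq0
      subst heq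
      exact hadj
  have hadj_of_d1 : ∀ u, d u = 1 → G.Adj (rt u) u := by
    intro u h
    obtain ⟨w, hw⟩ := (hreach u).exists_walk_length_eq_dist
    exact adj_of_len1 _ _ w (by rw [hw]; exact h)
  have hpurt : ∀ r, rt r = r → ∀ u, G.Adj r u → par u = r := by
    intro r hr u hadj
    have hrtu : rt u = r := (hadjrt r u hadj).symm.trans hr
    have hune : u ≠ rt u := by
      rw [hrtu]
      exact hadj.ne.symm
    have h1 := hpd u hune
    have h2 := hd1adj r u hr hadj
    have h3 : d (par u) = 0 := by omega
    have h4 := hdzero (par u) h3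
    have h5 : rt (par u) = rt u := hadjrt (par u) u (hpadj u hune).symm
    rw [h4, h5, hrtu]
  -- choose the two special neighbors of each root
  have hABex : ∀ r, rt r = r → ∃ a b : V, a ∈ G.neighborFinset r ∧ b ∈ G.neighborFinset r ∧
      a ≠ b ∧ (∀ u, rt u = r → u ≠ r → ρ u ≤ ρ b) ∧
      (∀ u, rt u = r → u ≠ r → u ≠ b → ρ u ≤ ρ a) := by
    intro r hr
    have hrootCr : rootC (G.connectedComponentMk r) = r := hr
    obtain ⟨y, z, hyz, hay, haz⟩ := hrootdeg (G.connectedComponentMk r)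
    rw [hrootCr] at hay haz
    set Er := Finset.univ.filter (fun u => rt u = r ∧ u ≠ r) with hErdef
    have hmemEr : ∀ u, G.Adj r u → u ∈ Er := by
      intro u hadj
      exact Finset.mem_filter.mpr ⟨Finset.mem_univ u,
        (hadjrt r u hadj).symm.trans hr, hadj.ne.symm⟩
    have hyEr : y ∈ Er := hmemEr y hay
    have hzEr : z ∈ Er := hmemEr z haz
    obtain ⟨b, hbEr, hbmax⟩ := Finset.exists_max_image Er ρ ⟨y, hyEr⟩
    obtain ⟨hbrt, hbne⟩ := (Finset.mem_filter.mp hbEr).2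
    have hdb : d b = 1 := by
      have hdbne : d b ≠ 0 := fun h0 => hbne (by rw [hdzero b h0, hbrt])
      by_contra hne1
      have hgt : d y < d b := by
        have := hd1adj r y hr hay
        omega
      have := hmono b y hgt
      have := hbmax y hyEr
      omega
    have hbN : b ∈ G.neighborFinset r := by
      have := hadj_of_d1 b hdb
      rw [hbrt] at this
      exact (mem_neighborFinset G r b).mpr this
    have hz0 : ∃ z0, z0 ∈ Er.erase b ∧ d z0 = 1 := by
      by_cases hyb : y = b
      · refine ⟨z, Finset.mem_erase.mpr ⟨fun h => hyz (hyb.trans h.symm), hzEr⟩,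
          hd1adj r z hr haz⟩
      · exact ⟨y, Finset.mem_erase.mpr ⟨hyb, hyEr⟩, hd1adj r y hr hay⟩
    obtain ⟨z0, hz0mem, hdz0⟩ := hz0
    obtain ⟨a, haEr, hamax⟩ := Finset.exists_max_image (Er.erase b) ρ ⟨z0, hz0mem⟩
    obtain ⟨haneb, haEr'⟩ := Finset.mem_erase.mp haEr
    obtain ⟨hart, hane⟩ := (Finset.mem_filter.mp haEr').2
    have hda : d a = 1 := by
      have hdane : d a ≠ 0 := fun h0 => hane (by rw [hdzero a h0, hart])
      by_contra hne1
      have hgt : d z0 < d a := by omega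
      have := hmono a z0 hgt
      have := hamax z0 hz0mem
      omega
    have haN : a ∈ G.neighborFinset r := by
      have := hadj_of_d1 a hda
      rw [hart] at this
      exact (mem_neighborFinset G r a).mpr this
    refine ⟨a, b, haN, hbN, haneb, ?_, ?_⟩
    · intro u hu1 hu2
      exact hbmax u (Finset.mem_filter.mpr ⟨Finset.mem_univ u, hu1, hu2⟩)
    · intro u hu1 hu2 hu3
      exact hamax u (Finset.mem_erase.mpr ⟨hu3,
        Finset.mem_filter.mpr ⟨Finset.mem_univ u, hu1, hu2⟩⟩)
  choose! Af Bf hAf hBf hABf hmaxB hmaxA using hABex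
  -- the Setup structure
  have S : Setup (fun v => G.neighborFinset v) rt par Af Bf σ := by
    refine ⟨?_, ?_, hrti, ?_, ?_, ?_, hσinj, hσlt, hAf, hBf, hABf, ?_, ?_⟩
    · intro v h
      exact G.irrefl ((mem_neighborFinset G v v).mp h)
    · intro u v h
      exact (hadjrt v u ((mem_neighborFinset G v u).mp h)).symm
    · intro v hv
      exact (mem_neighborFinset G v (par v)).mpr (hpadj v hv)
    · intro v hv
      have h1 := hpd v hv
      exact hσmono v (par v) (hmono v (par v) (by omega))
    · intro r hr u hu
      exact hpurt r hr u ((mem_neighborFinset G r u).mp hu)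
    · intro r hr u hu1 hu2
      exact hσle u (Bf r) (hmaxB r hr u hu1 hu2)
    · intro r hr u hu1 hu2 hu3
      exact hσle u (Af r) (hmaxA r hr u hu1 hu2 hu3)
  -- a nonzero element of the group
  have hone : 1 < Fintype.card 𝒢 := by omega
  obtain ⟨c, hc⟩ := Fintype.exists_ne_of_one_lt_card hone 0
  obtain ⟨f, h1, h2, h3⟩ := assembly S c hc hn3 hG
    (fun u v => by
      rw [mem_neighborFinset, mem_neighborFinset]
      exact G.adj_comm v u)
  exact ⟨f, h1, fun u v h => h2 u v ((mem_neighborFinset G u v).mpr h), h3⟩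
end

section
/- If G is a graph with no component of order less than 3, then the nowhere-zero group sum chromatic number satisfies (χ^Σ_g)*(G) ≤ Δ(G) + col(G) − 1 ≤ 2Δ(G). -/
noncomputable def colNum {V : Type} [Fintype V] [DecidableEq V]
    (G : SimpleGraph V) [DecidableRel G.Adj] : ℕ :=
  sInf {k | ∀ s : Finset V, s.Nonempty → ∃ v ∈ s, (s.filter fun u => G.Adj v u).card < k}

namespace NZGS

variable {V : Type} [Fintype V]

lemma maxDegree_succ_mem [DecidableEq V] (G : SimpleGraph V) [DecidableRel G.Adj] :
    (G.maxDegree + 1) ∈ {k | ∀ s : Finset V, s.Nonempty → ∃ v ∈ s,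
      (s.filter fun u => G.Adj v u).card < k} := by
  intro s hs
  obtain ⟨v, hv⟩ := hs
  refine ⟨v, hv, ?_⟩
  have h1 : (s.filter fun u => G.Adj v u) ⊆ G.neighborFinset v := by
    intro u hu
    simp only [Finset.mem_filter] at hu
    simpa [SimpleGraph.mem_neighborFinset] using hu.2
  have := Finset.card_le_card h1
  have h2 := G.degree_le_maxDegree v
  rw [SimpleGraph.degree] at h2
  omega

lemma colNum_le [DecidableEq V] (G : SimpleGraph V) [DecidableRel G.Adj] :
    colNum G ≤ G.maxDegree + 1 :=
  Nat.sInf_le (maxDegree_succ_mem G)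

lemma colNum_spec [DecidableEq V] (G : SimpleGraph V) [DecidableRel G.Adj] :
    ∀ s : Finset V, s.Nonempty → ∃ v ∈ s, (s.filter fun u => G.Adj v u).card < colNum G :=
  Nat.sInf_mem ⟨G.maxDegree + 1, maxDegree_succ_mem G⟩

/-- sequential choice lemma -/
lemma seq_choice {α : Type} [DecidableEq α] {𝒢 : Type} [Fintype 𝒢] [Nonempty 𝒢]
    (ed : Finset α) (key : α → ℕ) (hkey : Function.Injective key)
    (Fb : (α → 𝒢) → α → Finset 𝒢)
    (loc : ∀ g g' e, e ∈ ed → (∀ e', key e' < key e → g e' = g' e') → Fb g e = Fb g' e)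
    (bd : ∀ g e, e ∈ ed → (Fb g e).card < Fintype.card 𝒢) :
    ∃ g, ∀ e ∈ ed, g e ∉ Fb g e := by
  have main : ∀ m : ℕ, ∃ g, ∀ e ∈ ed, key e < m → g e ∉ Fb g e := by
    intro m
    induction m with
    | zero => exact ⟨fun _ => Classical.arbitrary 𝒢, fun e _ h => absurd h (by omega)⟩
    | succ m ih =>
      obtain ⟨g, hg⟩ := ih
      by_cases h : ∃ e ∈ ed, key e = m
      · obtain ⟨e0, he0, hke0⟩ := h
        have hne : ∃ x, x ∉ Fb g e0 := by
          by_contra hall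
          push_neg at hall
          have hsub : (Finset.univ : Finset 𝒢) ⊆ Fb g e0 := fun x _ => hall x
          have := Finset.card_le_card hsub
          have := bd g e0 he0
          have := Finset.card_univ (α := 𝒢)
          omega
        obtain ⟨x, hx⟩ := hne
        refine ⟨Function.update g e0 x, ?_⟩
        intro e he hkm
        by_cases hee : e = e0
        · have h1 : Function.update g e0 x e = x := by rw [hee, Function.update_self]
          rw [h1, ← loc g (Function.update g e0 x) e he ?_]
          · rw [hee]; exact hx
          · intro e' hk'
            rw [Function.update_of_ne]
            intro hc; subst hc; rw [hee] at hk'; omega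
        · have hklt : key e < m := by
            rcases Nat.lt_succ_iff_lt_or_eq.mp hkm with h1 | h1
            · exact h1
            · exact absurd (hkey (h1.trans hke0.symm)) hee
          rw [Function.update_of_ne hee]
          rw [← loc g (Function.update g e0 x) e he ?_]
          · exact hg e he hklt
          · intro e' hk'
            rw [Function.update_of_ne]
            intro hc; subst hc; omega
      · refine ⟨g, fun e he hkm => hg e he ?_⟩
        rcases Nat.lt_succ_iff_lt_or_eq.mp hkm with h1 | h1
        · exact h1
        · exact absurd ⟨e, he, h1⟩ h
  obtain ⟨g, hg⟩ := main ((ed.sup key) + 1)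
  exact ⟨g, fun e he => hg e he (Nat.lt_succ_of_le (Finset.le_sup he))⟩

/-- existence of a degeneracy-type position function -/
lemma exists_pos [DecidableEq V] (G : SimpleGraph V) [DecidableRel G.Adj] {c : ℕ}
    (hP : ∀ s : Finset V, s.Nonempty → ∃ v ∈ s, (s.filter fun u => G.Adj v u).card < c) :
    ∃ pos : V → ℕ, Function.Injective pos ∧
      ∀ v, ((G.neighborFinset v).filter fun u => pos u < pos v).card < c := by
  have key : ∀ n (s : Finset V), s.card = n → ∃ pos : V → ℕ, Set.InjOn pos s ∧
      (∀ v ∈ s, pos v < n) ∧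
      ∀ v ∈ s, ((G.neighborFinset v).filter fun u => u ∈ s ∧ pos u < pos v).card < c := by
    intro n
    induction n with
    | zero =>
      intro s hs
      rw [Finset.card_eq_zero] at hs; subst hs
      exact ⟨fun _ => 0, by simp [Set.InjOn], by simp, by simp⟩
    | succ n ih =>
      intro s hs
      have hsne : s.Nonempty := Finset.card_pos.mp (by omega)
      obtain ⟨v, hv, hcount⟩ := hP s hsne
      obtain ⟨pos', hinj, hrange, hbound⟩ := ih (s.erase v) (by rw [Finset.card_erase_of_mem hv, hs]; omega)
      refine ⟨Function.update pos' v n, ?_, ?_, ?_⟩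
      · intro a ha b hb hab
        by_cases hav : a = v <;> by_cases hbv : b = v
        · rw [hav, hbv]
        · subst hav
          rw [Function.update_self, Function.update_of_ne hbv] at hab
          have := hrange b (Finset.mem_erase.mpr ⟨hbv, hb⟩)
          omega
        · subst hbv
          rw [Function.update_self, Function.update_of_ne hav] at hab
          have := hrange a (Finset.mem_erase.mpr ⟨hav, ha⟩)
          omega
        · rw [Function.update_of_ne hav, Function.update_of_ne hbv] at hab
          exact hinj (Finset.mem_erase.mpr ⟨hav, ha⟩) (Finset.mem_erase.mpr ⟨hbv, hb⟩) hab
      · intro u hu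
        by_cases huv : u = v
        · subst huv; rw [Function.update_self]; omega
        · rw [Function.update_of_ne huv]
          have := hrange u (Finset.mem_erase.mpr ⟨huv, hu⟩)
          omega
      · intro u hu
        by_cases huv : u = v
        · subst huv
          have hsub : ((G.neighborFinset u).filter fun w => w ∈ s ∧
              Function.update pos' u n w < Function.update pos' u n u) ⊆
              s.filter fun w => G.Adj u w := by
            intro w hw
            simp only [Finset.mem_filter, SimpleGraph.mem_neighborFinset] at hw ⊢
            exact ⟨hw.2.1, hw.1⟩
          have := Finset.card_le_card hsub
          omega
        · have heq : ((G.neighborFinset u).filter fun w => w ∈ s ∧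
              Function.update pos' v n w < Function.update pos' v n u) =
              ((G.neighborFinset u).filter fun w => w ∈ s.erase v ∧ pos' w < pos' u) := by
            apply Finset.filter_congr
            intro w _
            rw [Function.update_of_ne huv]
            by_cases hwv : w = v
            · subst hwv
              rw [Function.update_self]
              have := hrange u (Finset.mem_erase.mpr ⟨huv, hu⟩)
              simp only [Finset.mem_erase]
              constructor
              · rintro ⟨_, h2⟩; omega
              · rintro ⟨⟨hc, _⟩, _⟩; exact absurd rfl hc
            · rw [Function.update_of_ne hwv]
              simp only [Finset.mem_erase]
              tauto
          rw [heq]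
          exact hbound u (Finset.mem_erase.mpr ⟨huv, hu⟩)
  obtain ⟨pos, hinj, _, hbound⟩ := key (Finset.univ.card) Finset.univ rfl
  refine ⟨pos, fun a b hab => hinj (by simp) (by simp) hab, ?_⟩
  intro v
  have := hbound v (Finset.mem_univ v)
  convert this using 2
  apply Finset.filter_congr
  intro w _
  simp

/-- components of order ≥ 3 : degree at least 1 -/
lemma deg_ge_one (G : SimpleGraph V) [DecidableRel G.Adj]
    (hcomp : ∀ c : G.ConnectedComponent, 3 ≤ c.supp.ncard) (v : V) :
    (G.neighborFinset v).Nonempty := by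
  by_contra h
  rw [Finset.not_nonempty_iff_eq_empty] at h
  have hsupp : (G.connectedComponentMk v).supp = {v} := by
    ext u
    simp only [SimpleGraph.ConnectedComponent.mem_supp_iff, Set.mem_singleton_iff,
      SimpleGraph.ConnectedComponent.eq]
    constructor
    · intro hr
      obtain ⟨w⟩ := hr.symm
      cases w with
      | nil => rfl
      | cons h' _ =>
        exfalso
        rename_i b _
        have : b ∈ G.neighborFinset v := by rwa [SimpleGraph.mem_neighborFinset]
        rw [h] at this
        exact absurd this (Finset.notMem_empty b)
    · intro h'; subst h'; rfl
  have := hcomp (G.connectedComponentMk v)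
  rw [hsupp, Set.ncard_singleton] at this
  omega

lemma no_K2 (G : SimpleGraph V) [DecidableRel G.Adj]
    (hcomp : ∀ c : G.ConnectedComponent, 3 ≤ c.supp.ncard) {z v : V} (h : G.Adj z v) :
    2 ≤ G.degree z ∨ 2 ≤ G.degree v := by
  by_contra hc
  push_neg at hc
  obtain ⟨h1, h2⟩ := hc
  classical
  have hNz : G.neighborFinset z = {v} := by
    have hv : v ∈ G.neighborFinset z := by rwa [SimpleGraph.mem_neighborFinset]
    have : G.degree z = 1 := by
      have : 1 ≤ G.degree z := by
        rw [SimpleGraph.degree]; exact Finset.card_pos.mpr ⟨v, hv⟩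
      omega
    rw [SimpleGraph.degree] at this
    exact Finset.eq_singleton_iff_unique_mem.mpr ⟨hv, fun u hu => by
      by_contra hne
      have : 2 ≤ (G.neighborFinset z).card := Finset.one_lt_card.mpr ⟨u, hu, v, hv, hne⟩
      omega⟩
  have hNv : G.neighborFinset v = {z} := by
    have hz : z ∈ G.neighborFinset v := by rw [SimpleGraph.mem_neighborFinset]; exact h.symm
    have : G.degree v = 1 := by
      have : 1 ≤ G.degree v := by
        rw [SimpleGraph.degree]; exact Finset.card_pos.mpr ⟨z, hz⟩
      omega
    rw [SimpleGraph.degree] at this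
    exact Finset.eq_singleton_iff_unique_mem.mpr ⟨hz, fun u hu => by
      by_contra hne
      have : 2 ≤ (G.neighborFinset v).card := Finset.one_lt_card.mpr ⟨u, hu, z, hz, hne⟩
      omega⟩
  have hwalk : ∀ (a b : V) (_ : G.Walk a b), a ∈ ({z, v} : Set V) → b ∈ ({z, v} : Set V) := by
    intro a b w
    induction w with
    | nil => exact id
    | @cons x y b' h' p ih =>
      intro ha
      apply ih
      rcases ha with ha | ha
      · have hy : y ∈ G.neighborFinset z := by
          rw [SimpleGraph.mem_neighborFinset, ← ha]; exact h'
        rw [hNz, Finset.mem_singleton] at hy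
        right; exact hy
      · have hy : y ∈ G.neighborFinset v := by
          rw [SimpleGraph.mem_neighborFinset, ← Set.mem_singleton_iff.mp ha]; exact h'
        rw [hNv, Finset.mem_singleton] at hy
        left; exact hy
  have hsupp : (G.connectedComponentMk z).supp ⊆ {z, v} := by
    intro u hu
    simp only [SimpleGraph.ConnectedComponent.mem_supp_iff, SimpleGraph.ConnectedComponent.eq] at hu
    obtain ⟨w⟩ := hu.symm
    exact hwalk z u w (Or.inl rfl)
  have h3 := hcomp (G.connectedComponentMk z)
  have : (G.connectedComponentMk z).supp.ncard ≤ 2 := by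
    calc (G.connectedComponentMk z).supp.ncard ≤ ({z, v} : Set V).ncard :=
          Set.ncard_le_ncard hsupp (Set.toFinite _)
    _ ≤ 2 := by
        apply le_trans (Set.ncard_insert_le _ _)
        simp
  omega

end NZGS

namespace NZGS2

variable {V : Type} [Fintype V] [LinearOrder V] (G : SimpleGraph V) [DecidableRel G.Adj]

/-- earlier neighbours -/
def EE (z : V) : Finset V := (G.neighborFinset z).filter (fun u => u < z)
/-- later neighbours -/
def LL (z : V) : Finset V := (G.neighborFinset z).filter (fun u => z < u)

def IsSink (v : V) : Prop := ∀ u ∈ G.neighborFinset v, u < v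

instance : DecidablePred (IsSink G) := fun v =>
  inferInstanceAs (Decidable (∀ u ∈ G.neighborFinset v, u < v))

/-- the largest neighbour -/
noncomputable def mx (x : V) : V :=
  if h : (G.neighborFinset x).Nonempty then (G.neighborFinset x).max' h else x

/-- the "children" of `z` among later neighbours: later sinks whose largest neighbour is `z` -/
noncomputable def FF (z : V) : Finset V :=
  (LL G z).filter (fun x => IsSink G x ∧ mx G x = z)

noncomputable def SS (z : V) : Finset V := LL G z \ FF G z

/-- the distinguished "last" later neighbour -/
noncomputable def lastv (z : V) : V :=
  if h : (SS G z).Nonempty then (SS G z).max' h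
  else if h2 : (FF G z).Nonempty then (FF G z).max' h2 else z

noncomputable def dkv (z : V) : V :=
  if h : ((FF G z).erase (lastv G z)).Nonempty then ((FF G z).erase (lastv G z)).max' h else z

noncomputable def crit (z : V) : Prop := ¬ IsSink G z ∧ SS G z = ∅ ∧ (FF G z).card = 1
noncomputable def dcond (z : V) : Prop := ¬ IsSink G z ∧ SS G z = ∅ ∧ 2 ≤ (FF G z).card

noncomputable instance : DecidablePred (crit G) := fun _ => by unfold crit; infer_instance
noncomputable instance : DecidablePred (dcond G) := fun _ => by unfold dcond; infer_instance

/-- the (ordered) edges -/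
def ed : Finset (V × V) := Finset.univ.filter (fun p => G.Adj p.1 p.2 ∧ p.1 < p.2)

/-- position of a vertex -/
def nv (v : V) : ℕ := (Finset.univ.filter (fun u => u < v)).card

noncomputable def ebit (e : V × V) : ℕ := if e.2 = lastv G e.1 then 1 else 0

noncomputable def ekey (e : V × V) : ℕ :=
  (2 * nv e.1 + ebit G e) * Fintype.card V + nv e.2

/-- candidate edges for the "critical pair" kill -/
noncomputable def TE (z : V) : Finset (V × V) :=
  ((EE G z).image (fun u => (u, z))) ∪
    (((G.neighborFinset (lastv G z)).erase z).image (fun u => (u, lastv G z)))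

lemma nv_strictMono : StrictMono (nv (V := V)) := by
  intro a b hab
  apply Finset.card_lt_card
  constructor
  · intro u hu
    simp only [Finset.mem_filter, Finset.mem_univ, true_and] at hu ⊢
    exact hu.trans hab
  · intro hsub
    have : a ∈ Finset.univ.filter (fun u => u < b) := by simp [hab]
    have h2 := hsub this
    simp at h2

lemma nv_inj : Function.Injective (nv (V := V)) := nv_strictMono.injective

lemma nv_lt_card (v : V) : nv v < Fintype.card V := by
  rw [← Finset.card_univ]
  apply Finset.card_lt_card
  constructor
  · exact Finset.filter_subset _ _
  · intro hsub
    have : v ∈ Finset.univ.filter (fun u => u < v) := hsub (Finset.mem_univ v)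
    simp at this

lemma ebit_le_one (e : V × V) : ebit G e ≤ 1 := by
  unfold ebit; split <;> omega

lemma ekey_inj : Function.Injective (ekey G) := by
  intro e e' h
  unfold ekey at h
  have h2 : nv e.2 < Fintype.card V := nv_lt_card _
  have h2' : nv e'.2 < Fintype.card V := nv_lt_card _
  have hpos : 0 < Fintype.card V := by omega
  have t1 : ∀ A c : ℕ, c < Fintype.card V →
      (A * Fintype.card V + c) % Fintype.card V = c := by
    intro A c hc
    rw [Nat.add_comm, Nat.add_mul_mod_self_right, Nat.mod_eq_of_lt hc]
  have t2 : ∀ A c : ℕ, c < Fintype.card V →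
      (A * Fintype.card V + c) / Fintype.card V = A := by
    intro A c hc
    rw [Nat.add_comm, Nat.add_mul_div_right _ _ hpos, Nat.div_eq_of_lt hc, Nat.zero_add]
  have hmod : nv e.2 = nv e'.2 := by
    have := congrArg (· % Fintype.card V) h
    simpa [t1 _ _ h2, t1 _ _ h2'] using this
  have hdiv : 2 * nv e.1 + ebit G e = 2 * nv e'.1 + ebit G e' := by
    have := congrArg (· / Fintype.card V) h
    simpa [t2 _ _ h2, t2 _ _ h2'] using this
  have hb := ebit_le_one G e
  have hb' := ebit_le_one G e'
  have h1 : nv e.1 = nv e'.1 := by omega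
  have hbit : ebit G e = ebit G e' := by omega
  have hfst : e.1 = e'.1 := nv_inj h1
  have hsnd : e.2 = e'.2 := nv_inj hmod
  exact Prod.ext hfst hsnd

lemma ekey_lt_fst {e e' : V × V} (h : e.1 < e'.1) : ekey G e < ekey G e' := by
  unfold ekey
  have h1 : nv e.1 < nv e'.1 := nv_strictMono h
  have h2 : nv e.2 < Fintype.card V := nv_lt_card _
  have hb := ebit_le_one G e
  have hA : 2 * nv e.1 + ebit G e < 2 * nv e'.1 + ebit G e' := by omega
  calc (2 * nv e.1 + ebit G e) * Fintype.card V + nv e.2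
      < (2 * nv e.1 + ebit G e) * Fintype.card V + Fintype.card V := by omega
    _ = (2 * nv e.1 + ebit G e + 1) * Fintype.card V := by ring
    _ ≤ (2 * nv e'.1 + ebit G e') * Fintype.card V := Nat.mul_le_mul_right _ (by omega)
    _ ≤ _ := Nat.le_add_right _ _

lemma ekey_lt_bit {e e' : V × V} (h1 : e.1 = e'.1) (h : ebit G e < ebit G e') :
    ekey G e < ekey G e' := by
  unfold ekey
  rw [h1]
  have h2 : nv e.2 < Fintype.card V := nv_lt_card _
  calc (2 * nv e'.1 + ebit G e) * Fintype.card V + nv e.2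
      < (2 * nv e'.1 + ebit G e) * Fintype.card V + Fintype.card V := by omega
    _ = (2 * nv e'.1 + ebit G e + 1) * Fintype.card V := by ring
    _ ≤ (2 * nv e'.1 + ebit G e') * Fintype.card V := Nat.mul_le_mul_right _ (by omega)
    _ ≤ _ := Nat.le_add_right _ _

lemma ekey_lt_snd {e e' : V × V} (h1 : e.1 = e'.1) (h2 : ebit G e = ebit G e')
    (h : e.2 < e'.2) : ekey G e < ekey G e' := by
  unfold ekey
  rw [h1, h2]
  have := nv_strictMono h
  omega

/-- the largest element of `TE` in the `ekey` ordering -/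
noncomputable def maxTE (z : V) : V × V :=
  if h : (TE G z).Nonempty then
    Classical.choose (Finset.exists_max_image (TE G z) (ekey G) h)
  else (z, z)

lemma maxTE_mem {z : V} (h : (TE G z).Nonempty) : maxTE G z ∈ TE G z := by
  unfold maxTE
  rw [dif_pos h]
  exact (Classical.choose_spec (Finset.exists_max_image (TE G z) (ekey G) h)).1

lemma maxTE_le {z : V} (h : (TE G z).Nonempty) {e : V × V} (he : e ∈ TE G z) :
    ekey G e ≤ ekey G (maxTE G z) := by
  unfold maxTE
  rw [dif_pos h]
  exact (Classical.choose_spec (Finset.exists_max_image (TE G z) (ekey G) h)).2 e he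

lemma maxTE_spec {z : V} (h : (TE G z).Nonempty) {e : V × V} (he : e ∈ TE G z)
    (hne : e ≠ maxTE G z) : ekey G e < ekey G (maxTE G z) := by
  rcases lt_or_eq_of_le (maxTE_le G h he) with h1 | h1
  · exact h1
  · exact absurd (ekey_inj G h1) hne


set_option linter.unusedSectionVars false

section WithGroup
variable {𝒢 : Type} [AddCommGroup 𝒢] [DecidableEq 𝒢]

/-- the value of `g` on the unordered pair `{u,v}` -/
def geval (g : V × V → 𝒢) (u v : V) : 𝒢 := if u < v then g (u, v) else g (v, u)

lemma geval_comm (g : V × V → 𝒢) (u v : V) : geval g u v = geval g v u := by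
  unfold geval
  rcases lt_trichotomy u v with h | h | h
  · rw [if_pos h, if_neg (not_lt_of_gt h)]
  · subst h; rfl
  · rw [if_neg (not_lt_of_gt h), if_pos h]

/-- the induced weight -/
def wS (g : V × V → 𝒢) (v : V) : 𝒢 := ∑ u ∈ G.neighborFinset v, geval g u v

noncomputable def fbFinal (g : V × V → 𝒢) (e : V × V) : Finset 𝒢 :=
  if IsSink G e.2 ∧ mx G e.2 = e.1 then
    ((G.neighborFinset e.2).erase e.1).image
      (fun u => wS G g u - ∑ u' ∈ (G.neighborFinset e.2).erase e.1, geval g u' e.2)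
  else ∅

noncomputable def fbLast (g : V × V → 𝒢) (e : V × V) : Finset 𝒢 :=
  if e.2 = lastv G e.1 then
    ((EE G e.1) ∪ ((FF G e.1).erase e.2)).image
      (fun u => wS G g u - ∑ u' ∈ (G.neighborFinset e.1).erase e.2, geval g u' e.1)
  else ∅

noncomputable def fbDk (g : V × V → 𝒢) (e : V × V) : Finset 𝒢 :=
  if dcond G e.1 ∧ e.2 = dkv G e.1 then
    { - (∑ u ∈ ((G.neighborFinset e.1).erase (lastv G e.1)).erase e.2, geval g u e.1
         - ∑ u ∈ (G.neighborFinset (lastv G e.1)).erase e.1, geval g u (lastv G e.1)) }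
  else ∅

noncomputable def fbExt (g : V × V → 𝒢) (e : V × V) : Finset 𝒢 :=
  (if crit G e.2 ∧ e = maxTE G e.2 then
     { - (∑ u ∈ (EE G e.2).erase e.1, geval g u e.2
          - ∑ u ∈ (G.neighborFinset (lastv G e.2)).erase e.2, geval g u (lastv G e.2)) }
   else ∅)
  ∪
  (if IsSink G e.2 ∧ crit G (mx G e.2) ∧ lastv G (mx G e.2) = e.2 ∧ e = maxTE G (mx G e.2) then
     { ∑ u ∈ EE G (mx G e.2), geval g u (mx G e.2)
        - ∑ u ∈ ((G.neighborFinset e.2).erase (mx G e.2)).erase e.1, geval g u e.2 }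
   else ∅)

noncomputable def Fb (g : V × V → 𝒢) (e : V × V) : Finset 𝒢 :=
  {0} ∪ fbFinal G g e ∪ fbLast G g e ∪ fbDk G g e ∪ fbExt G g e

end WithGroup

/-! ### structural lemmas -/

lemma mem_EE {z u : V} : u ∈ EE G z ↔ G.Adj z u ∧ u < z := by
  simp [EE, SimpleGraph.mem_neighborFinset]

lemma mem_LL {z u : V} : u ∈ LL G z ↔ G.Adj z u ∧ z < u := by
  simp [LL, SimpleGraph.mem_neighborFinset]

lemma nb_eq_union (z : V) : G.neighborFinset z = EE G z ∪ LL G z := by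
  ext u
  simp only [Finset.mem_union, mem_EE G, mem_LL G, SimpleGraph.mem_neighborFinset]
  constructor
  · intro h
    rcases lt_trichotomy u z with h1 | h1 | h1
    · exact Or.inl ⟨h, h1⟩
    · exact absurd h1 (fun hc => G.irrefl (hc ▸ h))
    · exact Or.inr ⟨h, h1⟩
  · rintro (⟨h, _⟩ | ⟨h, _⟩) <;> exact h

lemma EE_disj_LL (z : V) : Disjoint (EE G z) (LL G z) := by
  rw [Finset.disjoint_left]
  intro u hu hu'
  rw [mem_EE G] at hu; rw [mem_LL G] at hu'
  exact absurd (hu.2.trans hu'.2) (lt_irrefl u)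

lemma sink_iff_LL_empty {x : V} : IsSink G x ↔ LL G x = ∅ := by
  constructor
  · intro h
    rw [Finset.eq_empty_iff_forall_notMem]
    intro u hu
    rw [mem_LL G] at hu
    have := h u (by rw [SimpleGraph.mem_neighborFinset]; exact hu.1)
    exact absurd (this.trans hu.2) (lt_irrefl u)
  · intro h u hu
    rw [SimpleGraph.mem_neighborFinset] at hu
    rcases lt_trichotomy u x with h1 | h1 | h1
    · exact h1
    · exact absurd h1 (fun hc => G.irrefl (hc ▸ hu))
    · exact absurd ((mem_LL G).mpr ⟨hu, h1⟩) (by rw [h]; exact Finset.notMem_empty u)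

lemma sink_EE_eq {x : V} (h : IsSink G x) : EE G x = G.neighborFinset x := by
  rw [nb_eq_union G x, (sink_iff_LL_empty G).mp h, Finset.union_empty]

lemma mx_mem {x : V} (h : (G.neighborFinset x).Nonempty) : mx G x ∈ G.neighborFinset x := by
  unfold mx
  rw [dif_pos h]
  exact Finset.max'_mem _ _

lemma le_mx {x u : V} (hu : u ∈ G.neighborFinset x) : u ≤ mx G x := by
  unfold mx
  rw [dif_pos ⟨u, hu⟩]
  exact Finset.le_max' _ _ hu

lemma mem_FF {z x : V} : x ∈ FF G z ↔ G.Adj z x ∧ z < x ∧ IsSink G x ∧ mx G x = z := by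
  unfold FF
  simp only [Finset.mem_filter, mem_LL G]
  tauto

lemma FF_subset_LL (z : V) : FF G z ⊆ LL G z := Finset.filter_subset _ _

lemma SS_disj_FF (z : V) : Disjoint (SS G z) (FF G z) := Finset.sdiff_disjoint

lemma LL_eq_SS_union_FF (z : V) : LL G z = SS G z ∪ FF G z := by
  unfold SS
  rw [Finset.sdiff_union_of_subset (FF_subset_LL G z)]

lemma lastv_mem {z : V} (h : ¬ IsSink G z) : lastv G z ∈ LL G z := by
  unfold lastv
  have hLL : (LL G z).Nonempty := by
    rw [Finset.nonempty_iff_ne_empty]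
    intro hc
    exact h ((sink_iff_LL_empty G).mpr hc)
  split_ifs with h1 h2
  · exact Finset.sdiff_subset (Finset.max'_mem _ _)
  · exact FF_subset_LL G z (Finset.max'_mem _ _)
  · exfalso
    rw [Finset.not_nonempty_iff_eq_empty] at h1 h2
    rw [LL_eq_SS_union_FF G z, h1, h2] at hLL
    simp at hLL

lemma lt_lastv {z : V} (h : ¬ IsSink G z) : z < lastv G z :=
  ((mem_LL G).mp (lastv_mem G h)).2

lemma adj_lastv {z : V} (h : ¬ IsSink G z) : G.Adj z (lastv G z) :=
  ((mem_LL G).mp (lastv_mem G h)).1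

lemma lastv_SS_max {z : V} (h : (SS G z).Nonempty) {y : V} (hy : y ∈ SS G z) :
    y ≤ lastv G z := by
  unfold lastv
  rw [dif_pos h]
  exact Finset.le_max' _ _ hy

lemma lastv_FF_of_SS_empty {z : V} (hS : SS G z = ∅) (h : ¬ IsSink G z) :
    lastv G z ∈ FF G z ∧ ∀ y ∈ FF G z, y ≤ lastv G z := by
  have hFF : (FF G z).Nonempty := by
    have hm := lastv_mem G h
    rw [LL_eq_SS_union_FF G z, hS, Finset.empty_union] at hm
    exact ⟨_, hm⟩
  unfold lastv
  rw [dif_neg (by rw [hS]; exact fun hc => (Finset.not_nonempty_empty) hc), dif_pos hFF]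
  exact ⟨Finset.max'_mem _ _, fun y hy => Finset.le_max' _ _ hy⟩

lemma dkv_spec {z : V} (h : ((FF G z).erase (lastv G z)).Nonempty) :
    dkv G z ∈ (FF G z).erase (lastv G z) ∧ ∀ y ∈ (FF G z).erase (lastv G z), y ≤ dkv G z := by
  unfold dkv
  rw [dif_pos h]
  exact ⟨Finset.max'_mem _ _, fun y hy => Finset.le_max' _ _ hy⟩

lemma sink_deg {x : V} (h : IsSink G x) {d : ℕ}
    (hback : ∀ v, ((G.neighborFinset v).filter fun u => u < v).card ≤ d) :
    G.degree x ≤ d := by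
  have : (G.neighborFinset x).filter (fun u => u < x) = G.neighborFinset x := by
    apply Finset.filter_true_of_mem
    intro u hu
    exact h u hu
  rw [SimpleGraph.degree, ← this]
  exact hback x

lemma EE_card_le {z : V} {d : ℕ}
    (hback : ∀ v, ((G.neighborFinset v).filter fun u => u < v).card ≤ d) :
    (EE G z).card ≤ d := hback z


lemma mem_ed {e : V × V} : e ∈ ed G ↔ G.Adj e.1 e.2 ∧ e.1 < e.2 := by
  simp [ed]

section Local
variable {𝒢 : Type} [AddCommGroup 𝒢] [DecidableEq 𝒢]
variable {g g' : V × V → 𝒢} {e : V × V}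

lemma geval_local_fst (hag : ∀ e', ekey G e' < ekey G e → g e' = g' e') {a b : V}
    (hm : min a b < e.1) : geval g a b = geval g' a b := by
  unfold geval
  split_ifs with h
  · exact hag _ (ekey_lt_fst G (by
      have h2 : min a b = a := min_eq_left (le_of_lt h)
      rw [h2] at hm; exact hm))
  · exact hag _ (ekey_lt_fst G (by
      have h2 : min a b = b := min_eq_right (not_lt.mp h)
      rw [h2] at hm; exact hm))

omit [Fintype V] [DecidableRel G.Adj] in
lemma geval_lt (g : V × V → 𝒢) {a b : V} (h : a < b) : geval g a b = g (a, b) := by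
  unfold geval; rw [if_pos h]

omit [Fintype V] [DecidableRel G.Adj] in
lemma geval_gt (g : V × V → 𝒢) {a b : V} (h : b < a) : geval g a b = g (b, a) := by
  unfold geval; rw [if_neg (not_lt_of_gt h)]

lemma geval_local_of_key (hag : ∀ e', ekey G e' < ekey G e → g e' = g' e') {a b : V}
    (hab : a < b) (hk : ekey G (a, b) < ekey G e) : geval g a b = geval g' a b := by
  rw [geval_lt g hab, geval_lt g' hab]
  exact hag _ hk

lemma wS_local (hag : ∀ e', ekey G e' < ekey G e → g e' = g' e') {v : V}
    (hv : v < e.1) : wS G g v = wS G g' v := by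
  unfold wS
  exact Finset.sum_congr rfl fun u _ =>
    geval_local_fst G hag (lt_of_le_of_lt (min_le_right u v) hv)

lemma ebit_ne (z x : V) (h : x ≠ lastv G z) : ebit G (z, x) = 0 := by
  unfold ebit; simp [h]

lemma ebit_eq' (z x : V) (h : x = lastv G z) : ebit G (z, x) = 1 := by
  unfold ebit; simp [h]

lemma fbFinal_local (hag : ∀ e', ekey G e' < ekey G e → g e' = g' e') :
    fbFinal G g e = fbFinal G g' e := by
  unfold fbFinal
  split_ifs with h
  · obtain ⟨hsink, hmx⟩ := h
    have hlt : ∀ u ∈ (G.neighborFinset e.2).erase e.1, u < e.1 := by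
      intro u hu
      rw [Finset.mem_erase] at hu
      have h2 := le_mx G hu.2
      rw [hmx] at h2
      exact lt_of_le_of_ne h2 hu.1
    have hC : (∑ u' ∈ (G.neighborFinset e.2).erase e.1, geval g u' e.2) =
        (∑ u' ∈ (G.neighborFinset e.2).erase e.1, geval g' u' e.2) :=
      Finset.sum_congr rfl fun u' hu' =>
        geval_local_fst G hag (lt_of_le_of_lt (min_le_left u' e.2) (hlt u' hu'))
    rw [hC]
    exact Finset.image_congr fun u hu => by
      have hw := wS_local G hag (hlt u hu)
      simp only [hw]
  · rfl

lemma fbLast_local (he : e ∈ ed G) (hag : ∀ e', ekey G e' < ekey G e → g e' = g' e') :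
    fbLast G g e = fbLast G g' e := by
  obtain ⟨hadj, hlt12⟩ := (mem_ed G).mp he
  unfold fbLast
  split_ifs with h
  · have hbit : ebit G e = 1 := by
      have : e = (e.1, e.2) := rfl
      rw [this, ebit_eq' G e.1 e.2 h]
    -- the common sum
    have hP : (∑ u' ∈ (G.neighborFinset e.1).erase e.2, geval g u' e.1) =
        (∑ u' ∈ (G.neighborFinset e.1).erase e.2, geval g' u' e.1) := by
      apply Finset.sum_congr rfl
      intro u' hu'
      rw [Finset.mem_erase, SimpleGraph.mem_neighborFinset] at hu'
      by_cases hc : u' < e.1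
      · exact geval_local_fst G hag (lt_of_le_of_lt (min_le_left u' e.1) hc)
      · have h1 : e.1 < u' := by
          rcases lt_trichotomy u' e.1 with h2 | h2 | h2
          · exact absurd h2 hc
          · exact absurd h2 (fun h3 => G.irrefl (h3 ▸ hu'.2))
          · exact h2
        rw [geval_gt g h1, geval_gt g' h1]
        apply hag
        refine ekey_lt_bit G (e := (e.1, u')) (e' := e) rfl ?_
        rw [ebit_ne G e.1 u' (fun h3 => hu'.1 (h3.trans h.symm)), hbit]
        omega
    rw [hP]
    apply Finset.image_congr
    intro u hu
    rw [Finset.mem_coe, Finset.mem_union] at hu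
    rcases hu with hu | hu
    · have hw := wS_local G hag ((mem_EE G).mp hu).2
      simp only [hw]
    · -- u ∈ FF(e.1) with u ≠ e.2 : a later sink whose edges are all keyed lower
      rw [Finset.mem_erase] at hu
      obtain ⟨hune, huF⟩ := hu
      obtain ⟨huadj, hzu, husink, humx⟩ := (mem_FF G).mp huF
      have hw : wS G g u = wS G g' u := by
        unfold wS
        apply Finset.sum_congr rfl
        intro a ha
        have hau : a < u := husink a ha
        have hale : a ≤ e.1 := by
          have := le_mx G ha
          rwa [humx] at this
        rcases lt_or_eq_of_le hale with h2 | h2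
        · exact geval_local_fst G hag (lt_of_le_of_lt (min_le_left a u) h2)
        · subst h2
          rw [geval_lt g hau, geval_lt g' hau]
          apply hag
          refine ekey_lt_bit G (e := (e.1, u)) (e' := e) rfl ?_
          rw [ebit_ne G e.1 u (fun h3 => hune (h3.trans h.symm)), hbit]
          omega
      simp only [hw]
  · rfl

lemma fbDk_local (he : e ∈ ed G) (hag : ∀ e', ekey G e' < ekey G e → g e' = g' e') :
    fbDk G g e = fbDk G g' e := by
  obtain ⟨hadj, hlt12⟩ := (mem_ed G).mp he
  unfold fbDk
  split_ifs with h
  · obtain ⟨⟨hns, hS, hF2⟩, hdk⟩ := h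
    have hFe : ((FF G e.1).erase (lastv G e.1)).Nonempty := by
      rw [← Finset.card_pos, Finset.card_erase_of_mem]
      · omega
      · exact (lastv_FF_of_SS_empty G hS hns).1
    obtain ⟨hdkmem, hdkmax⟩ := dkv_spec G hFe
    rw [Finset.mem_erase] at hdkmem
    have hdkne : dkv G e.1 ≠ lastv G e.1 := hdkmem.1
    obtain ⟨hlastF, _⟩ := lastv_FF_of_SS_empty G hS hns
    obtain ⟨hladj, hzl, hlsink, hlmx⟩ := (mem_FF G).mp hlastF
    have hbit : ebit G e = 0 := by
      have h0 : e = (e.1, e.2) := rfl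
      rw [h0, ebit_ne G e.1 e.2 (by rw [hdk]; exact hdkne)]
    have hA : (∑ u ∈ ((G.neighborFinset e.1).erase (lastv G e.1)).erase e.2, geval g u e.1) =
        (∑ u ∈ ((G.neighborFinset e.1).erase (lastv G e.1)).erase e.2, geval g' u e.1) := by
      apply Finset.sum_congr rfl
      intro u hu
      rw [Finset.mem_erase, Finset.mem_erase] at hu
      obtain ⟨hue2, hul, hun⟩ := hu
      by_cases hc : u < e.1
      · exact geval_local_fst G hag (lt_of_le_of_lt (min_le_left u e.1) hc)
      · have h1 : e.1 < u := by
          rw [SimpleGraph.mem_neighborFinset] at hun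
          rcases lt_trichotomy u e.1 with h2 | h2 | h2
          · exact absurd h2 hc
          · exact absurd h2 (fun h3 => G.irrefl (h3 ▸ hun))
          · exact h2
        -- u is a later neighbour distinct from lastv and dkv; u ∈ FF, so u < dkv
        have huL : u ∈ LL G e.1 := (mem_LL G).mpr ⟨by rwa [SimpleGraph.mem_neighborFinset] at hun, h1⟩
        have huF : u ∈ FF G e.1 := by
          rw [LL_eq_SS_union_FF G, hS, Finset.empty_union] at huL
          exact huL
        have hudk : u < dkv G e.1 := by
          have := hdkmax u (Finset.mem_erase.mpr ⟨hul, huF⟩)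
          exact lt_of_le_of_ne this (by rw [← hdk]; exact hue2)
        rw [geval_gt g h1, geval_gt g' h1]
        apply hag
        refine ekey_lt_snd G (e := (e.1, u)) (e' := e) rfl ?_ ?_
        · rw [ebit_ne G e.1 u hul, hbit]
        · rw [← hdk] at hudk
          exact hudk
    have hB : (∑ u ∈ (G.neighborFinset (lastv G e.1)).erase e.1, geval g u (lastv G e.1)) =
        (∑ u ∈ (G.neighborFinset (lastv G e.1)).erase e.1, geval g' u (lastv G e.1)) := by
      apply Finset.sum_congr rfl
      intro u hu
      rw [Finset.mem_erase] at hu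
      have h2 : u < e.1 := by
        have := le_mx G hu.2
        rw [hlmx] at this
        exact lt_of_le_of_ne this hu.1
      exact geval_local_fst G hag (lt_of_le_of_lt (min_le_left u _) h2)
    rw [hA, hB]
  · rfl

lemma fbExt_local (he : e ∈ ed G) (hag : ∀ e', ekey G e' < ekey G e → g e' = g' e') :
    fbExt G g e = fbExt G g' e := by
  obtain ⟨hadj, hlt12⟩ := (mem_ed G).mp he
  unfold fbExt
  congr 1
  · split_ifs with h
    · obtain ⟨hcrit, hmax⟩ := h
      obtain ⟨hns, hS, hF1⟩ := hcrit
      have hTEne : (TE G e.2).Nonempty := by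
        by_contra hc
        rw [Finset.not_nonempty_iff_eq_empty] at hc
        unfold maxTE at hmax
        rw [dif_neg (by rw [hc]; exact Finset.not_nonempty_empty)] at hmax
        have : e.1 = e.2 := congrArg Prod.fst hmax
        exact absurd (this ▸ hlt12) (lt_irrefl _)
      obtain ⟨hlastF, _⟩ := lastv_FF_of_SS_empty G hS hns
      obtain ⟨hladj, hzl, hlsink, hlmx⟩ := (mem_FF G).mp hlastF
      have hkey : ∀ e' ∈ TE G e.2, e' ≠ e → g e' = g' e' := by
        intro e' he' hne
        apply hag
        rw [hmax]
        exact maxTE_spec G hTEne he' (by rwa [← hmax])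
      have hA : (∑ u ∈ (EE G e.2).erase e.1, geval g u e.2) =
          (∑ u ∈ (EE G e.2).erase e.1, geval g' u e.2) := by
        apply Finset.sum_congr rfl
        intro u hu
        rw [Finset.mem_erase] at hu
        have huE := hu.2
        have hue2 : u < e.2 := ((mem_EE G).mp huE).2
        rw [geval_lt g hue2, geval_lt g' hue2]
        apply hkey
        · unfold TE
          rw [Finset.mem_union]
          exact Or.inl (Finset.mem_image_of_mem _ huE)
        · intro hc
          exact hu.1 (congrArg Prod.fst hc)
      have hB : (∑ u ∈ (G.neighborFinset (lastv G e.2)).erase e.2, geval g u (lastv G e.2)) =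
          (∑ u ∈ (G.neighborFinset (lastv G e.2)).erase e.2, geval g' u (lastv G e.2)) := by
        apply Finset.sum_congr rfl
        intro u hu
        rw [Finset.mem_erase] at hu
        have hul : u < lastv G e.2 := hlsink u hu.2
        rw [geval_lt g hul, geval_lt g' hul]
        apply hkey
        · unfold TE
          rw [Finset.mem_union]
          exact Or.inr (Finset.mem_image_of_mem _ (Finset.mem_erase.mpr hu))
        · intro hc
          have : lastv G e.2 = e.2 := congrArg Prod.snd hc
          exact absurd (this ▸ hzl) (lt_irrefl _)
      rw [hA, hB]
    · rfl
  · split_ifs with h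
    · obtain ⟨hsink, hcrit, hlast, hmax⟩ := h
      obtain ⟨hns, hS, hF1⟩ := hcrit
      set o := mx G e.2 with ho
      have hTEne : (TE G o).Nonempty := by
        by_contra hc
        rw [Finset.not_nonempty_iff_eq_empty] at hc
        unfold maxTE at hmax
        rw [dif_neg (by rw [hc]; exact Finset.not_nonempty_empty)] at hmax
        have : e.1 = e.2 := (congrArg Prod.fst hmax).trans (congrArg Prod.snd hmax).symm
        exact absurd (this ▸ hlt12) (lt_irrefl _)
      have hoe2 : o ≠ e.2 := by
        intro hc
        rw [← hc] at hsink
        exact hns hsink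
      have hkey : ∀ e' ∈ TE G o, e' ≠ e → g e' = g' e' := by
        intro e' he' hne
        apply hag
        rw [hmax]
        exact maxTE_spec G hTEne he' (by rwa [← hmax])
      have hA : (∑ u ∈ EE G o, geval g u o) = (∑ u ∈ EE G o, geval g' u o) := by
        apply Finset.sum_congr rfl
        intro u hu
        have huo : u < o := ((mem_EE G).mp hu).2
        rw [geval_lt g huo, geval_lt g' huo]
        apply hkey
        · unfold TE
          rw [Finset.mem_union]
          exact Or.inl (Finset.mem_image_of_mem _ hu)
        · intro hc
          have h2 : o = e.2 := congrArg Prod.snd hc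
          exact hoe2 h2
      have hB : (∑ u ∈ ((G.neighborFinset e.2).erase o).erase e.1, geval g u e.2) =
          (∑ u ∈ ((G.neighborFinset e.2).erase o).erase e.1, geval g' u e.2) := by
        apply Finset.sum_congr rfl
        intro u hu
        rw [Finset.mem_erase, Finset.mem_erase] at hu
        obtain ⟨hu1, hu2, hu3⟩ := hu
        have hue2 : u < e.2 := hsink u hu3
        rw [geval_lt g hue2, geval_lt g' hue2]
        apply hkey
        · unfold TE
          rw [Finset.mem_union]
          refine Or.inr (Finset.mem_image.mpr ⟨u, ?_, ?_⟩)
          · rw [hlast]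
            exact Finset.mem_erase.mpr ⟨hu2, hu3⟩
          · rw [hlast]
        · intro hc
          exact hu1 (congrArg Prod.fst hc)
      rw [hA, hB]
    · rfl

lemma Fb_local (he : e ∈ ed G) (hag : ∀ e', ekey G e' < ekey G e → g e' = g' e') :
    Fb G g e = Fb G g' e := by
  unfold Fb
  rw [fbFinal_local G hag, fbLast_local G he hag, fbDk_local G he hag, fbExt_local G he hag]

end Local

section Card
variable {𝒢 : Type} [AddCommGroup 𝒢] [DecidableEq 𝒢]
variable {g : V × V → 𝒢} {e : V × V} {d : ℕ}

lemma fbFinal_card (he : e ∈ ed G) (hP : IsSink G e.2)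
    (hback : ∀ v, ((G.neighborFinset v).filter fun u => u < v).card ≤ d) :
    (fbFinal G g e).card ≤ d - 1 := by
  obtain ⟨hadj, hlt12⟩ := (mem_ed G).mp he
  have hm : e.1 ∈ G.neighborFinset e.2 := by
    rw [SimpleGraph.mem_neighborFinset]; exact hadj.symm
  unfold fbFinal
  split_ifs with h
  · calc _ ≤ ((G.neighborFinset e.2).erase e.1).card := Finset.card_image_le
      _ = (G.neighborFinset e.2).card - 1 := Finset.card_erase_of_mem hm
      _ ≤ d - 1 := by
          have := sink_deg G hP hback
          rw [SimpleGraph.degree] at this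
          omega
  · simp

lemma fbFinal_empty (hP : ¬ (IsSink G e.2 ∧ mx G e.2 = e.1)) : fbFinal G g e = ∅ := by
  unfold fbFinal
  rw [if_neg hP]

lemma fbLast_card (he : e ∈ ed G) : (fbLast G g e).card ≤ G.degree e.1 - 1 := by
  obtain ⟨hadj, hlt12⟩ := (mem_ed G).mp he
  unfold fbLast
  split_ifs with h
  · have hsub : EE G e.1 ∪ (FF G e.1).erase e.2 ⊆ (G.neighborFinset e.1).erase e.2 := by
      intro u hu
      rw [Finset.mem_union] at hu
      rw [Finset.mem_erase]
      rcases hu with hu | hu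
      · obtain ⟨h1, h2⟩ := (mem_EE G).mp hu
        exact ⟨fun hc => absurd (hc ▸ h2) (not_lt_of_gt (hc ▸ hlt12)), by
          rw [SimpleGraph.mem_neighborFinset]; exact h1⟩
      · rw [Finset.mem_erase] at hu
        obtain ⟨h1, h2⟩ := hu
        refine ⟨h1, ?_⟩
        rw [SimpleGraph.mem_neighborFinset]
        exact ((mem_FF G).mp h2).1
    have hmem : e.2 ∈ G.neighborFinset e.1 := by
      rw [SimpleGraph.mem_neighborFinset]; exact hadj
    calc _ ≤ (EE G e.1 ∪ (FF G e.1).erase e.2).card := Finset.card_image_le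
      _ ≤ ((G.neighborFinset e.1).erase e.2).card := Finset.card_le_card hsub
      _ = G.degree e.1 - 1 := by rw [Finset.card_erase_of_mem hmem, SimpleGraph.degree]
  · simp

lemma fbLast_empty (hP : ¬ e.2 = lastv G e.1) : fbLast G g e = ∅ := by
  unfold fbLast
  rw [if_neg hP]

lemma fbDk_card : (fbDk G g e).card ≤ 1 := by
  unfold fbDk
  split_ifs with h
  · simp
  · simp

lemma dk_implies_final (h : dcond G e.1 ∧ e.2 = dkv G e.1) :
    (IsSink G e.2 ∧ mx G e.2 = e.1) ∧ e.2 ≠ lastv G e.1 := by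
  obtain ⟨⟨hns, hS, hF2⟩, hdk⟩ := h
  have hFe : ((FF G e.1).erase (lastv G e.1)).Nonempty := by
    rw [← Finset.card_pos, Finset.card_erase_of_mem (lastv_FF_of_SS_empty G hS hns).1]
    omega
  obtain ⟨hdkmem, _⟩ := dkv_spec G hFe
  rw [Finset.mem_erase] at hdkmem
  obtain ⟨hne, hF⟩ := hdkmem
  obtain ⟨_, _, hsink, hmx⟩ := (mem_FF G).mp hF
  exact ⟨⟨hdk ▸ hsink, hdk ▸ hmx⟩, hdk ▸ hne⟩

lemma fbDk_empty (hP : ¬ (dcond G e.1 ∧ e.2 = dkv G e.1)) : fbDk G g e = ∅ := by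
  unfold fbDk
  rw [if_neg hP]

lemma crit_elim {z : V} (h : crit G z) :
    ¬ IsSink G z ∧ SS G z = ∅ ∧ (FF G z).card = 1 := h

lemma fbExt_card : (fbExt G g e).card ≤ 1 := by
  unfold fbExt
  split_ifs with h1 h2 h2
  · exact absurd h2.1 (crit_elim G h1.1).1
  · simp
  · simp
  · simp

/-- In case final ∧ last, fbExt vanishes -/
lemma fbExt_empty_of_final_last (he : e ∈ ed G)
    (hPf : IsSink G e.2 ∧ mx G e.2 = e.1) : fbExt G g e = ∅ := by
  obtain ⟨hadj, hlt12⟩ := (mem_ed G).mp he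
  unfold fbExt
  rw [if_neg (fun hc => hc.1.1 hPf.1), Finset.empty_union]
  split_ifs with h
  · exfalso
    obtain ⟨hsink, hcrit, hlast, hmax⟩ := h
    rw [hPf.2] at hlast hmax
    -- e = maxTE e.1, but e ∉ TE e.1
    have hTEne : (TE G e.1).Nonempty := by
      by_contra hc
      rw [Finset.not_nonempty_iff_eq_empty] at hc
      unfold maxTE at hmax
      rw [dif_neg (by rw [hc]; exact Finset.not_nonempty_empty)] at hmax
      have h2 : e.1 = e.2 := (congrArg Prod.snd hmax).symm
      exact absurd (h2 ▸ hlt12) (lt_irrefl _)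
    have := maxTE_mem G hTEne
    rw [← hmax] at this
    unfold TE at this
    rw [Finset.mem_union] at this
    rcases this with h2 | h2
    · obtain ⟨u, hu, h3⟩ := Finset.mem_image.mp h2
      have : e.2 = e.1 := (congrArg Prod.snd h3).symm
      exact absurd (this ▸ hlt12) (lt_irrefl _)
    · obtain ⟨u, hu, h3⟩ := Finset.mem_image.mp h2
      rw [Finset.mem_erase] at hu
      have : u = e.1 := congrArg Prod.fst h3
      rw [hlast] at hu
      exact hu.1 this
  · rfl

lemma dcond_not_of_final_last (hPf : IsSink G e.2 ∧ mx G e.2 = e.1)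
    (hPl : e.2 = lastv G e.1) : ¬ (dcond G e.1 ∧ e.2 = dkv G e.1) := by
  intro hc
  exact (dk_implies_final G hc).2 hPl

/-- d = 1 special case : the ext set consists of 0 only -/
lemma fbExt_sub_zero (he : e ∈ ed G) (hd1 : d = 1)
    (hback : ∀ v, ((G.neighborFinset v).filter fun u => u < v).card ≤ d)
    (hPf : ¬ (IsSink G e.2 ∧ mx G e.2 = e.1)) :
    fbExt G g e ⊆ {(0 : 𝒢)} := by
  obtain ⟨hadj, hlt12⟩ := (mem_ed G).mp he
  unfold fbExt
  apply Finset.union_subset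
  · split_ifs with h
    · obtain ⟨hcrit, hmax⟩ := h
      obtain ⟨hns, hS, hF1⟩ := hcrit
      have hTEne : (TE G e.2).Nonempty := by
        by_contra hc
        rw [Finset.not_nonempty_iff_eq_empty] at hc
        unfold maxTE at hmax
        rw [dif_neg (by rw [hc]; exact Finset.not_nonempty_empty)] at hmax
        exact absurd ((congrArg Prod.fst hmax) ▸ hlt12) (by
          rw [show (e.2, e.2).1 = e.2 from rfl]
          exact lt_irrefl e.2)
      -- e ∈ TE e.2 : must be in the first part, so e.1 ∈ EE e.2
      have hmem := maxTE_mem G hTEne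
      rw [← hmax] at hmem
      unfold TE at hmem
      rw [Finset.mem_union] at hmem
      obtain ⟨hlastF, _⟩ := lastv_FF_of_SS_empty G hS hns
      obtain ⟨hladj, hzl, hlsink, hlmx⟩ := (mem_FF G).mp hlastF
      have h1 : e.1 ∈ EE G e.2 := by
        rcases hmem with h2 | h2
        · obtain ⟨u, hu, h3⟩ := Finset.mem_image.mp h2
          have h4 : u = e.1 := congrArg Prod.fst h3
          exact h4 ▸ hu
        · exfalso
          obtain ⟨u, hu, h3⟩ := Finset.mem_image.mp h2
          have h4 : lastv G e.2 = e.2 := congrArg Prod.snd h3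
          exact absurd (h4 ▸ hzl) (lt_irrefl _)
      -- EE e.2 = {e.1}
      have hEE : EE G e.2 = {e.1} := by
        apply Finset.eq_singleton_iff_unique_mem.mpr
        refine ⟨h1, ?_⟩
        intro u hu
        by_contra hne
        have h2 : 2 ≤ (EE G e.2).card := Finset.one_lt_card.mpr ⟨u, hu, e.1, h1, hne⟩
        have h3 := EE_card_le G (z := e.2) hback
        omega
      -- N (lastv e.2) = {e.2}
      have hNl : G.neighborFinset (lastv G e.2) = {e.2} := by
        have hm : e.2 ∈ G.neighborFinset (lastv G e.2) := by
          rw [SimpleGraph.mem_neighborFinset]; exact hladj.symm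
        apply Finset.eq_singleton_iff_unique_mem.mpr
        refine ⟨hm, ?_⟩
        intro u hu
        by_contra hne
        have h2 : 2 ≤ (G.neighborFinset (lastv G e.2)).card :=
          Finset.one_lt_card.mpr ⟨u, hu, e.2, hm, hne⟩
        have h3 := sink_deg G hlsink hback
        rw [SimpleGraph.degree] at h3
        omega
      rw [hEE, hNl]
      simp
    · simp
  · split_ifs with h
    · exfalso
      obtain ⟨hsink, hcrit, hlast, hmax⟩ := h
      set o := mx G e.2 with ho
      have hne2 : (G.neighborFinset e.2).Nonempty := ⟨e.1, by
        rw [SimpleGraph.mem_neighborFinset]; exact hadj.symm⟩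
      have homem : o ∈ G.neighborFinset e.2 := mx_mem G hne2
      have hoe1 : o ≠ e.1 := fun hc => hPf ⟨hsink, hc⟩
      have h2 : 2 ≤ (G.neighborFinset e.2).card := Finset.one_lt_card.mpr
        ⟨o, homem, e.1, by rw [SimpleGraph.mem_neighborFinset]; exact hadj.symm, hoe1⟩
      have h3 := sink_deg G hsink hback
      rw [SimpleGraph.degree] at h3
      omega
    · simp

lemma Fb_card_le (hd1 : 1 ≤ d)
    (hback : ∀ v, ((G.neighborFinset v).filter fun u => u < v).card ≤ d)
    (hD2 : 2 ≤ G.maxDegree) (he : e ∈ ed G) :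
    (Fb G g e).card ≤ G.maxDegree + d - 1 := by
  obtain ⟨hadj, hlt12⟩ := (mem_ed G).mp he
  have hdeg1 : 1 ≤ G.degree e.1 := by
    rw [SimpleGraph.degree]
    exact Finset.card_pos.mpr ⟨e.2, by rw [SimpleGraph.mem_neighborFinset]; exact hadj⟩
  have hdegΔ : G.degree e.1 ≤ G.maxDegree := G.degree_le_maxDegree e.1
  have hchain : ∀ (A B C D E : Finset 𝒢),
      (A ∪ B ∪ C ∪ D ∪ E).card ≤ A.card + B.card + C.card + D.card + E.card := by
    intro A B C D E
    calc (A ∪ B ∪ C ∪ D ∪ E).card ≤ (A ∪ B ∪ C ∪ D).card + E.card := Finset.card_union_le _ _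
      _ ≤ (A ∪ B ∪ C).card + D.card + E.card := by
          have := Finset.card_union_le (A ∪ B ∪ C) D; omega
      _ ≤ (A ∪ B).card + C.card + D.card + E.card := by
          have := Finset.card_union_le (A ∪ B) C; omega
      _ ≤ A.card + B.card + C.card + D.card + E.card := by
          have := Finset.card_union_le A B; omega
  by_cases hPf : IsSink G e.2 ∧ mx G e.2 = e.1
  · by_cases hPl : e.2 = lastv G e.1
    · -- final ∧ last
      have h1 := fbFinal_card (g := g) G he hPf.1 hback
      have h2 := fbLast_card (g := g) G he
      have h3 : fbDk G g e = ∅ := fbDk_empty G (dcond_not_of_final_last G hPf hPl)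
      have h4 : fbExt G g e = ∅ := fbExt_empty_of_final_last G he hPf
      have h5 := hchain {0} (fbFinal G g e) (fbLast G g e) (fbDk G g e) (fbExt G g e)
      unfold Fb
      rw [h3, h4] at h5 ⊢
      simp only [Finset.card_empty, Finset.card_singleton] at h5
      omega
    · -- final, not last
      have h1 := fbFinal_card (g := g) G he hPf.1 hback
      have h2 : fbLast G g e = ∅ := fbLast_empty G hPl
      have h3 := fbDk_card (g := g) G (e := e)
      have h4 : fbExt G g e = ∅ := by
        unfold fbExt
        rw [if_neg (fun hc => hc.1.1 hPf.1), Finset.empty_union]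
        rw [if_neg]
        rintro ⟨hsink, hcrit, hlast, hmax⟩
        rw [hPf.2] at hlast
        exact hPl hlast.symm
      have h5 := hchain {0} (fbFinal G g e) (fbLast G g e) (fbDk G g e) (fbExt G g e)
      unfold Fb
      rw [h2, h4] at h5 ⊢
      simp only [Finset.card_empty, Finset.card_singleton] at h5
      omega
  · -- not final
    have h1 : fbFinal G g e = ∅ := fbFinal_empty G hPf
    have h3 : fbDk G g e = ∅ := by
      apply fbDk_empty
      intro hc
      exact hPf (dk_implies_final G hc).1
    by_cases hPl : e.2 = lastv G e.1
    · by_cases hd2 : 2 ≤ d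
      · have h2 := fbLast_card (g := g) G he
        have h4 := fbExt_card (g := g) G (e := e)
        have h5 := hchain {0} (fbFinal G g e) (fbLast G g e) (fbDk G g e) (fbExt G g e)
        unfold Fb
        rw [h1, h3] at h5 ⊢
        simp only [Finset.card_empty, Finset.card_singleton] at h5
        omega
      · -- d = 1 : ext ⊆ {0}
        have hd1' : d = 1 := by omega
        have h2 := fbLast_card (g := g) G he
        have h4 : fbExt G g e ⊆ {(0:𝒢)} := fbExt_sub_zero G he hd1' hback hPf
        have hsub : Fb G g e ⊆ {(0:𝒢)} ∪ fbLast G g e := by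
          unfold Fb
          rw [h1, h3]
          intro x hx
          simp only [Finset.mem_union, Finset.union_empty, Finset.empty_union,
            Finset.union_assoc] at hx ⊢
          rcases hx with hx | hx | hx
          · exact Or.inl hx
          · exact Or.inr hx
          · exact Or.inl (h4 hx)
        calc (Fb G g e).card ≤ ({(0:𝒢)} ∪ fbLast G g e).card := Finset.card_le_card hsub
          _ ≤ 1 + (fbLast G g e).card := by
              have := Finset.card_union_le ({(0:𝒢)} : Finset 𝒢) (fbLast G g e)
              simpa using this
          _ ≤ G.maxDegree + d - 1 := by omega
    · have h2 : fbLast G g e = ∅ := fbLast_empty G hPl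
      have h4 := fbExt_card (g := g) G (e := e)
      have h5 := hchain {0} (fbFinal G g e) (fbLast G g e) (fbDk G g e) (fbExt G g e)
      unfold Fb
      rw [h1, h2, h3] at h5 ⊢
      simp only [Finset.card_empty, Finset.card_singleton] at h5
      omega

end Card

section Verify
variable {𝒢 : Type} [AddCommGroup 𝒢] [DecidableEq 𝒢]
variable {g : V × V → 𝒢}

lemma Fb_parts {e : V × V} (h : g e ∉ Fb G g e) :
    g e ≠ 0 ∧ g e ∉ fbFinal G g e ∧ g e ∉ fbLast G g e ∧ g e ∉ fbDk G g e ∧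
      g e ∉ fbExt G g e := by
  unfold Fb at h
  simp only [Finset.mem_union, Finset.mem_singleton, not_or] at h
  tauto

lemma wS_ne
    (hdeg1 : ∀ v : V, (G.neighborFinset v).Nonempty)
    (hK2 : ∀ u v : V, G.Adj u v → 2 ≤ G.degree u ∨ 2 ≤ G.degree v)
    (hg : ∀ e ∈ ed G, g e ∉ Fb G g e)
    {u v : V} (hadj : G.Adj u v) (huv : u < v) : wS G g u ≠ wS G g v := by
  have hvNu : v ∈ G.neighborFinset u := by rw [SimpleGraph.mem_neighborFinset]; exact hadj
  have huNv : u ∈ G.neighborFinset v := by rw [SimpleGraph.mem_neighborFinset]; exact hadj.symm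
  by_cases hsv : IsSink G v
  · -- v is a sink
    have hzNv : mx G v ∈ G.neighborFinset v := mx_mem G (hdeg1 v)
    have hzv : mx G v < v := hsv _ hzNv
    have hadjvz : G.Adj v (mx G v) := by rwa [SimpleGraph.mem_neighborFinset] at hzNv
    have huz : u ≤ mx G v := le_mx G huNv
    by_cases huz' : u = mx G v
    · -- u is the largest neighbour of the sink v
      have hmxv : mx G v = u := huz'.symm
      have hvF : v ∈ FF G u := (mem_FF G).mpr ⟨hadj, huv, hsv, hmxv⟩
      have hnsu : ¬ IsSink G u := fun hc => absurd (hc v hvNu) (not_lt_of_gt huv)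
      by_cases hvl : v = lastv G u
      · -- v = lastv u
        have hS : SS G u = ∅ := by
          by_contra hne
          rw [← Ne, ← Finset.nonempty_iff_ne_empty] at hne
          have h1 : lastv G u ∈ SS G u := by
            unfold lastv
            rw [dif_pos hne]
            exact Finset.max'_mem _ _
          rw [← hvl] at h1
          exact absurd hvF (Finset.disjoint_left.mp (SS_disj_FF G u) h1)
        -- common decomposition of wS v
        have hw2 : wS G g v =
            (∑ x ∈ (G.neighborFinset v).erase u, geval g x v) + geval g u v :=
          (Finset.sum_erase_add _ _ huNv).symm
        by_cases hF2 : 2 ≤ (FF G u).card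
        · -- dk-kill case
          have hdc : dcond G u := ⟨hnsu, hS, hF2⟩
          have hFe : ((FF G u).erase (lastv G u)).Nonempty := by
            rw [← Finset.card_pos, Finset.card_erase_of_mem (lastv_FF_of_SS_empty G hS hnsu).1]
            omega
          obtain ⟨hdkm, _⟩ := dkv_spec G hFe
          rw [Finset.mem_erase] at hdkm
          obtain ⟨hdkne, hdkF⟩ := hdkm
          obtain ⟨hdkadj, hudk, hdksink, hdkmx⟩ := (mem_FF G).mp hdkF
          have hedk : ((u, dkv G u) : V × V) ∈ ed G := (mem_ed G).mpr ⟨hdkadj, hudk⟩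
          have hnot := (Fb_parts G (hg _ hedk)).2.2.2.1
          have hfb : fbDk G g (u, dkv G u) =
              { - (∑ x ∈ ((G.neighborFinset u).erase (lastv G u)).erase (dkv G u), geval g x u
                   - ∑ x ∈ (G.neighborFinset (lastv G u)).erase u, geval g x (lastv G u)) } := by
            unfold fbDk
            rw [if_pos ⟨hdc, rfl⟩]
          rw [hfb, Finset.mem_singleton, ← hvl] at hnot
          have hdkNu : dkv G u ∈ (G.neighborFinset u).erase v := by
            rw [Finset.mem_erase, hvl]
            exact ⟨hdkne, by rw [SimpleGraph.mem_neighborFinset]; exact hdkadj⟩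
          have hw1 : wS G g u =
              (∑ x ∈ ((G.neighborFinset u).erase v).erase (dkv G u), geval g x u)
              + g (u, dkv G u) + geval g v u := by
            have s1 : (∑ x ∈ ((G.neighborFinset u).erase v).erase (dkv G u), geval g x u)
                + geval g (dkv G u) u
                = ∑ x ∈ (G.neighborFinset u).erase v, geval g x u :=
              Finset.sum_erase_add _ _ hdkNu
            have s2 : (∑ x ∈ (G.neighborFinset u).erase v, geval g x u)
                + geval g v u = wS G g u :=
              Finset.sum_erase_add _ _ hvNu
            rw [← s2, ← s1, geval_gt g hudk]
          intro heq
          apply hnot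
          rw [hw1, hw2, geval_comm g v u] at heq
          have heq2 := add_right_cancel heq
          rw [neg_sub]
          exact eq_sub_of_add_eq' heq2
        · -- crit case
          have hF1 : (FF G u).card = 1 := by
            have : 0 < (FF G u).card := Finset.card_pos.mpr ⟨v, hvF⟩
            omega
          have hcr : crit G u := ⟨hnsu, hS, hF1⟩
          have hFsing : FF G u = {v} := by
            obtain ⟨a, ha⟩ := Finset.card_eq_one.mp hF1
            rw [ha] at hvF ⊢
            rw [Finset.mem_singleton] at hvF
            rw [hvF]
          have hLL : LL G u = {v} := by
            rw [LL_eq_SS_union_FF G, hS, hFsing, Finset.empty_union]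
          have hw1 : wS G g u = (∑ x ∈ EE G u, geval g x u) + geval g v u := by
            unfold wS
            rw [nb_eq_union G u, Finset.sum_union (EE_disj_LL G u), hLL,
              Finset.sum_singleton]
          have hTEne : (TE G u).Nonempty := by
            by_contra hc
            rw [Finset.not_nonempty_iff_eq_empty] at hc
            unfold TE at hc
            rw [Finset.union_eq_empty] at hc
            obtain ⟨hc1, hc2⟩ := hc
            rw [Finset.image_eq_empty] at hc1 hc2
            have hdu : G.degree u = 1 := by
              rw [SimpleGraph.degree, nb_eq_union G u, hc1, hLL, Finset.empty_union,
                Finset.card_singleton]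
            have hdv : G.degree v = 1 := by
              rw [SimpleGraph.degree]
              have h7 : G.neighborFinset v = {u} := by
                rw [← hvl] at hc2
                have h5 : G.neighborFinset v ⊆ {u} := by
                  intro a ha
                  by_contra hne
                  rw [Finset.mem_singleton] at hne
                  have h6 : a ∈ (G.neighborFinset v).erase u := Finset.mem_erase.mpr ⟨hne, ha⟩
                  rw [hc2] at h6
                  exact Finset.notMem_empty a h6
                exact Finset.eq_singleton_iff_unique_mem.mpr
                  ⟨huNv, fun a ha => Finset.mem_singleton.mp (h5 ha)⟩
              rw [h7, Finset.card_singleton]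
            rcases hK2 u v hadj with h6 | h6 <;> omega
          have hem := maxTE_mem G hTEne
          unfold TE at hem
          rw [Finset.mem_union] at hem
          rcases hem with hem | hem
          · -- the max edge is (a, u) with a ∈ EE u
            obtain ⟨a, haE, haeq⟩ := Finset.mem_image.mp hem
            obtain ⟨hauadj, hau⟩ := (mem_EE G).mp haE
            have hedm : ((a, u) : V × V) ∈ ed G := (mem_ed G).mpr ⟨hauadj.symm, hau⟩
            have hmax : ((a, u) : V × V) = maxTE G u := haeq
            have hnot := (Fb_parts G (hg _ hedm)).2.2.2.2
            have hsub : ({ - (∑ x ∈ (EE G u).erase a, geval g x u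
                - ∑ x ∈ (G.neighborFinset (lastv G u)).erase u, geval g x (lastv G u)) }
                  : Finset 𝒢) ⊆ fbExt G g (a, u) := by
              unfold fbExt
              refine Finset.Subset.trans ?_ Finset.subset_union_left
              rw [if_pos ⟨hcr, hmax⟩]
            intro heq
            apply hnot
            apply hsub
            rw [Finset.mem_singleton, ← hvl, neg_sub]
            have h8 : (∑ x ∈ (EE G u).erase a, geval g x u) + g (a, u)
                = ∑ x ∈ EE G u, geval g x u := by
              rw [← geval_lt g hau]
              exact Finset.sum_erase_add _ _ haE
            rw [hw1, hw2, geval_comm g v u] at heq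
            have heq2 := add_right_cancel heq
            apply eq_sub_of_add_eq'
            rw [h8]
            exact heq2
          · -- the max edge is (a, v) with a ∈ (N v).erase u
            obtain ⟨a, haN, haeq⟩ := Finset.mem_image.mp hem
            rw [← hvl] at haN
            rw [Finset.mem_erase] at haN
            obtain ⟨hane, haNv⟩ := haN
            have haadj : G.Adj a v := by
              rw [SimpleGraph.mem_neighborFinset] at haNv
              exact haNv.symm
            have hav : a < v := hsv a haNv
            have hedm : ((a, v) : V × V) ∈ ed G := (mem_ed G).mpr ⟨haadj, hav⟩
            have hmax : ((a, v) : V × V) = maxTE G u := by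
              rw [← haeq, ← hvl]
            have hnot := (Fb_parts G (hg _ hedm)).2.2.2.2
            have hsub : ({ ∑ x ∈ EE G (mx G v), geval g x (mx G v)
                - ∑ x ∈ ((G.neighborFinset v).erase (mx G v)).erase a, geval g x v }
                  : Finset 𝒢) ⊆ fbExt G g (a, v) := by
              unfold fbExt
              refine Finset.Subset.trans ?_ Finset.subset_union_right
              rw [if_pos]
              refine ⟨hsv, ?_, ?_, ?_⟩
              · rw [show ((a, v) : V × V).2 = v from rfl, hmxv]
                exact hcr
              · rw [show ((a, v) : V × V).2 = v from rfl, hmxv]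
                exact hvl.symm
              · rw [show ((a, v) : V × V).2 = v from rfl, hmxv]
                exact hmax
            intro heq
            apply hnot
            apply hsub
            rw [Finset.mem_singleton, hmxv]
            have haN2 : a ∈ (G.neighborFinset v).erase u := Finset.mem_erase.mpr ⟨hane, haNv⟩
            have h8 : (∑ x ∈ ((G.neighborFinset v).erase u).erase a, geval g x v) + g (a, v)
                = ∑ x ∈ (G.neighborFinset v).erase u, geval g x v := by
              rw [← geval_lt g hav]
              exact Finset.sum_erase_add _ _ haN2
            rw [hw1, hw2, geval_comm g v u] at heq
            have heq2 := add_right_cancel heq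
            apply eq_sub_of_add_eq'
            rw [h8]
            exact heq2.symm
      · -- v ≠ lastv u : covered by the last-edge constraint at u
        have hel : ((u, lastv G u) : V × V) ∈ ed G :=
          (mem_ed G).mpr ⟨adj_lastv G hnsu, lt_lastv G hnsu⟩
        have hnot := (Fb_parts G (hg _ hel)).2.2.1
        have hfb : fbLast G g (u, lastv G u) =
            ((EE G u) ∪ ((FF G u).erase (lastv G u))).image
              (fun x => wS G g x - ∑ x' ∈ (G.neighborFinset u).erase (lastv G u),
                geval g x' u) := by
          unfold fbLast
          rw [if_pos rfl]
        rw [hfb] at hnot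
        have hvm : v ∈ EE G u ∪ (FF G u).erase (lastv G u) :=
          Finset.mem_union_right _ (Finset.mem_erase.mpr ⟨hvl, hvF⟩)
        intro heq
        apply hnot
        apply Finset.mem_image.mpr
        refine ⟨v, hvm, ?_⟩
        have hw1 : wS G g u =
            (∑ x' ∈ (G.neighborFinset u).erase (lastv G u), geval g x' u)
            + g (u, lastv G u) := by
          rw [← geval_gt g (lt_lastv G hnsu)]
          apply (Finset.sum_erase_add _ _ _).symm
          rw [SimpleGraph.mem_neighborFinset]
          exact adj_lastv G hnsu
        rw [← heq, hw1]
        exact add_sub_cancel_left _ _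
    · -- u ≠ mx v : the final-edge constraint at (mx v, v)
      have hef : ((mx G v, v) : V × V) ∈ ed G := (mem_ed G).mpr ⟨hadjvz.symm, hzv⟩
      have hnot := (Fb_parts G (hg _ hef)).2.1
      have hfb : fbFinal G g (mx G v, v) =
          ((G.neighborFinset v).erase (mx G v)).image
            (fun x => wS G g x - ∑ x' ∈ (G.neighborFinset v).erase (mx G v), geval g x' v) := by
        unfold fbFinal
        rw [if_pos ⟨hsv, rfl⟩]
      rw [hfb] at hnot
      intro heq
      apply hnot
      apply Finset.mem_image.mpr
      refine ⟨u, Finset.mem_erase.mpr ⟨huz', huNv⟩, ?_⟩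
      have hw2 : wS G g v =
          (∑ x' ∈ (G.neighborFinset v).erase (mx G v), geval g x' v) + g (mx G v, v) := by
        rw [← geval_lt g hzv]
        exact (Finset.sum_erase_add _ _ hzNv).symm
      rw [heq, hw2]
      exact add_sub_cancel_left _ _
  · -- v not a sink : last-edge constraint at v, u earlier neighbour
    have hel : ((v, lastv G v) : V × V) ∈ ed G :=
      (mem_ed G).mpr ⟨adj_lastv G hsv, lt_lastv G hsv⟩
    have hnot := (Fb_parts G (hg _ hel)).2.2.1
    have hfb : fbLast G g (v, lastv G v) =
        ((EE G v) ∪ ((FF G v).erase (lastv G v))).image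
          (fun x => wS G g x - ∑ x' ∈ (G.neighborFinset v).erase (lastv G v),
            geval g x' v) := by
      unfold fbLast
      rw [if_pos rfl]
    rw [hfb] at hnot
    have hum : u ∈ EE G v ∪ (FF G v).erase (lastv G v) :=
      Finset.mem_union_left _ ((mem_EE G).mpr ⟨hadj.symm, huv⟩)
    intro heq
    apply hnot
    apply Finset.mem_image.mpr
    refine ⟨u, hum, ?_⟩
    have hw1 : wS G g v =
        (∑ x' ∈ (G.neighborFinset v).erase (lastv G v), geval g x' v)
        + g (v, lastv G v) := by
      rw [← geval_gt g (lt_lastv G hsv)]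
      apply (Finset.sum_erase_add _ _ _).symm
      rw [SimpleGraph.mem_neighborFinset]
      exact adj_lastv G hsv
    rw [heq, hw1]
    exact add_sub_cancel_left _ _

end Verify

theorem main_con (d : ℕ) (hd1 : 1 ≤ d)
    (hback : ∀ v, ((G.neighborFinset v).filter fun u => u < v).card ≤ d)
    (hdeg1 : ∀ v : V, (G.neighborFinset v).Nonempty)
    (hK2 : ∀ u v : V, G.Adj u v → 2 ≤ G.degree u ∨ 2 ≤ G.degree v)
    (hD2 : 2 ≤ G.maxDegree)
    {𝒢 : Type} [AddCommGroup 𝒢] [Fintype 𝒢] [DecidableEq 𝒢]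
    (hcard : G.maxDegree + d ≤ Fintype.card 𝒢) :
    ∃ f : V → V → 𝒢, (∀ u v, f u v = f v u) ∧ (∀ u v, G.Adj u v → f u v ≠ 0) ∧
      (∀ u v, G.Adj u v →
        (∑ x ∈ G.neighborFinset u, f u x) ≠ (∑ x ∈ G.neighborFinset v, f v x)) := by
  have hNE : Nonempty 𝒢 := by
    have : 0 < Fintype.card 𝒢 := by omega
    exact Fintype.card_pos_iff.mp this
  obtain ⟨g, hg⟩ := NZGS.seq_choice (𝒢 := 𝒢) (ed G) (ekey G) (ekey_inj G) (Fb G)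
    (fun g g' e he hag => Fb_local G he hag) (fun g e he => by
      have := Fb_card_le G (g := g) hd1 hback hD2 he
      omega)
  refine ⟨fun u v => geval g u v, ?_, ?_, ?_⟩
  · exact fun u v => geval_comm g u v
  · intro u v hadj
    show geval g u v ≠ 0
    rcases lt_trichotomy u v with h | h | h
    · rw [geval_lt g h]
      exact (Fb_parts G (hg _ ((mem_ed G).mpr ⟨hadj, h⟩))).1
    · exact absurd h (fun hc => G.irrefl (hc ▸ hadj))
    · rw [geval_gt g h]
      exact (Fb_parts G (hg _ ((mem_ed G).mpr ⟨hadj.symm, h⟩))).1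
  · intro u v hadj
    show (∑ x ∈ G.neighborFinset u, geval g u x) ≠ (∑ x ∈ G.neighborFinset v, geval g v x)
    have hsum : ∀ w : V, (∑ x ∈ G.neighborFinset w, geval g w x) = wS G g w := by
      intro w
      unfold wS
      exact Finset.sum_congr rfl fun x _ => geval_comm g w x
    simp only [hsum u, hsum v]
    rcases lt_trichotomy u v with h | h | h
    · exact wS_ne G hdeg1 hK2 hg hadj h
    · exact absurd h (fun hc => G.irrefl (hc ▸ hadj))
    · exact (wS_ne G hdeg1 hK2 hg hadj.symm h).symm

end NZGS2

/-- If `G` has no component of order less than 3, then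
`(χ^Σ_g)*(G) ≤ Δ(G) + col(G) − 1 ≤ 2Δ(G)`: for every Abelian group of order at least
`Δ(G) + col(G) − 1` there is a labeling of the edges with nonzero elements whose induced
weights properly color the vertices; moreover `Δ(G) + col(G) − 1 ≤ 2Δ(G)`. -/
theorem stmt_5 {V : Type} [Fintype V] [DecidableEq V]
    (G : SimpleGraph V) [DecidableRel G.Adj]
    (hcomp : ∀ c : G.ConnectedComponent, 3 ≤ c.supp.ncard) :
    (∀ (𝒢 : Type) [AddCommGroup 𝒢] [Fintype 𝒢],
      G.maxDegree + colNum G - 1 ≤ Fintype.card 𝒢 →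
      ∃ f : V → V → 𝒢,
        (∀ u v, f u v = f v u) ∧
        (∀ u v, G.Adj u v → f u v ≠ 0) ∧
        (∀ u v, G.Adj u v →
          (∑ x ∈ G.neighborFinset u, f u x) ≠ (∑ x ∈ G.neighborFinset v, f v x))) ∧
    G.maxDegree + colNum G - 1 ≤ 2 * G.maxDegree := by
  constructor
  · intro 𝒢 _ _ hcard
    by_cases hV : Nonempty V
    · haveI : DecidableEq 𝒢 := Classical.decEq 𝒢
      have hdeg1 := NZGS.deg_ge_one G hcomp
      have hK2 : ∀ u v : V, G.Adj u v → 2 ≤ G.degree u ∨ 2 ≤ G.degree v :=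
        fun u v h => NZGS.no_K2 G hcomp h
      obtain ⟨v0⟩ := hV
      obtain ⟨u0, hu0⟩ := hdeg1 v0
      have hadj0 : G.Adj v0 u0 := by rwa [SimpleGraph.mem_neighborFinset] at hu0
      have hD2 : 2 ≤ G.maxDegree := by
        rcases hK2 v0 u0 hadj0 with h | h
        · exact le_trans h (G.degree_le_maxDegree _)
        · exact le_trans h (G.degree_le_maxDegree _)
      have hcol2 : 2 ≤ colNum G := by
        obtain ⟨w, hw, hcount⟩ := NZGS.colNum_spec G {v0, u0} ⟨v0, by simp⟩
        have hne : v0 ≠ u0 := fun hc => G.irrefl (hc ▸ hadj0)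
        have h1 : 1 ≤ (({v0, u0} : Finset V).filter fun x => G.Adj w x).card := by
          rw [Finset.mem_insert, Finset.mem_singleton] at hw
          apply Finset.card_pos.mpr
          rcases hw with hw | hw
          · exact ⟨u0, by rw [Finset.mem_filter]; subst hw; simp [hadj0]⟩
          · exact ⟨v0, by rw [Finset.mem_filter]; subst hw; simp [hadj0.symm]⟩
        omega
      obtain ⟨pos, hinj, hposback⟩ := NZGS.exists_pos G (NZGS.colNum_spec G)
      letI : LinearOrder V := LinearOrder.lift' pos hinj
      have hback : ∀ v, ((G.neighborFinset v).filter fun u => u < v).card ≤ colNum G - 1 := by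
        intro v
        have h1 := hposback v
        have h2 : ((G.neighborFinset v).filter fun u => u < v) =
            ((G.neighborFinset v).filter fun u => pos u < pos v) := by
          apply Finset.filter_congr
          intro x _
          exact Iff.rfl
        rw [h2]
        omega
      exact NZGS2.main_con G (colNum G - 1) (by omega) hback hdeg1 hK2 hD2 (by omega)
    · refine ⟨fun _ _ => 0, ?_, ?_, ?_⟩
      · intro u; exact absurd ⟨u⟩ hV
      · intro u; exact absurd ⟨u⟩ hV
      · intro u; exact absurd ⟨u⟩ hV
  · have := NZGS.colNum_le G
    omega
end

section
/- Let G be a graph of order n with no component of order less than 3, and let 𝒢 be an Abelian group of order at least Δ(G) + col(G) + 1. Then there exists a labeling f: E(G) → 𝒢 \ {0} such that w(u) ≠ w(v) for every edge uv, and w(v) ≠ 0 for every vertex v. -/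
set_option linter.unusedSectionVars false
set_option linter.unusedVariables false
set_option maxHeartbeats 1000000

namespace Stmt7Aux

open Finset

variable {V : Type} [Fintype V] [DecidableEq V] (G : SimpleGraph V) [DecidableRel G.Adj]
variable {𝒢 : Type} [AddCommGroup 𝒢] [Fintype 𝒢]
/-- weight of a vertex -/
def W (f : V → V → 𝒢) (v : V) : 𝒢 := ∑ u ∈ G.neighborFinset v, f v u

def touch (x : V) (p : V × V) : Prop := G.Adj x p.1 ∨ G.Adj x p.2

def FwdOK (R : Finset V) : List V → Prop
  | [] => True
  | u :: rest => (∃ t, G.Adj u t ∧ (t ∈ rest ∨ t ∈ R)) ∧ FwdOK R rest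

def PP (L : List V) (R : Finset V) : Finset V := (Finset.univ \ L.toFinset) \ R

lemma mem_PP {L : List V} {R : Finset V} {a : V} : a ∈ PP L R ↔ a ∉ L ∧ a ∉ R := by
  simp [PP]

lemma exists_avoid (E : Finset 𝒢) (h : E.card < Fintype.card 𝒢) : ∃ z, z ∉ E := by
  by_contra h'
  push_neg at h'
  have := Finset.card_le_card (fun z _ => h' z : (Finset.univ : Finset 𝒢) ⊆ E)
  simp [Finset.card_univ] at this
  omega

lemma W_congr {f f' : V → V → 𝒢} (v : V)
    (h : ∀ q ∈ G.neighborFinset v, f' v q = f v q) : W G f' v = W G f v :=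
  Finset.sum_congr rfl h

lemma W_single {f f' : V → V → 𝒢} (v u : V) (hu : u ∈ G.neighborFinset v)
    (h : ∀ q ∈ G.neighborFinset v, q ≠ u → f' v q = f v q) :
    W G f' v = W G f v - f v u + f' v u := by
  have h1 : W G f' v = f' v u + ∑ q ∈ (G.neighborFinset v).erase u, f' v q :=
    (Finset.add_sum_erase _ _ hu).symm
  have h2 : W G f v = f v u + ∑ q ∈ (G.neighborFinset v).erase u, f v q :=
    (Finset.add_sum_erase _ _ hu).symm
  have h3 : ∑ q ∈ (G.neighborFinset v).erase u, f' v q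
      = ∑ q ∈ (G.neighborFinset v).erase u, f v q := by
    refine Finset.sum_congr rfl ?_
    intro q hq
    exact h q (Finset.mem_of_mem_erase hq) (Finset.ne_of_mem_erase hq)
  rw [h1, h2, h3]
  abel

/-- symmetric update of `f` on edges from `u` to `F` -/
def upd (f : V → V → 𝒢) (u : V) (F : Finset V) (val : V → 𝒢) : V → V → 𝒢 :=
  fun a b => if a = u ∧ b ∈ F then val b else if b = u ∧ a ∈ F then val a else f a b

variable {G}

lemma upd_symm {f : V → V → 𝒢} {u : V} {F : Finset V} {val : V → 𝒢}
    (hf : ∀ a b, f a b = f b a) (hu : u ∉ F) (a b : V) :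
    upd f u F val a b = upd f u F val b a := by
  unfold upd
  by_cases h1 : a = u ∧ b ∈ F
  · by_cases h2 : b = u ∧ a ∈ F
    · exact absurd (h1.1 ▸ h2.2) hu
    · simp [h1, h2, hu]
  · by_cases h2 : b = u ∧ a ∈ F
    · simp [h1, h2, hu]
    · simp [h1, h2, hf a b]

lemma upd_ne {f : V → V → 𝒢} {u : V} {F : Finset V} {val : V → 𝒢}
    {a b : V} (ha : a ≠ u) (hb : b ≠ u) : upd f u F val a b = f a b := by
  simp [upd, ha, hb]

lemma upd_uF {f : V → V → 𝒢} {u : V} {F : Finset V} {val : V → 𝒢}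
    {b : V} (hb : b ∈ F) : upd f u F val u b = val b := by
  simp [upd, hb]

lemma upd_u_nF {f : V → V → 𝒢} {u : V} {F : Finset V} {val : V → 𝒢}
    {b : V} (hb : b ∉ F) (hbu : b ≠ u) : upd f u F val u b = f u b := by
  simp [upd, hb, hbu]

lemma upd_Fu {f : V → V → 𝒢} {u : V} {F : Finset V} {val : V → 𝒢}
    {a : V} (ha : a ∈ F) (hu : u ∉ F) : upd f u F val a u = val a := by
  have : a ≠ u := fun h => hu (h ▸ ha)
  simp [upd, ha, this]

/-- cross an R-boundary along a walk -/
lemma walk_cross {R : Finset V} : ∀ {a b : V} (_ : G.Walk a b), a ∉ R → b ∈ R →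
    ∃ x y, x ∉ R ∧ y ∈ R ∧ G.Adj x y := by
  intro a b w
  induction w with
  | nil => intro h1 h2; exact absurd h2 h1
  | @cons a' v' b' h p ih =>
    intro hu hc
    by_cases hv : v' ∈ R
    · exact ⟨a', v', hu, hv, h⟩
    · exact ih hv hc

lemma fwdOK_append {R : Finset V} {x y : V} (hy : G.Adj x y) (hyR : y ∈ R) :
    ∀ {L : List V}, FwdOK G (insert x R) L → FwdOK G R (L ++ [x]) := by
  intro L
  induction L with
  | nil => intro _; exact ⟨⟨y, hy, Or.inr hyR⟩, trivial⟩
  | cons u M ih =>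
    rintro ⟨⟨t, hadj, ht⟩, htail⟩
    refine ⟨⟨t, hadj, ?_⟩, ih htail⟩
    rcases ht with h | h
    · exact Or.inl (List.mem_append_left _ h)
    · rcases Finset.mem_insert.1 h with h | h
      · exact Or.inl (List.mem_append_right _ (h ▸ List.mem_singleton_self x))
      · exact Or.inr h

lemma exists_order : ∀ (n : ℕ) (R : Finset V), (Finset.univ \ R).card = n →
    (∀ v, v ∉ R → ∃ t, t ∈ R ∧ G.Reachable v t) →
    ∃ L : List V, L.Nodup ∧ (∀ a, a ∈ L ↔ a ∉ R) ∧ FwdOK G R L := by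
  intro n
  induction n using Nat.strong_induction_on with
  | _ n ih =>
    intro R hcard hreach
    rcases Nat.eq_zero_or_pos n with hn | hn
    · refine ⟨[], List.nodup_nil, ?_, trivial⟩
      intro a
      simp only [List.not_mem_nil, false_iff, not_not]
      by_contra ha
      have : a ∈ Finset.univ \ R := Finset.mem_sdiff.2 ⟨Finset.mem_univ a, ha⟩
      have := Finset.card_pos.2 ⟨a, this⟩
      omega
    · -- there is a vertex outside R
      have hne : (Finset.univ \ R).Nonempty := Finset.card_pos.1 (by omega)
      obtain ⟨v, hv⟩ := hne
      have hvR : v ∉ R := (Finset.mem_sdiff.1 hv).2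
      obtain ⟨t, htR, hreach'⟩ := hreach v hvR
      obtain ⟨x, y, hxR, hyR, hxy⟩ := walk_cross hreach'.some hvR htR
      set R' := insert x R with hR'
      have hcard' : (Finset.univ \ R').card < n := by
        have : Finset.univ \ R' ⊂ Finset.univ \ R := by
          refine Finset.ssubset_iff_of_subset (Finset.sdiff_subset_sdiff (le_refl _)
            (Finset.subset_insert _ _)) |>.2 ?_
          exact ⟨x, Finset.mem_sdiff.2 ⟨Finset.mem_univ x, hxR⟩,
            fun hx => (Finset.mem_sdiff.1 hx).2 (Finset.mem_insert_self x R)⟩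
        have := Finset.card_lt_card this
        omega
      obtain ⟨L', hnd, hmem, hfwd⟩ := ih _ hcard' R' rfl (by
        intro w hw
        have hwR : w ∉ R := fun h => hw (Finset.mem_insert_of_mem h)
        obtain ⟨t', ht', hr⟩ := hreach w hwR
        exact ⟨t', Finset.mem_insert_of_mem ht', hr⟩)
      refine ⟨L' ++ [x], ?_, ?_, fwdOK_append hxy hyR hfwd⟩
      · refine List.Nodup.append hnd (List.nodup_singleton x) ?_
        intro a ha hax
        rw [List.mem_singleton] at hax
        subst hax
        exact (hmem a).1 ha (Finset.mem_insert_self a R)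
      · intro a
        rw [List.mem_append, List.mem_singleton, hmem a]
        constructor
        · rintro (h | rfl)
          · exact fun hR0 => h (Finset.mem_insert_of_mem hR0)
          · exact hxR
        · intro h
          by_cases hax : a = x
          · exact Or.inr hax
          · exact Or.inl (fun h' => (Finset.mem_insert.1 h').elim hax h)


lemma upd_nFu {f : V → V → 𝒢} {u : V} {F : Finset V} {val : V → 𝒢}
    {a : V} (ha : a ≠ u) (haF : a ∉ F) : upd f u F val a u = f a u := by
  simp [upd, ha, haF]

/-- one greedy step: relabel all edges from `u` into `F` -/
lemma build (f : V → V → 𝒢) (u : V) (F : Finset V) (hF : F ⊆ G.neighborFinset u)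
    (s : V) (hsF : s ∈ F) (e g0 : 𝒢) (hg0 : g0 ≠ 0)
    (hdeg : G.degree u + 3 ≤ Fintype.card 𝒢)
    (hsymm : ∀ a b, f a b = f b a)
    (hzero : ∀ a ∈ F, f a u = 0) :
    ∃ (f' : V → V → 𝒢) (z : 𝒢),
      z ≠ 0 ∧ z ≠ e ∧
      (∀ a b, f' a b = f' b a) ∧
      (∀ a b, a ≠ u → b ≠ u → f' a b = f a b) ∧
      (∀ b ∈ F, f' u b = if b = s then z else g0) ∧
      (∀ b, b ≠ u → b ∉ F → f' u b = f u b ∧ f' b u = f b u) ∧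
      W G f' u ≠ 0 ∧
      (∀ b ∈ G.neighborFinset u \ F, W G f' u ≠ W G f b) ∧
      (∀ a, a ≠ u → a ∉ F → W G f' a = W G f a) ∧
      (∀ a ∈ F, W G f' a = W G f a + (if a = s then z else g0)) := by
  classical
  have huF : u ∉ F := fun h => G.irrefl ((G.mem_neighborFinset u u).1 (hF h))
  have hsnb : s ∈ G.neighborFinset u := hF hsF
  set A : 𝒢 := (∑ q ∈ G.neighborFinset u \ F, f u q) + ∑ _q ∈ F.erase s, g0 with hA
  set Eb : Finset 𝒢 := insert (0:𝒢) ((G.neighborFinset u \ F).image (W G f)) with hEb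
  set E : Finset 𝒢 := insert (0:𝒢) (insert e (Eb.image (fun b => b - A))) with hE
  have hsd : G.neighborFinset u \ F ⊆ (G.neighborFinset u).erase s := by
    intro q hq
    rcases Finset.mem_sdiff.1 hq with ⟨h1, h2⟩
    exact Finset.mem_erase.2 ⟨fun h => h2 (h ▸ hsF), h1⟩
  have hc1 : (G.neighborFinset u \ F).card ≤ G.degree u - 1 := by
    have := Finset.card_le_card hsd
    rwa [Finset.card_erase_of_mem hsnb] at this
  have hdeg1 : 1 ≤ G.degree u := by
    have : 0 < (G.neighborFinset u).card := Finset.card_pos.2 ⟨s, hsnb⟩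
    exact this
  have hEcard : E.card < Fintype.card 𝒢 := by
    have e1 : E.card ≤ (Eb.image (fun b => b - A)).card + 2 := by
      have a1 := Finset.card_insert_le (0:𝒢) (insert e (Eb.image (fun b => b - A)))
      have a2 := Finset.card_insert_le e (Eb.image (fun b => b - A))
      rw [hE]; omega
    have e2 : (Eb.image (fun b => b - A)).card ≤ Eb.card := Finset.card_image_le
    have e3 : Eb.card ≤ ((G.neighborFinset u \ F).image (W G f)).card + 1 := by
      rw [hEb]; exact Finset.card_insert_le _ _
    have e4 : ((G.neighborFinset u \ F).image (W G f)).card ≤ G.degree u - 1 :=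
      le_trans Finset.card_image_le hc1
    omega
  obtain ⟨z, hz⟩ := exists_avoid E hEcard
  have hz0 : z ≠ 0 := fun h => hz (h ▸ Finset.mem_insert_self _ _)
  have hze : z ≠ e := fun h => hz (by
    rw [hE, h]; exact Finset.mem_insert_of_mem (Finset.mem_insert_self _ _))
  have hzA : ∀ b ∈ Eb, A + z ≠ b := by
    intro b hb heq
    apply hz
    rw [hE]
    refine Finset.mem_insert_of_mem (Finset.mem_insert_of_mem ?_)
    exact Finset.mem_image.2 ⟨b, hb, by rw [← heq]; abel⟩
  set val : V → 𝒢 := fun b => if b = s then z else g0 with hval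
  have hWu : W G (upd f u F val) u = A + z := by
    have hsplit : (∑ q ∈ G.neighborFinset u \ F, upd f u F val u q)
        + ∑ q ∈ F, upd f u F val u q = W G (upd f u F val) u :=
      Finset.sum_sdiff hF
    have h1 : ∑ q ∈ G.neighborFinset u \ F, upd f u F val u q
        = ∑ q ∈ G.neighborFinset u \ F, f u q := by
      refine Finset.sum_congr rfl fun q hq => ?_
      rcases Finset.mem_sdiff.1 hq with ⟨hq1, hq2⟩
      have hqu : q ≠ u := fun h => G.irrefl ((G.mem_neighborFinset u u).1 (h ▸ hq1))
      exact upd_u_nF hq2 hqu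
    have h2 : ∑ q ∈ F, upd f u F val u q = z + ∑ _q ∈ F.erase s, g0 := by
      have h2a : ∑ q ∈ F, upd f u F val u q = ∑ q ∈ F, val q :=
        Finset.sum_congr rfl fun q hq => upd_uF hq
      have h2b : val s + ∑ q ∈ F.erase s, val q = ∑ q ∈ F, val q :=
        Finset.add_sum_erase _ _ hsF
      have h2c : ∑ q ∈ F.erase s, val q = ∑ _q ∈ F.erase s, g0 :=
        Finset.sum_congr rfl fun q hq => by
          simp [hval, Finset.ne_of_mem_erase hq]
      rw [h2a, ← h2b, h2c]
      simp [hval]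
    rw [← hsplit, h1, h2, hA]
    abel
  refine ⟨upd f u F val, z, hz0, hze, upd_symm hsymm huF, ?_, ?_, ?_, ?_, ?_, ?_, ?_⟩
  · intro a b ha hb; exact upd_ne ha hb
  · intro b hb; exact upd_uF hb
  · intro b hb hbF; exact ⟨upd_u_nF hbF hb, upd_nFu hb hbF⟩
  · rw [hWu]; exact hzA 0 (Finset.mem_insert_self _ _)
  · intro b hb
    rw [hWu]
    exact hzA _ (Finset.mem_insert_of_mem (Finset.mem_image_of_mem _ hb))
  · intro a ha haF
    refine W_congr G a fun q hq => ?_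
    by_cases hqu : q = u
    · subst hqu; exact upd_nFu ha haF
    · exact upd_ne ha hqu
  · intro a haF
    have hau : a ≠ u := fun h => huF (h ▸ haF)
    have hun : u ∈ G.neighborFinset a := by
      rw [G.mem_neighborFinset]
      exact ((G.mem_neighborFinset u a).1 (hF haF)).symm
    have hws := W_single G (f' := upd f u F val) a u hun fun q hq hqu => upd_ne hau hqu
    rw [hws, hzero a haF, upd_Fu haF huF]
    abel

lemma propagate {u : V} {rest : List V} {R : Finset V} {f f' : V → V → 𝒢} {F : Finset V}
    {s : V} {z g0 : 𝒢}
    (hFdef : F = G.neighborFinset u ∩ (rest.toFinset ∪ R))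
    (hu_rest : u ∉ rest) (huR : u ∉ R)
    (hz0 : z ≠ 0) (hg0 : g0 ≠ 0)
    (h2 : ∀ a b, G.Adj a b → (a ∈ PP (u::rest) R ∨ b ∈ PP (u::rest) R) → f a b ≠ 0)
    (h3 : ∀ a b, a ∉ PP (u::rest) R → b ∉ PP (u::rest) R → f a b = 0)
    (h4 : ∀ a ∈ PP (u::rest) R, W G f a ≠ 0)
    (h5 : ∀ a b, G.Adj a b → a ∈ PP (u::rest) R → b ∈ PP (u::rest) R → W G f a ≠ W G f b)
    (hsym' : ∀ a b, f' a b = f' b a)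
    (hold : ∀ a b, a ≠ u → b ≠ u → f' a b = f a b)
    (hvalF : ∀ b ∈ F, f' u b = (if b = s then z else g0))
    (hvalnF : ∀ b, b ≠ u → b ∉ F → f' u b = f u b ∧ f' b u = f b u)
    (hWu0 : W G f' u ≠ 0)
    (hWuB : ∀ b ∈ G.neighborFinset u \ F, W G f' u ≠ W G f b)
    (hWkeep : ∀ a, a ≠ u → a ∉ F → W G f' a = W G f a) :
    (∀ a b, G.Adj a b → (a ∈ PP rest R ∨ b ∈ PP rest R) → f' a b ≠ 0) ∧
    (∀ a b, a ∉ PP rest R → b ∉ PP rest R → f' a b = 0) ∧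
    (∀ a ∈ PP rest R, W G f' a ≠ 0) ∧
    (∀ a b, G.Adj a b → a ∈ PP rest R → b ∈ PP rest R → W G f' a ≠ W G f' b) := by
  have huPPr : u ∈ PP rest R := mem_PP.2 ⟨hu_rest, huR⟩
  have hPPmem : ∀ a, a ∈ PP rest R ↔ (a ∈ PP (u::rest) R ∨ a = u) := by
    intro a
    simp only [mem_PP, List.mem_cons, not_or]
    constructor
    · rintro ⟨h1, h2⟩
      by_cases hau : a = u
      · exact Or.inr hau
      · exact Or.inl ⟨⟨hau, h1⟩, h2⟩
    · rintro (⟨⟨_, h1⟩, h2⟩ | rfl)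
      · exact ⟨h1, h2⟩
      · exact ⟨hu_rest, huR⟩
  have hPF : ∀ a, a ∈ PP (u::rest) R → a ∉ F := by
    intro a ha haF
    rw [hFdef] at haF
    rcases Finset.mem_union.1 (Finset.mem_inter.1 haF).2 with h | h
    · exact (mem_PP.1 ha).1 (List.mem_cons_of_mem _ (List.mem_toFinset.1 h))
    · exact (mem_PP.1 ha).2 h
  have hnbF : ∀ b, G.Adj u b → b ∉ F → b ∈ PP (u::rest) R := by
    intro b hb hbF
    have hbne : b ≠ u := fun h => G.irrefl (h ▸ hb)
    rw [hFdef] at hbF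
    have : b ∉ rest.toFinset ∪ R := by
      intro h
      exact hbF (Finset.mem_inter.2 ⟨(G.mem_neighborFinset u b).2 hb, h⟩)
    rw [Finset.mem_union] at this
    push_neg at this
    refine mem_PP.2 ⟨?_, this.2⟩
    intro hmem
    rcases List.mem_cons.1 hmem with h | h
    · exact hbne h
    · exact this.1 (List.mem_toFinset.2 h)
  refine ⟨?_, ?_, ?_, ?_⟩
  · -- nonzero labels
    intro a b hab hmem
    by_cases hau : a = u
    · obtain rfl : u = a := hau.symm
      have hbu : b ≠ u := fun h => G.irrefl (h ▸ hab)
      by_cases hbF : b ∈ F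
      · rw [hvalF b hbF]
        split_ifs
        · exact hz0
        · exact hg0
      · rw [(hvalnF b hbu hbF).1]
        exact h2 u b hab (Or.inr (hnbF b hab hbF))
    · by_cases hbu : b = u
      · obtain rfl : u = b := hbu.symm
        rw [hsym' a u]
        have hba : G.Adj u a := hab.symm
        by_cases haF : a ∈ F
        · rw [hvalF a haF]
          split_ifs
          · exact hz0
          · exact hg0
        · rw [(hvalnF a hau haF).1]
          exact h2 u a hba (Or.inr (hnbF a hba haF))
      · rw [hold a b hau hbu]
        refine h2 a b hab ?_
        rcases hmem with h | h
        · exact Or.inl (((hPPmem a).1 h).resolve_right hau)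
        · exact Or.inr (((hPPmem b).1 h).resolve_right hbu)
  · -- zero on unassigned
    intro a b ha hb
    have hau : a ≠ u := fun h => ha (h ▸ huPPr)
    have hbu : b ≠ u := fun h => hb (h ▸ huPPr)
    rw [hold a b hau hbu]
    exact h3 a b (fun h => ha ((hPPmem a).2 (Or.inl h))) (fun h => hb ((hPPmem b).2 (Or.inl h)))
  · -- weights nonzero
    intro a ha
    by_cases hau : a = u
    · obtain rfl : u = a := hau.symm; exact hWu0
    · have haP : a ∈ PP (u::rest) R := ((hPPmem a).1 ha).resolve_right hau
      rw [hWkeep a hau (hPF a haP)]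
      exact h4 a haP
  · -- proper
    intro a b hab ha hb
    by_cases hau : a = u
    · obtain rfl : u = a := hau.symm
      have hbu : b ≠ u := fun h => G.irrefl (h ▸ hab)
      have hbP : b ∈ PP (u::rest) R := ((hPPmem b).1 hb).resolve_right hbu
      have hbF : b ∉ F := hPF b hbP
      rw [hWkeep b hbu hbF]
      exact hWuB b (Finset.mem_sdiff.2 ⟨(G.mem_neighborFinset u b).2 hab, hbF⟩)
    · by_cases hbu : b = u
      · obtain rfl : u = b := hbu.symm
        have haP : a ∈ PP (u::rest) R := ((hPPmem a).1 ha).resolve_right hau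
        have haF : a ∉ F := hPF a haP
        rw [hWkeep a hau haF]
        exact (hWuB a (Finset.mem_sdiff.2 ⟨(G.mem_neighborFinset u a).2 hab.symm, haF⟩)).symm
      · have haP : a ∈ PP (u::rest) R := ((hPPmem a).1 ha).resolve_right hau
        have hbP : b ∈ PP (u::rest) R := ((hPPmem b).1 hb).resolve_right hbu
        rw [hWkeep a hau (hPF a haP), hWkeep b hbu (hPF b hbP)]
        exact h5 a b hab haP hbP

lemma pairwise_touch_distinct {ps : List (V × V)}
    (hS : ps.Pairwise (fun p q => ∀ x, ¬(touch G x p ∧ touch G x q)))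
    {p q : V × V} (hp : p ∈ ps) (hq : q ∈ ps) (hne : p ≠ q) :
    ∀ x, ¬(touch G x p ∧ touch G x q) := by
  have hsymm : Symmetric (fun p q : V × V => ∀ x, ¬(touch G x p ∧ touch G x q)) :=
    fun a b hab x hx => hab x ⟨hx.2, hx.1⟩
  haveI : Std.Symm (fun p q : V × V => ∀ x, ¬(touch G x p ∧ touch G x q)) :=
    ⟨fun a b h => hsymm h⟩
  exact hS.forall hp hq hne

lemma phase1 (g0 : 𝒢) (hg0 : g0 ≠ 0)
    (hdegs : ∀ v : V, G.degree v + 3 ≤ Fintype.card 𝒢)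
    (ps : List (V × V)) (R : Finset V)
    (hR : ∀ v, v ∈ R ↔ ∃ p ∈ ps, v = p.1 ∨ v = p.2)
    (hadjp : ∀ p ∈ ps, G.Adj p.1 p.2)
    (hS : ps.Pairwise (fun p q => ∀ x, ¬(touch G x p ∧ touch G x q))) :
    ∀ (L : List V) (f : V → V → 𝒢), L.Nodup → (∀ a ∈ L, a ∉ R) → FwdOK G R L →
    (∀ a b, f a b = f b a) →
    (∀ a b, G.Adj a b → (a ∈ PP L R ∨ b ∈ PP L R) → f a b ≠ 0) →
    (∀ a b, a ∉ PP L R → b ∉ PP L R → f a b = 0) →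
    (∀ a ∈ PP L R, W G f a ≠ 0) →
    (∀ a b, G.Adj a b → a ∈ PP L R → b ∈ PP L R → W G f a ≠ W G f b) →
    (∀ p ∈ ps, (∀ x ∈ L, ¬ touch G x p) → W G f p.1 ≠ W G f p.2) →
    ∃ f' : V → V → 𝒢,
      (∀ a b, f' a b = f' b a) ∧
      (∀ a b, G.Adj a b → (a ∈ PP ([] : List V) R ∨ b ∈ PP ([] : List V) R) → f' a b ≠ 0) ∧
      (∀ a b, a ∉ PP ([] : List V) R → b ∉ PP ([] : List V) R → f' a b = 0) ∧
      (∀ a ∈ PP ([] : List V) R, W G f' a ≠ 0) ∧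
      (∀ a b, G.Adj a b → a ∈ PP ([] : List V) R → b ∈ PP ([] : List V) R →
        W G f' a ≠ W G f' b) ∧
      (∀ p ∈ ps, W G f' p.1 ≠ W G f' p.2) := by
  intro L
  induction L with
  | nil =>
    intro f _ _ _ h1 h2 h3 h4 h5 h6
    exact ⟨f, h1, h2, h3, h4, h5, fun p hp => h6 p hp (by simp)⟩
  | cons u rest ih =>
    intro f hnd hLR hfwd h1 h2 h3 h4 h5 h6
    have hu_rest : u ∉ rest := (List.nodup_cons.1 hnd).1
    have hndr : rest.Nodup := (List.nodup_cons.1 hnd).2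
    have huR : u ∉ R := hLR u (List.mem_cons_self (a := u) (l := rest))
    have hLR' : ∀ a ∈ rest, a ∉ R := fun a ha => hLR a (List.mem_cons_of_mem _ ha)
    obtain ⟨⟨t, hadjut, ht⟩, hfwd'⟩ := hfwd
    set F := G.neighborFinset u ∩ (rest.toFinset ∪ R) with hFdef
    have hFsub : F ⊆ G.neighborFinset u := Finset.inter_subset_left
    have htF : t ∈ F := Finset.mem_inter.2 ⟨(G.mem_neighborFinset u t).2 hadjut,
      Finset.mem_union.2 (ht.imp List.mem_toFinset.2 id)⟩
    have huPP : u ∉ PP (u::rest) R := fun h => (mem_PP.1 h).1 (List.mem_cons_self (a := u) (l := rest))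
    have hfzero : ∀ a ∈ F, f a u = 0 := by
      intro a ha
      refine h3 a u ?_ huPP
      intro haP
      rcases Finset.mem_union.1 (Finset.mem_inter.1 ha).2 with h | h
      · exact (mem_PP.1 haP).1 (List.mem_cons_of_mem _ (List.mem_toFinset.1 h))
      · exact (mem_PP.1 haP).2 h
    have hRnotu : ∀ v ∈ R, v ≠ u := fun v hv h => huR (h ▸ hv)
    -- a vertex touching no remaining vertex keeps its weight if not in F
    by_cases hE : ∃ p ∈ ps, touch G u p ∧ ∀ x ∈ rest, ¬ touch G x p
    · obtain ⟨p, hpps, hpt, hplast⟩ := hE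
      have hp1R : p.1 ∈ R := (hR p.1).2 ⟨p, hpps, Or.inl rfl⟩
      have hp2R : p.2 ∈ R := (hR p.2).2 ⟨p, hpps, Or.inr rfl⟩
      have hp1u : p.1 ≠ u := hRnotu _ hp1R
      have hp2u : p.2 ≠ u := hRnotu _ hp2R
      have hp12 : p.1 ≠ p.2 := (hadjp p hpps).ne
      set s := if G.Adj u p.1 then p.1 else p.2 with hs
      have hsprop : G.Adj u s ∧ (s = p.1 ∨ s = p.2) := by
        by_cases h : G.Adj u p.1
        · rw [hs, if_pos h]; exact ⟨h, Or.inl rfl⟩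
        · rw [hs, if_neg h]; exact ⟨hpt.resolve_left h, Or.inr rfl⟩
      have hsR : s ∈ R := (hR s).2 ⟨p, hpps, hsprop.2⟩
      have hsF : s ∈ F := Finset.mem_inter.2 ⟨(G.mem_neighborFinset u s).2 hsprop.1,
        Finset.mem_union.2 (Or.inr hsR)⟩
      set e : 𝒢 := if G.Adj u p.1 then
          (W G f p.2 + (if G.Adj u p.2 then g0 else 0)) - W G f p.1
        else W G f p.1 - W G f p.2 with he
      obtain ⟨f', z, hz0, hze, hsym', hold, hvalF, hvalnF, hWu0, hWuB, hWkeep, hWtouch⟩ :=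
        build f u F hFsub s hsF e g0 hg0 (hdegs u) h1 hfzero
      obtain ⟨p2', p3', p4', p5'⟩ := propagate hFdef hu_rest huR hz0 hg0 h2 h3 h4 h5
        hsym' hold hvalF hvalnF hWu0 hWuB hWkeep
      refine ih f' hndr hLR' hfwd' hsym' p2' p3' p4' p5' ?_
      -- condition 6
      intro q hq hqlast
      have hq1R : q.1 ∈ R := (hR q.1).2 ⟨q, hq, Or.inl rfl⟩
      have hq2R : q.2 ∈ R := (hR q.2).2 ⟨q, hq, Or.inr rfl⟩
      by_cases htq : touch G u q
      · have hq_eq : q = p := by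
          by_contra hne
          exact pairwise_touch_distinct hS hq hpps hne u ⟨htq, hpt⟩
        subst hq_eq
        have hmemF : ∀ v, v ∈ R → (v ∈ F ↔ G.Adj u v) := by
          intro v hv
          constructor
          · intro hvF; exact (G.mem_neighborFinset u v).1 (hFsub hvF)
          · intro hva; exact Finset.mem_inter.2 ⟨(G.mem_neighborFinset u v).2 hva,
              Finset.mem_union.2 (Or.inr hv)⟩
        have hW1 : W G f' q.1 = W G f q.1 +
            (if G.Adj u q.1 then (if q.1 = s then z else g0) else 0) := by
          by_cases hA1 : G.Adj u q.1
          · rw [if_pos hA1]; exact hWtouch q.1 ((hmemF q.1 hq1R).2 hA1)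
          · rw [if_neg hA1, add_zero]
            exact hWkeep q.1 hp1u (fun h => hA1 ((hmemF q.1 hq1R).1 h))
        have hW2 : W G f' q.2 = W G f q.2 +
            (if G.Adj u q.2 then (if q.2 = s then z else g0) else 0) := by
          by_cases hA2 : G.Adj u q.2
          · rw [if_pos hA2]; exact hWtouch q.2 ((hmemF q.2 hq2R).2 hA2)
          · rw [if_neg hA2, add_zero]
            exact hWkeep q.2 hp2u (fun h => hA2 ((hmemF q.2 hq2R).1 h))
        by_cases hA1 : G.Adj u q.1
        · have hs1 : s = q.1 := by rw [hs, if_pos hA1]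
          have hs2 : q.2 ≠ s := by rw [hs1]; exact fun h => hp12 h.symm
          rw [hW1, hW2, if_pos hA1, if_pos hs1.symm]
          intro hcontra
          apply hze
          rw [he, if_pos hA1]
          have hite : (if G.Adj u q.2 then (if q.2 = s then z else g0) else 0)
              = (if G.Adj u q.2 then g0 else 0) := by
            by_cases hA2 : G.Adj u q.2 <;> simp [hA2, hs2]
          rw [hite] at hcontra
          exact eq_sub_of_add_eq' hcontra
        · have hA2 : G.Adj u q.2 := hpt.resolve_left hA1
          have hs2 : s = q.2 := by rw [hs, if_neg hA1]
          rw [hW1, hW2, if_neg hA1, if_pos hA2, if_pos hs2.symm, add_zero]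
          intro hcontra
          apply hze
          rw [he, if_neg hA1]
          rw [hcontra]
          abel
      · -- u does not touch q : weights unchanged
        have h1' : W G f' q.1 = W G f q.1 := by
          refine hWkeep q.1 (hRnotu _ hq1R) ?_
          intro h
          exact htq (Or.inl ((G.mem_neighborFinset u q.1).1 (hFsub h)))
        have h2' : W G f' q.2 = W G f q.2 := by
          refine hWkeep q.2 (hRnotu _ hq2R) ?_
          intro h
          exact htq (Or.inr ((G.mem_neighborFinset u q.2).1 (hFsub h)))
        rw [h1', h2']
        refine h6 q hq ?_
        intro x hx
        rcases List.mem_cons.1 hx with rfl | hx'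
        · exact htq
        · exact hqlast x hx'
    · -- no enforcement needed
      obtain ⟨f', z, hz0, _, hsym', hold, hvalF, hvalnF, hWu0, hWuB, hWkeep, hWtouch⟩ :=
        build f u F hFsub t htF (0 : 𝒢) g0 hg0 (hdegs u) h1 hfzero
      obtain ⟨p2', p3', p4', p5'⟩ := propagate hFdef hu_rest huR hz0 hg0 h2 h3 h4 h5
        hsym' hold hvalF hvalnF hWu0 hWuB hWkeep
      refine ih f' hndr hLR' hfwd' hsym' p2' p3' p4' p5' ?_
      intro q hq hqlast
      have htq : ¬ touch G u q := fun htq => hE ⟨q, hq, htq, hqlast⟩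
      have hq1R : q.1 ∈ R := (hR q.1).2 ⟨q, hq, Or.inl rfl⟩
      have hq2R : q.2 ∈ R := (hR q.2).2 ⟨q, hq, Or.inr rfl⟩
      have h1' : W G f' q.1 = W G f q.1 := by
        refine hWkeep q.1 (hRnotu _ hq1R) ?_
        intro h
        exact htq (Or.inl ((G.mem_neighborFinset u q.1).1 (hFsub h)))
      have h2' : W G f' q.2 = W G f q.2 := by
        refine hWkeep q.2 (hRnotu _ hq2R) ?_
        intro h
        exact htq (Or.inr ((G.mem_neighborFinset u q.2).1 (hFsub h)))
      rw [h1', h2']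
      refine h6 q hq ?_
      intro x hx
      rcases List.mem_cons.1 hx with rfl | hx'
      · exact htq
      · exact hqlast x hx'

lemma phase2 :
    ∀ (qs : List (V × V)) (f : V → V → 𝒢),
    (∀ p ∈ qs, G.Adj p.1 p.2) →
    (∀ p ∈ qs, G.degree p.1 + G.degree p.2 + 2 ≤ Fintype.card 𝒢) →
    qs.Pairwise (fun p q => ∀ x, ¬(touch G x p ∧ touch G x q)) →
    (∀ a b, f a b = f b a) →
    (∀ a b, G.Adj a b → (∀ q ∈ qs, ¬((a = q.1 ∧ b = q.2) ∨ (a = q.2 ∧ b = q.1))) → f a b ≠ 0) →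
    (∀ q ∈ qs, f q.1 q.2 = 0) →
    (∀ a, (∀ q ∈ qs, a ≠ q.1 ∧ a ≠ q.2) → W G f a ≠ 0) →
    (∀ a b, G.Adj a b → (∀ q ∈ qs, a ≠ q.1 ∧ a ≠ q.2) → (∀ q ∈ qs, b ≠ q.1 ∧ b ≠ q.2) →
      W G f a ≠ W G f b) →
    (∀ q ∈ qs, W G f q.1 ≠ W G f q.2) →
    ∃ f' : V → V → 𝒢, (∀ a b, f' a b = f' b a) ∧ (∀ a b, G.Adj a b → f' a b ≠ 0) ∧
      (∀ a, W G f' a ≠ 0) ∧ (∀ a b, G.Adj a b → W G f' a ≠ W G f' b) := by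
  classical
  intro qs
  induction qs with
  | nil =>
    intro f _ _ _ h1 h2 _ h4 h5 _
    exact ⟨f, h1, fun a b hab => h2 a b hab (by simp), fun a => h4 a (by simp),
      fun a b hab => h5 a b hab (by simp) (by simp)⟩
  | cons p qs' ih =>
    intro f hadj hdeg hS h1 h2 h3 h4 h5 h6
    have hcr : G.Adj p.1 p.2 := hadj p (List.mem_cons_self)
    have hcrne : p.1 ≠ p.2 := hcr.ne
    have hhead : ∀ q ∈ qs', ∀ x, ¬(touch G x p ∧ touch G x q) := (List.pairwise_cons.1 hS).1
    have hnoq : ∀ q ∈ qs', ∀ v, touch G v p → v ≠ q.1 ∧ v ≠ q.2 := by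
      intro q hq v hv
      constructor
      · intro h
        exact hhead q hq v ⟨hv, Or.inr (h ▸ (hadj q (List.mem_cons_of_mem _ hq)))⟩
      · intro h
        exact hhead q hq v ⟨hv, Or.inl (h ▸ (hadj q (List.mem_cons_of_mem _ hq)).symm)⟩
    have hdisj : ∀ q ∈ qs', (q.1 ≠ p.1 ∧ q.1 ≠ p.2) ∧ (q.2 ≠ p.1 ∧ q.2 ≠ p.2) := by
      intro q hq
      refine ⟨⟨?_, ?_⟩, ⟨?_, ?_⟩⟩
      · exact fun h => (hnoq q hq p.1 (Or.inr hcr)).1 h.symm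
      · exact fun h => (hnoq q hq p.2 (Or.inl hcr.symm)).1 h.symm
      · exact fun h => (hnoq q hq p.1 (Or.inr hcr)).2 h.symm
      · exact fun h => (hnoq q hq p.2 (Or.inl hcr.symm)).2 h.symm
    have hrmem : p.2 ∈ G.neighborFinset p.1 := (G.mem_neighborFinset p.1 p.2).2 hcr
    have hcmem : p.1 ∈ G.neighborFinset p.2 := (G.mem_neighborFinset p.2 p.1).2 hcr.symm
    set Ec : Finset 𝒢 := (insert (0:𝒢) (((G.neighborFinset p.1).erase p.2).image (W G f))).image
      (fun b => b - W G f p.1) with hEc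
    set Er : Finset 𝒢 := (insert (0:𝒢) (((G.neighborFinset p.2).erase p.1).image (W G f))).image
      (fun b => b - W G f p.2) with hEr
    set E : Finset 𝒢 := insert (0:𝒢) (Ec ∪ Er) with hE
    have hEcard : E.card < Fintype.card 𝒢 := by
      have d1 : ((G.neighborFinset p.1).erase p.2).card = G.degree p.1 - 1 :=
        Finset.card_erase_of_mem hrmem
      have d2 : ((G.neighborFinset p.2).erase p.1).card = G.degree p.2 - 1 :=
        Finset.card_erase_of_mem hcmem
      have dd1 : 1 ≤ G.degree p.1 := Finset.card_pos.2 ⟨p.2, hrmem⟩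
      have dd2 : 1 ≤ G.degree p.2 := Finset.card_pos.2 ⟨p.1, hcmem⟩
      have e1 : E.card ≤ Ec.card + Er.card + 1 := by
        have a1 := Finset.card_insert_le (0:𝒢) (Ec ∪ Er)
        have a2 := Finset.card_union_le Ec Er
        rw [hE]; omega
      have e2 : Ec.card ≤ G.degree p.1 := by
        calc Ec.card ≤ (insert (0:𝒢) (((G.neighborFinset p.1).erase p.2).image (W G f))).card :=
              Finset.card_image_le
          _ ≤ (((G.neighborFinset p.1).erase p.2).image (W G f)).card + 1 :=
              Finset.card_insert_le _ _
          _ ≤ ((G.neighborFinset p.1).erase p.2).card + 1 := by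
              have := Finset.card_image_le (s := (G.neighborFinset p.1).erase p.2) (f := W G f)
              omega
          _ ≤ G.degree p.1 := by omega
      have e3 : Er.card ≤ G.degree p.2 := by
        calc Er.card ≤ (insert (0:𝒢) (((G.neighborFinset p.2).erase p.1).image (W G f))).card :=
              Finset.card_image_le
          _ ≤ (((G.neighborFinset p.2).erase p.1).image (W G f)).card + 1 :=
              Finset.card_insert_le _ _
          _ ≤ ((G.neighborFinset p.2).erase p.1).card + 1 := by
              have := Finset.card_image_le (s := (G.neighborFinset p.2).erase p.1) (f := W G f)
              omega
          _ ≤ G.degree p.2 := by omega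
      have := hdeg p (List.mem_cons_self)
      omega
    obtain ⟨z, hz⟩ := exists_avoid E hEcard
    have hz0 : z ≠ 0 := fun h => hz (h ▸ Finset.mem_insert_self _ _)
    have hzc : ∀ b ∈ insert (0:𝒢) (((G.neighborFinset p.1).erase p.2).image (W G f)),
        W G f p.1 + z ≠ b := by
      intro b hb heq
      apply hz
      rw [hE]
      refine Finset.mem_insert_of_mem (Finset.mem_union_left _ ?_)
      exact Finset.mem_image.2 ⟨b, hb, by rw [← heq]; abel⟩
    have hzr : ∀ b ∈ insert (0:𝒢) (((G.neighborFinset p.2).erase p.1).image (W G f)),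
        W G f p.2 + z ≠ b := by
      intro b hb heq
      apply hz
      rw [hE]
      refine Finset.mem_insert_of_mem (Finset.mem_union_right _ ?_)
      exact Finset.mem_image.2 ⟨b, hb, by rw [← heq]; abel⟩
    set f' : V → V → 𝒢 := fun a b =>
      if (a = p.1 ∧ b = p.2) ∨ (a = p.2 ∧ b = p.1) then z else f a b with hf'
    have hf'cr : f' p.1 p.2 = z := by simp [hf']
    have hf'rc : f' p.2 p.1 = z := by simp [hf']
    have hf'other : ∀ a b, ¬((a = p.1 ∧ b = p.2) ∨ (a = p.2 ∧ b = p.1)) → f' a b = f a b := by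
      intro a b h; simp only [hf', if_neg h]
    have hsym' : ∀ a b, f' a b = f' b a := by
      intro a b
      have hiff : ((a = p.1 ∧ b = p.2) ∨ (a = p.2 ∧ b = p.1)) ↔
          ((b = p.1 ∧ a = p.2) ∨ (b = p.2 ∧ a = p.1)) := by tauto
      by_cases h : (a = p.1 ∧ b = p.2) ∨ (a = p.2 ∧ b = p.1)
      · simp only [hf', if_pos h, if_pos (hiff.1 h)]
      · simp only [hf', if_neg h, if_neg (fun hh => h (hiff.2 hh))]
        exact h1 a b
    have hWc : W G f' p.1 = W G f p.1 + z := by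
      have := W_single G (f := f) (f' := f') p.1 p.2 hrmem (by
        intro q hq hqne
        refine hf'other p.1 q ?_
        rintro (⟨_, h⟩ | ⟨h, _⟩)
        · exact hqne h
        · exact hcrne h)
      rw [this, h3 p (List.mem_cons_self), hf'cr]
      abel
    have hWr : W G f' p.2 = W G f p.2 + z := by
      have := W_single G (f := f) (f' := f') p.2 p.1 hcmem (by
        intro q hq hqne
        refine hf'other p.2 q ?_
        rintro (⟨h, _⟩ | ⟨_, h⟩)
        · exact hcrne h.symm
        · exact hqne h)
      rw [this, hf'rc, h1 p.2 p.1, h3 p (List.mem_cons_self)]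
      abel
    have hWother : ∀ a, a ≠ p.1 → a ≠ p.2 → W G f' a = W G f a := by
      intro a ha1 ha2
      refine W_congr G a ?_
      intro q hq
      refine hf'other a q ?_
      rintro (⟨h, _⟩ | ⟨h, _⟩)
      · exact ha1 h
      · exact ha2 h
    refine ih f' (fun q hq => hadj q (List.mem_cons_of_mem _ hq))
      (fun q hq => hdeg q (List.mem_cons_of_mem _ hq)) (List.pairwise_cons.1 hS).2
      hsym' ?_ ?_ ?_ ?_ ?_
    · -- nonzero labels
      intro a b hab hnot
      by_cases hit : (a = p.1 ∧ b = p.2) ∨ (a = p.2 ∧ b = p.1)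
      · have hval : f' a b = z := by
          show (if (a = p.1 ∧ b = p.2) ∨ (a = p.2 ∧ b = p.1) then z else f a b) = z
          rw [if_pos hit]
        rw [hval]; exact hz0
      · rw [hf'other a b hit]
        refine h2 a b hab ?_
        intro q hq
        rcases List.mem_cons.1 hq with rfl | hq'
        · exact hit
        · exact hnot q hq'
    · -- zero pair edges
      intro q hq
      rw [hf'other q.1 q.2 (by
        rintro (⟨h, _⟩ | ⟨h, _⟩)
        · exact (hdisj q hq).1.1 h
        · exact (hdisj q hq).1.2 h)]
      exact h3 q (List.mem_cons_of_mem _ hq)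
    · -- weights nonzero
      intro a ha
      by_cases ha1 : a = p.1
      · subst ha1
        rw [hWc]
        exact hzc 0 (Finset.mem_insert_self _ _)
      · by_cases ha2 : a = p.2
        · subst ha2
          rw [hWr]
          exact hzr 0 (Finset.mem_insert_self _ _)
        · rw [hWother a ha1 ha2]
          refine h4 a ?_
          intro q hq
          rcases List.mem_cons.1 hq with rfl | hq'
          · exact ⟨ha1, ha2⟩
          · exact ha q hq'
    · -- proper
      intro a b hab ha hb
      by_cases ha1 : a = p.1
      · subst ha1
        by_cases hb2 : b = p.2
        · subst hb2
          rw [hWc, hWr]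
          intro h
          exact h6 p (List.mem_cons_self) (by
            have := add_right_cancel h
            rw [this])
        · have hb1 : b ≠ p.1 := hab.ne'
          rw [hWc, hWother b hb1 hb2]
          refine hzc (W G f b) (Finset.mem_insert_of_mem ?_)
          exact Finset.mem_image_of_mem _ (Finset.mem_erase.2 ⟨hb2,
            (G.mem_neighborFinset p.1 b).2 hab⟩)
      · by_cases ha2 : a = p.2
        · subst ha2
          by_cases hb1 : b = p.1
          · subst hb1
            rw [hWc, hWr]
            intro h
            exact h6 p (List.mem_cons_self) (by
              have := add_right_cancel h
              rw [this])
          · have hb2 : b ≠ p.2 := hab.ne'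
            rw [hWr, hWother b hb1 hb2]
            refine hzr (W G f b) (Finset.mem_insert_of_mem ?_)
            exact Finset.mem_image_of_mem _ (Finset.mem_erase.2 ⟨hb1,
              (G.mem_neighborFinset p.2 b).2 hab⟩)
        · by_cases hb1 : b = p.1
          · subst hb1
            rw [hWc, hWother a ha1 ha2]
            refine Ne.symm (hzc (W G f a) (Finset.mem_insert_of_mem ?_))
            exact Finset.mem_image_of_mem _ (Finset.mem_erase.2 ⟨ha2,
              (G.mem_neighborFinset p.1 a).2 hab.symm⟩)
          · by_cases hb2 : b = p.2
            · subst hb2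
              rw [hWr, hWother a ha1 ha2]
              refine Ne.symm (hzr (W G f a) (Finset.mem_insert_of_mem ?_))
              exact Finset.mem_image_of_mem _ (Finset.mem_erase.2 ⟨ha1,
                (G.mem_neighborFinset p.2 a).2 hab.symm⟩)
            · rw [hWother a ha1 ha2, hWother b hb1 hb2]
              refine h5 a b hab ?_ ?_
              · intro q hq
                rcases List.mem_cons.1 hq with rfl | hq'
                · exact ⟨ha1, ha2⟩
                · exact ha q hq'
              · intro q hq
                rcases List.mem_cons.1 hq with rfl | hq'
                · exact ⟨hb1, hb2⟩
                · exact hb q hq'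
    · -- pair weight difference preserved
      intro q hq
      rw [hWother q.1 (hdisj q hq).1.1 (hdisj q hq).1.2,
        hWother q.2 (hdisj q hq).2.1 (hdisj q hq).2.2]
      exact h6 q (List.mem_cons_of_mem _ hq)

end Stmt7Aux

/-- If `G` has no component of order less than 3 and `𝒢` is an Abelian group
of order at least `Δ(G) + col(G) + 1`, then there is a labeling of the edges with nonzero
elements of `𝒢` inducing a proper vertex coloring by weights, with no vertex weight 0. -/
theorem stmt_7 {V : Type} [Fintype V] [DecidableEq V]
    (G : SimpleGraph V) [DecidableRel G.Adj]
    (hcomp : ∀ c : G.ConnectedComponent, 3 ≤ c.supp.ncard)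
    (𝒢 : Type) [AddCommGroup 𝒢] [Fintype 𝒢]
    (hcard : G.maxDegree + colNum G + 1 ≤ Fintype.card 𝒢) :
    ∃ f : V → V → 𝒢,
      (∀ u v, f u v = f v u) ∧
      (∀ u v, G.Adj u v → f u v ≠ 0) ∧
      (∀ u v, G.Adj u v →
        (∑ x ∈ G.neighborFinset u, f u x) ≠ (∑ x ∈ G.neighborFinset v, f v x)) ∧
      (∀ v, (∑ u ∈ G.neighborFinset v, f v u) ≠ 0) := by
  classical
  open Stmt7Aux in
  rcases isEmpty_or_nonempty V with hV | hV
  · exact ⟨fun _ _ => 0, fun u _ => rfl, fun u _ _ => (hV.false u).elim,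
      fun u _ _ => (hV.false u).elim, fun v => (hV.false v).elim⟩
  · -- the coloring number property
    have hset_ne : {k | ∀ s : Finset V, s.Nonempty →
        ∃ v ∈ s, (s.filter fun u => G.Adj v u).card < k}.Nonempty := by
      refine ⟨Fintype.card V + 1, ?_⟩
      intro s hs
      obtain ⟨v, hv⟩ := hs
      refine ⟨v, hv, ?_⟩
      have h1 : (s.filter fun u => G.Adj v u).card ≤ s.card := Finset.card_filter_le _ _
      have h2 : s.card ≤ Fintype.card V := by
        simpa using Finset.card_le_univ s
      omega
    have Hcol : ∀ s : Finset V, s.Nonempty →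
        ∃ v ∈ s, (s.filter fun u => G.Adj v u).card < colNum G := Nat.sInf_mem hset_ne
    -- choose data in each component
    have H : ∀ C : G.ConnectedComponent, ∃ r c x : V, r ∈ C.supp ∧ G.Adj r c ∧
        G.degree r < colNum G ∧ (G.Adj x c ∨ G.Adj x r) ∧ x ≠ c ∧ x ≠ r := by
      intro C
      have hfin : C.supp.Finite := Set.toFinite _
      have hne3 := hcomp C
      have hsne : hfin.toFinset.Nonempty := by
        rw [Set.Finite.toFinset_nonempty]
        apply Set.nonempty_of_ncard_ne_zero
        omega
      obtain ⟨r, hrs, hrcard⟩ := Hcol hfin.toFinset hsne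
      have hrsupp : r ∈ C.supp := hfin.mem_toFinset.1 hrs
      have hrmk : G.connectedComponentMk r = C :=
        (SimpleGraph.ConnectedComponent.mem_supp_iff _ _).1 hrsupp
      have hsub : G.neighborFinset r ⊆ hfin.toFinset.filter (fun u => G.Adj r u) := by
        intro u hu
        have hadj : G.Adj r u := (G.mem_neighborFinset r u).1 hu
        refine Finset.mem_filter.2 ⟨hfin.mem_toFinset.2 ?_, hadj⟩
        rw [SimpleGraph.ConnectedComponent.mem_supp_iff, ← hrmk]
        exact SimpleGraph.ConnectedComponent.sound hadj.symm.reachable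
      have hdegr : G.degree r < colNum G :=
        lt_of_le_of_lt (Finset.card_le_card hsub) hrcard
      have hcex : ∃ c, G.Adj r c := by
        by_contra h
        push_neg at h
        have hsupp_sub : C.supp ⊆ {r} := by
          intro t ht
          rw [SimpleGraph.ConnectedComponent.mem_supp_iff] at ht
          have hreach : G.Reachable r t :=
            SimpleGraph.ConnectedComponent.exact (hrmk.trans ht.symm)
          obtain ⟨w⟩ := hreach
          cases w with
          | nil => exact rfl
          | cons h' p => exact absurd h' (h _)
        have hle := Set.ncard_le_ncard hsupp_sub (Set.finite_singleton r)
        rw [Set.ncard_singleton] at hle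
        omega
      obtain ⟨c, hrc⟩ := hcex
      have hxex : ∃ x, (G.Adj x c ∨ G.Adj x r) ∧ x ≠ c ∧ x ≠ r := by
        by_contra hno
        push_neg at hno
        have hcl : ∀ x, (G.Adj x c ∨ G.Adj x r) → x = c ∨ x = r := by
          intro x hx
          by_cases hxc : x = c
          · exact Or.inl hxc
          · exact Or.inr (hno x hx hxc)
        have hwalk : ∀ (a b : V), G.Walk a b → (a = c ∨ a = r) → (b = c ∨ b = r) := by
          intro a b w
          induction w with
          | nil => exact id
          | cons h' p ihw =>
            intro ha
            apply ihw
            apply hcl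
            rcases ha with rfl | rfl
            · exact Or.inl h'.symm
            · exact Or.inr h'.symm
        have hsupp_sub : C.supp ⊆ {c, r} := by
          intro t ht
          rw [SimpleGraph.ConnectedComponent.mem_supp_iff] at ht
          have hreach : G.Reachable r t :=
            SimpleGraph.ConnectedComponent.exact (hrmk.trans ht.symm)
          obtain ⟨w⟩ := hreach
          rcases hwalk r t w (Or.inr rfl) with h | h
          · exact Or.inl h
          · exact Or.inr h
        have hle := Set.ncard_le_ncard hsupp_sub (Set.toFinite _)
        have h2 : ({c, r} : Set V).ncard ≤ 2 := by
          refine le_trans (Set.ncard_insert_le _ _) ?_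
          rw [Set.ncard_singleton]
        omega
      obtain ⟨x, hx1, hx2, hx3⟩ := hxex
      exact ⟨r, c, x, hrsupp, hrc, hdegr, hx1, hx2, hx3⟩
    choose rC cC xC hrsupp hadjrc hdegr hxtouch hxc hxr using H
    have hrC_mk : ∀ C, G.connectedComponentMk (rC C) = C := fun C =>
      (SimpleGraph.ConnectedComponent.mem_supp_iff _ _).1 (hrsupp C)
    have hcC_mk : ∀ C, G.connectedComponentMk (cC C) = C := fun C =>
      (SimpleGraph.ConnectedComponent.sound (hadjrc C).symm.reachable).trans (hrC_mk C)
    -- colNum is at least 2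
    have hcol2 : 2 ≤ colNum G := by
      by_contra h
      push_neg at h
      set C0 := G.connectedComponentMk (Classical.arbitrary V)
      set r := rC C0
      set c := cC C0
      have hadj : G.Adj r c := hadjrc C0
      obtain ⟨v, hv, hvcard⟩ := Hcol {r, c} ⟨r, by simp⟩
      have hmem : ∃ w, w ∈ ({r, c} : Finset V).filter fun u => G.Adj v u := by
        rcases Finset.mem_insert.1 hv with rfl | hv'
        · exact ⟨c, Finset.mem_filter.2 ⟨by simp, hadj⟩⟩
        · rw [Finset.mem_singleton] at hv'
          subst hv'
          exact ⟨r, Finset.mem_filter.2 ⟨by simp, hadj.symm⟩⟩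
      obtain ⟨w, hw⟩ := hmem
      have h1 : 1 ≤ (({r, c} : Finset V).filter fun u => G.Adj v u).card :=
        Finset.card_pos.2 ⟨w, hw⟩
      omega
    have hdegs : ∀ v : V, G.degree v + 3 ≤ Fintype.card 𝒢 := by
      intro v
      have h1 := G.degree_le_maxDegree v
      omega
    have hnontriv : Nontrivial 𝒢 := Fintype.one_lt_card_iff_nontrivial.1 (by
      have := hdegs (Classical.arbitrary V); omega)
    obtain ⟨g0, hg0⟩ := exists_ne (0 : 𝒢)
    -- the pairs and root set
    set comps : List G.ConnectedComponent := (Finset.univ.image G.connectedComponentMk).toList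
      with hcomps
    set ps : List (V × V) := comps.map fun C => (cC C, rC C) with hps
    set R : Finset V := (ps.map Prod.fst).toFinset ∪ (ps.map Prod.snd).toFinset with hRdef
    have hcomps_nodup : comps.Nodup := Finset.nodup_toList _
    have hmkmem : ∀ v : V, G.connectedComponentMk v ∈ comps := fun v =>
      Finset.mem_toList.2 (Finset.mem_image.2 ⟨v, Finset.mem_univ v, rfl⟩)
    have hpair_mem : ∀ C ∈ comps, (cC C, rC C) ∈ ps := fun C hC =>
      List.mem_map.2 ⟨C, hC, rfl⟩
    have hps_shape : ∀ p ∈ ps, ∃ C, p = (cC C, rC C) := by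
      intro p hp
      obtain ⟨C, _, h⟩ := List.mem_map.1 hp
      exact ⟨C, h.symm⟩
    have htouch_mk : ∀ (x : V) (C), touch G x (cC C, rC C) → G.connectedComponentMk x = C := by
      intro x C hx
      rcases hx with h | h
      · exact (SimpleGraph.ConnectedComponent.sound h.reachable).trans (hcC_mk C)
      · exact (SimpleGraph.ConnectedComponent.sound h.reachable).trans (hrC_mk C)
    have hS : ps.Pairwise (fun p q => ∀ x, ¬(touch G x p ∧ touch G x q)) := by
      rw [hps, List.pairwise_map]
      refine hcomps_nodup.imp ?_
      intro C1 C2 hne x ⟨h1, h2⟩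
      exact hne ((htouch_mk x C1 h1).symm.trans (htouch_mk x C2 h2))
    have hadjp : ∀ p ∈ ps, G.Adj p.1 p.2 := by
      intro p hp
      obtain ⟨C, rfl⟩ := hps_shape p hp
      exact (hadjrc C).symm
    have hR_iff : ∀ v, v ∈ R ↔ ∃ p ∈ ps, v = p.1 ∨ v = p.2 := by
      intro v
      rw [hRdef]
      simp only [Finset.mem_union, List.mem_toFinset, List.mem_map]
      constructor
      · rintro (⟨p, hp, rfl⟩ | ⟨p, hp, rfl⟩)
        · exact ⟨p, hp, Or.inl rfl⟩
        · exact ⟨p, hp, Or.inr rfl⟩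
      · rintro ⟨p, hp, rfl | rfl⟩
        · exact Or.inl ⟨p, hp, rfl⟩
        · exact Or.inr ⟨p, hp, rfl⟩
    -- the processing order
    have hreach : ∀ v, v ∉ R → ∃ t, t ∈ R ∧ G.Reachable v t := by
      intro v _
      refine ⟨rC (G.connectedComponentMk v), ?_, ?_⟩
      · exact (hR_iff _).2 ⟨(cC _, rC _), hpair_mem _ (hmkmem v), Or.inr rfl⟩
      · exact (SimpleGraph.ConnectedComponent.exact (hrC_mk (G.connectedComponentMk v))).symm
    obtain ⟨L, hLnd, hLmem, hLfwd⟩ :=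
      Stmt7Aux.exists_order (G := G) ((Finset.univ \ R).card) R rfl hreach
    have hPPempty : ∀ a : V, a ∉ PP L R := by
      intro a ha
      rcases mem_PP.1 ha with ⟨h1, h2⟩
      exact h1 ((hLmem a).2 h2)
    have hPP0 : ∀ a : V, a ∈ PP ([] : List V) R ↔ a ∉ R := by
      intro a
      rw [mem_PP]
      simp
    -- phase 1
    obtain ⟨f1, q1, q2, q3, q4, q5, q6⟩ :=
      Stmt7Aux.phase1 (G := G) g0 hg0 hdegs ps R hR_iff hadjp hS L (fun _ _ => 0)
        hLnd (fun a ha => (hLmem a).1 ha) hLfwd (fun _ _ => rfl)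
        (fun a b _ hm => ((hm.elim (hPPempty a) (hPPempty b))).elim)
        (fun _ _ _ _ => rfl)
        (fun a ha => ((hPPempty a) ha).elim)
        (fun a b _ ha _ => ((hPPempty a) ha).elim)
        (by
          intro p hp hnone
          obtain ⟨C, rfl⟩ := hps_shape p hp
          exfalso
          have hx_t : touch G (xC C) (cC C, rC C) := hxtouch C
          have hxnR : xC C ∉ R := by
            intro hxR
            obtain ⟨q, hq, hq'⟩ := (hR_iff _).1 hxR
            obtain ⟨C', rfl⟩ := hps_shape q hq
            have htx' : touch G (xC C) (cC C', rC C') := by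
              rcases hq' with h | h
              · exact Or.inr (h ▸ (hadjrc C').symm)
              · exact Or.inl (h ▸ (hadjrc C'))
            have hCC : C' = C := ((htouch_mk _ _ htx').symm.trans (htouch_mk _ _ hx_t))
            subst hCC
            rcases hq' with h | h
            · exact hxc C' h
            · exact hxr C' h
          exact hnone _ ((hLmem _).2 hxnR) hx_t)
    -- transfer to phase 2 invariants
    have hnotR_of : ∀ a : V, (∀ q ∈ ps, a ≠ q.1 ∧ a ≠ q.2) → a ∉ R := by
      intro a ha haR
      obtain ⟨p, hp, hp'⟩ := (hR_iff a).1 haR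
      rcases hp' with h | h
      · exact (ha p hp).1 h
      · exact (ha p hp).2 h
    -- phase 2
    obtain ⟨f2, s1, s2, s3, s4⟩ := Stmt7Aux.phase2 (G := G) ps f1 hadjp
      (by
        intro p hp
        obtain ⟨C, rfl⟩ := hps_shape p hp
        have h1 := G.degree_le_maxDegree (cC C)
        have h2 := hdegr C
        simp only at h1 h2 ⊢
        omega)
      hS q1
      (by
        intro a b hab hnot
        by_cases haR : a ∈ R
        · by_cases hbR : b ∈ R
          · exfalso
            obtain ⟨pa, hpa, ha'⟩ := (hR_iff a).1 haR
            obtain ⟨pb, hpb, hb'⟩ := (hR_iff b).1 hbR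
            obtain ⟨Ca, rfl⟩ := hps_shape pa hpa
            obtain ⟨Cb, rfl⟩ := hps_shape pb hpb
            have hmka : G.connectedComponentMk a = Ca := by
              rcases ha' with rfl | rfl
              · exact hcC_mk Ca
              · exact hrC_mk Ca
            have hmkb : G.connectedComponentMk b = Cb := by
              rcases hb' with rfl | rfl
              · exact hcC_mk Cb
              · exact hrC_mk Cb
            have hCab : Ca = Cb := by
              rw [← hmka, ← hmkb]
              exact SimpleGraph.ConnectedComponent.sound hab.reachable
            subst hCab
            have hCmem : (cC Ca, rC Ca) ∈ ps := by
              refine hpair_mem _ ?_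
              rw [← hmka]
              exact hmkmem a
            rcases ha' with rfl | rfl <;> rcases hb' with rfl | rfl
            · exact hab.ne rfl
            · exact hnot _ hCmem (Or.inl ⟨rfl, rfl⟩)
            · exact hnot _ hCmem (Or.inr ⟨rfl, rfl⟩)
            · exact hab.ne rfl
          · exact q2 a b hab (Or.inr ((hPP0 b).2 hbR))
        · exact q2 a b hab (Or.inl ((hPP0 a).2 haR)))
      (by
        intro q hq
        refine q3 q.1 q.2 ?_ ?_
        · intro h
          exact ((hPP0 _).1 h) ((hR_iff _).2 ⟨q, hq, Or.inl rfl⟩)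
        · intro h
          exact ((hPP0 _).1 h) ((hR_iff _).2 ⟨q, hq, Or.inr rfl⟩))
      (fun a ha => q4 a ((hPP0 a).2 (hnotR_of a ha)))
      (fun a b hab ha hb => q5 a b hab ((hPP0 a).2 (hnotR_of a ha))
        ((hPP0 b).2 (hnotR_of b hb)))
      q6
    exact ⟨f2, s1, s2, fun u v h => s4 u v h, s3⟩
end
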